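/- arXiv:1607.03455 — 8 statements merged into one kernel-verified Lean document; each statement's English description precedes it below -/
import Mathlib

section
/- Couplings compose under monadic bind: let μ be a coupling of μ₁ : PMF A and μ₂ : PMF B, let M₁ : A → PMF A', M₂ : B → PMF B', and M : A × B → PMF (A' × B') be such that for every (a, b) in the support of μ, M(a, b) is a coupling of M₁(a) and M₂(b). Then μ.bind M is a coupling of μ₁.bind M₁ and μ₂.bind M₂. Moreover, if Ψ ⊆ A' × B' and the support of M(a, b) is contained in Ψ for every (a, b) in the support of μ, then the support of μ.bind M is contained in Ψ. -/
open scoped ENNReal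

/-- A coupling of `μ₁` and `μ₂` is a distribution on pairs whose marginals are `μ₁` and `μ₂`. -/
def IsCoupling {A B : Type*} (μ : PMF (A × B)) (μ₁ : PMF A) (μ₂ : PMF B) : Prop :=
  μ.map Prod.fst = μ₁ ∧ μ.map Prod.snd = μ₂

lemma pmf_bind_congr {α β : Type*} (p : PMF α) (f g : α → PMF β)
    (h : ∀ a ∈ p.support, f a = g a) : p.bind f = p.bind g := by
  ext b
  simp only [PMF.bind_apply]
  refine tsum_congr fun a => ?_
  by_cases ha : a ∈ p.support
  · rw [h a ha]
  · rw [(PMF.apply_eq_zero_iff p a).mpr ha]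
    simp

/-- Couplings compose under monadic bind, and supports are propagated. -/
theorem isCoupling_bind {A B A' B' : Type*}
    (μ₁ : PMF A) (μ₂ : PMF B) (μ : PMF (A × B))
    (M₁ : A → PMF A') (M₂ : B → PMF B') (M : A × B → PMF (A' × B'))
    (hc : IsCoupling μ μ₁ μ₂)
    (hM : ∀ p ∈ μ.support, IsCoupling (M p) (M₁ p.1) (M₂ p.2)) :
    IsCoupling (μ.bind M) (μ₁.bind M₁) (μ₂.bind M₂) ∧
      ∀ Ψ : Set (A' × B'),
        (∀ p ∈ μ.support, (M p).support ⊆ Ψ) → (μ.bind M).support ⊆ Ψ := by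
  obtain ⟨h1, h2⟩ := hc
  constructor
  · constructor
    · rw [PMF.map_bind, pmf_bind_congr μ _ (fun p => M₁ p.1)
        (fun p hp => (hM p hp).1), ← h1, PMF.bind_map]
      rfl
    · rw [PMF.map_bind, pmf_bind_congr μ _ (fun p => M₂ p.2)
        (fun p hp => (hM p hp).2), ← h2, PMF.bind_map]
      rfl
  · intro Ψ hΨ x hx
    rw [PMF.support_bind] at hx
    simp only [Set.mem_iUnion] at hx
    obtain ⟨p, hp, hxp⟩ := hx
    exact hΨ p hp hxp
end

section
/- Path coupling (Bubley–Dyer): suppose that for any two states s, s' with d(s, s') = 1 there exists a coupling μ of f(s) and f(s') such that E_{(r,r')∼μ}[d(r, r')] ≤ β. Then for any two states s, s' and any t : ℕ, there exists a coupling μ of f^{(t)}(s) and f^{(t)}(s') such that TV(f^{(t)}(s), f^{(t)}(s')) ≤ Pr_{(r,r')∼μ}[r ≠ r'] ≤ β^t · Δ. -/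
open scoped ENNReal

/-- Total variation distance between two PMFs. -/
noncomputable def TV {A : Type*} (μ₁ μ₂ : PMF A) : ℝ :=
  (1 / 2) * ∑' a, |(μ₁ a).toReal - (μ₂ a).toReal|

/-- Probability of an event under a PMF, as a real number. -/
noncomputable def PMF.pr {α : Type*} (μ : PMF α) (E : Set α) : ℝ :=
  (μ.toOuterMeasure E).toReal

/-- `iter f t s` is the `t`-fold monadic iterate of `f` starting from the point mass at `s`. -/
noncomputable def iter {Ω : Type*} (f : Ω → PMF Ω) : ℕ → Ω → PMF Ω
  | 0, s => PMF.pure s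
  | t + 1, s => (iter f t s).bind f

/-! Glue the couplings of adjacent states along a geodesic path: composing two couplings through
their common marginal (obtained by disintegrating one of them over that marginal) adds the expected
distances, by the triangle inequality, so any two states `s, s'` admit a one-step coupling with
expected distance at most `β * d s s'`. Extending a coupling of the `t`-step distributions by such
couplings contracts the expected distance by `β` per step, giving `β ^ t * d s s' ≤ β ^ t * Δ`. As
`d ≥ 1` off the diagonal, this bounds the probability of disagreement, which bounds the total
variation distance. -/

namespace PMF

variable {α β γ : Type*}

noncomputable def expect (μ : PMF α) (g : α → ℝ≥0∞) : ℝ≥0∞ :=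
  ∑' a, μ a * g a

theorem expect_pure (a : α) (g : α → ℝ≥0∞) : (pure a).expect g = g a := by
  simp [expect, pure_apply]

theorem expect_bind (μ : PMF α) (κ : α → PMF β) (g : β → ℝ≥0∞) :
    (μ.bind κ).expect g = μ.expect fun a => (κ a).expect g := by
  simp only [expect, bind_apply, ← ENNReal.tsum_mul_right, ← ENNReal.tsum_mul_left, mul_assoc]
  exact ENNReal.tsum_comm

theorem expect_map (μ : PMF α) (h : α → β) (g : β → ℝ≥0∞) :
    (μ.map h).expect g = μ.expect (g ∘ h) := by
  simp only [← bind_pure_comp, expect_bind, Function.comp_apply, expect_pure]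
  rfl

theorem expect_mono (μ : PMF α) {g h : α → ℝ≥0∞} (hgh : ∀ a, g a ≤ h a) :
    μ.expect g ≤ μ.expect h :=
  ENNReal.tsum_le_tsum fun a => mul_le_mul_right (hgh a) _

theorem expect_add (μ : PMF α) (g h : α → ℝ≥0∞) :
    μ.expect (fun a => g a + h a) = μ.expect g + μ.expect h := by
  simp only [expect, mul_add, ENNReal.tsum_add]

theorem expect_const_mul (μ : PMF α) (c : ℝ≥0∞) (g : α → ℝ≥0∞) :
    μ.expect (fun a => c * g a) = c * μ.expect g := by
  simp only [expect, mul_left_comm _ c, ENNReal.tsum_mul_left]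

theorem toOuterMeasure_le_expect (μ : PMF α) {s : Set α} {g : α → ℝ≥0∞}
    (hg : ∀ a ∈ s, 1 ≤ g a) : μ.toOuterMeasure s ≤ μ.expect g := by
  rw [toOuterMeasure_apply]
  refine ENNReal.tsum_le_tsum fun a => ?_
  by_cases ha : a ∈ s
  · simpa [Set.indicator_of_mem ha] using mul_le_mul_right (hg a ha) (μ a)
  · simp [Set.indicator_of_notMem ha]

theorem map_fst_apply (μ : PMF (α × β)) (a : α) : μ.map Prod.fst a = ∑' b, μ (a, b) := by
  rw [map_apply, ENNReal.tsum_prod', tsum_eq_single a fun a' ha' => by simp [Ne.symm ha']]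
  simp

theorem map_snd_apply (μ : PMF (α × β)) (b : β) : μ.map Prod.snd b = ∑' a, μ (a, b) := by
  rw [map_apply, ENNReal.tsum_prod', ENNReal.tsum_comm,
    tsum_eq_single b fun b' hb' => by simp [Ne.symm hb']]
  simp

theorem exists_bind_map_prodMk_eq (μ : PMF (α × β)) :
    ∃ κ : α → PMF β, (μ.map Prod.fst).bind (fun a => (κ a).map (Prod.mk a)) = μ := by
  classical
  set ν := μ.map Prod.fst
  have hν : ∀ a, ∑' b, μ (a, b) = ν a := fun a => (map_fst_apply μ a).symm
  let κ : α → PMF β := fun a =>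
    -- any distribution would do on the null fibres
    if h : ν a = 0 then μ.map Prod.snd
    else normalize (fun b => μ (a, b)) (by rwa [hν]) (by rw [hν]; exact apply_ne_top _ _)
  refine ⟨κ, PMF.ext fun ⟨a, b⟩ => ?_⟩
  have hmap : ∀ a', ((κ a').map (Prod.mk a')) (a, b) = if a' = a then κ a b else 0 := by
    intro a'
    rw [map_apply]
    by_cases h : a' = a
    · subst h; simp
    · simp [h, Ne.symm h]
  rw [bind_apply, tsum_eq_single a fun a' ha' => by rw [hmap, if_neg ha', mul_zero], hmap,
    if_pos rfl]
  by_cases h : ν a = 0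
  · have : μ (a, b) = 0 := le_antisymm (h ▸ hν a ▸ ENNReal.le_tsum b) zero_le
    simp [h, this]
  · simp only [κ, dif_neg h, normalize_apply, hν]
    rw [mul_comm, mul_assoc, ENNReal.inv_mul_cancel h (apply_ne_top _ _), mul_one]

theorem exists_glue {μ₁ : PMF (α × β)} {μ₂ : PMF (β × γ)}
    (h : μ₁.map Prod.snd = μ₂.map Prod.fst) :
    ∃ τ : PMF (α × β × γ), τ.map (fun x => (x.1, x.2.1)) = μ₁ ∧ τ.map Prod.snd = μ₂ := by
  obtain ⟨κ, hκ⟩ := exists_bind_map_prodMk_eq μ₂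
  refine ⟨μ₁.bind fun p => (κ p.2).map fun c => (p.1, p.2, c), ?_, ?_⟩
  · rw [map_bind]
    simp only [map_comp, Function.comp_def]
    exact (congrArg μ₁.bind (funext fun p => map_const (κ p.2) p)).trans (bind_pure μ₁)
  · rw [map_bind, ← hκ, ← h, bind_map]
    simp [map_comp, Function.comp_def]

end PMF

theorem ENNReal.abs_toReal_sub_toReal_le {x y u v : ℝ≥0∞} (hx : x ≠ ⊤) (hy : y ≠ ⊤)
    (hu : u ≠ ⊤) (hv : v ≠ ⊤) (hxy : x ≤ y + u) (hyx : y ≤ x + v) :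
    |x.toReal - y.toReal| ≤ u.toReal + v.toReal := by
  have h₁ := ENNReal.toReal_mono (ENNReal.add_ne_top.2 ⟨hy, hu⟩) hxy
  have h₂ := ENNReal.toReal_mono (ENNReal.add_ne_top.2 ⟨hx, hv⟩) hyx
  rw [ENNReal.toReal_add hy hu] at h₁
  rw [ENNReal.toReal_add hx hv] at h₂
  rw [abs_sub_le_iff]
  constructor <;> linarith [ENNReal.toReal_nonneg (a := u), ENNReal.toReal_nonneg (a := v)]

namespace IsCoupling

variable {α β γ δ : Type*}

theorem pure_prod (a : α) (b : β) : IsCoupling (PMF.pure (a, b)) (PMF.pure a) (PMF.pure b) :=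
  ⟨PMF.pure_map _ _, PMF.pure_map _ _⟩

theorem map_diag (ν : PMF α) : IsCoupling (ν.map fun a => (a, a)) ν ν :=
  ⟨(PMF.map_comp _ _ _).trans (PMF.map_id ν), (PMF.map_comp _ _ _).trans (PMF.map_id ν)⟩

theorem bind {μ : PMF (α × β)} {ν₁ : PMF α} {ν₂ : PMF β} (h : IsCoupling μ ν₁ ν₂)
    {f : α → PMF γ} {g : β → PMF δ} {κ : α × β → PMF (γ × δ)}
    (hκ : ∀ p, IsCoupling (κ p) (f p.1) (g p.2)) :
    IsCoupling (μ.bind κ) (ν₁.bind f) (ν₂.bind g) := by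
  constructor
  · rw [PMF.map_bind, ← h.1, PMF.bind_map]
    exact congrArg μ.bind (funext fun p => (hκ p).1)
  · rw [PMF.map_bind, ← h.2, PMF.bind_map]
    exact congrArg μ.bind (funext fun p => (hκ p).2)

theorem exists_expect_le_add {d : α → α → ℝ≥0∞} (hd : ∀ x y z, d x z ≤ d x y + d y z)
    {ν₁ ν₂ ν₃ : PMF α} {μ₁ μ₂ : PMF (α × α)} (h₁ : IsCoupling μ₁ ν₁ ν₂)
    (h₂ : IsCoupling μ₂ ν₂ ν₃) :
    ∃ μ : PMF (α × α), IsCoupling μ ν₁ ν₃ ∧ μ.expect (fun p => d p.1 p.2) ≤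
      μ₁.expect (fun p => d p.1 p.2) + μ₂.expect (fun p => d p.1 p.2) := by
  obtain ⟨τ, hτ₁, hτ₂⟩ := PMF.exists_glue (h₁.2.trans h₂.1.symm)
  refine ⟨τ.map fun x => (x.1, x.2.2), ⟨?_, ?_⟩, ?_⟩
  · rw [← h₁.1, ← hτ₁, PMF.map_comp, PMF.map_comp]
    rfl
  · rw [← h₂.2, ← hτ₂, PMF.map_comp, PMF.map_comp]
    rfl
  · rw [← hτ₁, ← hτ₂, PMF.expect_map, PMF.expect_map, PMF.expect_map, ← PMF.expect_add]
    exact τ.expect_mono fun x => hd _ _ _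

theorem fst_apply_le {μ : PMF (α × α)} {ν₁ ν₂ : PMF α} (h : IsCoupling μ ν₁ ν₂) (a : α) :
    ν₁ a ≤ ν₂ a + ∑' b, {p : α × α | p.1 ≠ p.2}.indicator μ (a, b) := by
  classical
  calc ν₁ a = ∑' b, μ (a, b) := by rw [← h.1, PMF.map_fst_apply]
    _ = ∑' b, ((if b = a then μ (a, a) else 0) + {p : α × α | p.1 ≠ p.2}.indicator μ (a, b)) := by
      congr 1; ext b; by_cases hb : b = a <;> simp [hb, Ne.symm]
    _ ≤ _ := by
      rw [ENNReal.tsum_add, tsum_ite_eq, ← h.2, PMF.map_snd_apply]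
      gcongr
      exact ENNReal.le_tsum a

theorem snd_apply_le {μ : PMF (α × α)} {ν₁ ν₂ : PMF α} (h : IsCoupling μ ν₁ ν₂) (a : α) :
    ν₂ a ≤ ν₁ a + ∑' b, {p : α × α | p.1 ≠ p.2}.indicator μ (b, a) := by
  classical
  calc ν₂ a = ∑' b, μ (b, a) := by rw [← h.2, PMF.map_snd_apply]
    _ = ∑' b, ((if b = a then μ (a, a) else 0) + {p : α × α | p.1 ≠ p.2}.indicator μ (b, a)) := by
      congr 1; ext b; by_cases hb : b = a <;> simp [hb]
    _ ≤ _ := by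
      rw [ENNReal.tsum_add, tsum_ite_eq, ← h.1, PMF.map_fst_apply]
      gcongr
      exact ENNReal.le_tsum a

theorem TV_le_pr_ne {μ : PMF (α × α)} {ν₁ ν₂ : PMF α} (h : IsCoupling μ ν₁ ν₂) :
    TV ν₁ ν₂ ≤ μ.pr {p | p.1 ≠ p.2} := by
  set D : Set (α × α) := {p | p.1 ≠ p.2}
  set m₁ : α → ℝ≥0∞ := fun a => ∑' b, D.indicator μ (a, b)
  set m₂ : α → ℝ≥0∞ := fun a => ∑' b, D.indicator μ (b, a)
  have hm₁ : ∑' a, m₁ a = μ.toOuterMeasure D := by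
    rw [PMF.toOuterMeasure_apply, ENNReal.tsum_prod']
  have hm₂ : ∑' a, m₂ a = μ.toOuterMeasure D := by
    rw [← hm₁, ENNReal.tsum_comm]
  have hD : μ.toOuterMeasure D ≠ ⊤ := by
    rw [PMF.toOuterMeasure_apply]
    exact μ.tsum_coe_indicator_ne_top D
  have fin₁ := ENNReal.summable_toReal (hm₁ ▸ hD)
  have fin₂ := ENNReal.summable_toReal (hm₂ ▸ hD)
  have hpt : ∀ a, |(ν₁ a).toReal - (ν₂ a).toReal| ≤ (m₁ a).toReal + (m₂ a).toReal := fun a =>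
    ENNReal.abs_toReal_sub_toReal_le (ν₁.apply_ne_top a) (ν₂.apply_ne_top a)
      (ENNReal.ne_top_of_tsum_ne_top (hm₁ ▸ hD) a) (ENNReal.ne_top_of_tsum_ne_top (hm₂ ▸ hD) a)
      (h.fst_apply_le a) (h.snd_apply_le a)
  calc TV ν₁ ν₂ ≤ 1 / 2 * ∑' a, ((m₁ a).toReal + (m₂ a).toReal) := by
        refine mul_le_mul_of_nonneg_left ?_ (by norm_num)
        exact Summable.tsum_le_tsum hpt
          (Summable.of_nonneg_of_le (fun _ => abs_nonneg _) hpt (fin₁.add fin₂)) (fin₁.add fin₂)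
    _ = μ.pr D := by
      rw [fin₁.tsum_add fin₂, ← ENNReal.tsum_toReal_eq, ← ENNReal.tsum_toReal_eq, hm₁, hm₂,
        PMF.pr]
      · ring
      · exact ENNReal.ne_top_of_tsum_ne_top (hm₂ ▸ hD)
      · exact ENNReal.ne_top_of_tsum_ne_top (hm₁ ▸ hD)

end IsCoupling

section PathCoupling

variable {Ω : Type*}

theorem exists_isCoupling_expect_le_mul_dist (d : Ω → Ω → ℕ)
    (hd0 : ∀ s s', d s s' = 0 ↔ s = s')
    (hdtri : ∀ s s' s'', d s s'' ≤ d s s' + d s' s'')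
    (hpath : ∀ s s', 1 < d s s' →
      ∃ s'', s'' ≠ s ∧ s'' ≠ s' ∧ d s s' = d s s'' + d s'' s')
    (f : Ω → PMF Ω) (B : ℝ≥0∞)
    (hcouple : ∀ s s', d s s' = 1 →
      ∃ μ : PMF (Ω × Ω), IsCoupling μ (f s) (f s') ∧ μ.expect (fun p => d p.1 p.2) ≤ B)
    (s s' : Ω) :
    ∃ μ : PMF (Ω × Ω), IsCoupling μ (f s) (f s') ∧
      μ.expect (fun p => d p.1 p.2) ≤ B * d s s' := by
  induction hn : d s s' using Nat.strong_induction_on generalizing s s' with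
  | _ n ih =>
  rcases Nat.lt_trichotomy n 1 with hn0 | rfl | hn1
  · obtain rfl : s = s' := (hd0 s s').1 (by omega)
    refine ⟨(f s).map fun r => (r, r), IsCoupling.map_diag _, ?_⟩
    rw [PMF.expect_map]
    simp [(hd0 _ _).2, PMF.expect]
  · simpa using hcouple s s' hn
  · obtain ⟨s'', hs, hs', hsplit⟩ := hpath s s' (hn ▸ hn1)
    have h₁ : d s s'' ≠ 0 := fun h => hs ((hd0 _ _).1 h).symm
    have h₂ : d s'' s' ≠ 0 := fun h => hs' ((hd0 _ _).1 h)
    obtain ⟨μ₁, hμ₁, hE₁⟩ := ih _ (by omega) s s'' rfl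
    obtain ⟨μ₂, hμ₂, hE₂⟩ := ih _ (by omega) s'' s' rfl
    obtain ⟨μ, hμ, hE⟩ := hμ₁.exists_expect_le_add
      (d := fun x y => (d x y : ℝ≥0∞)) (fun x y z => by exact_mod_cast hdtri x y z) hμ₂
    refine ⟨μ, hμ, hE.trans ?_⟩
    calc _ ≤ B * d s s'' + B * d s'' s' := add_le_add hE₁ hE₂
      _ = B * n := by rw [← mul_add, ← hn, hsplit, Nat.cast_add]

theorem exists_isCoupling_iter_expect_le (d : Ω → Ω → ℝ≥0∞) (f : Ω → PMF Ω) (B : ℝ≥0∞)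
    (hstep : ∀ s s', ∃ μ : PMF (Ω × Ω), IsCoupling μ (f s) (f s') ∧
      μ.expect (fun p => d p.1 p.2) ≤ B * d s s')
    (s s' : Ω) (t : ℕ) :
    ∃ μ : PMF (Ω × Ω), IsCoupling μ (iter f t s) (iter f t s') ∧
      μ.expect (fun p => d p.1 p.2) ≤ B ^ t * d s s' := by
  induction t with
  | zero => exact ⟨PMF.pure (s, s'), IsCoupling.pure_prod s s', by simp [PMF.expect_pure]⟩
  | succ t ih =>
    obtain ⟨μ, hμ, hE⟩ := ih
    choose κ hκ hEκ using fun p : Ω × Ω => hstep p.1 p.2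
    refine ⟨μ.bind κ, hμ.bind hκ, ?_⟩
    calc (μ.bind κ).expect (fun p => d p.1 p.2)
        = μ.expect fun p => (κ p).expect fun q => d q.1 q.2 := PMF.expect_bind _ _ _
      _ ≤ μ.expect fun p => B * d p.1 p.2 := μ.expect_mono hEκ
      _ = B * μ.expect fun p => d p.1 p.2 := PMF.expect_const_mul _ _ _
      _ ≤ B * (B ^ t * d s s') := by gcongr
      _ = B ^ (t + 1) * d s s' := by ring

end PathCoupling

theorem path_coupling_general {Ω : Type*}
    (d : Ω → Ω → ℕ)
    (hd0 : ∀ s s', d s s' = 0 ↔ s = s')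
    (hdtri : ∀ s s' s'', d s s'' ≤ d s s' + d s' s'')
    (hpath : ∀ s s', 1 < d s s' →
      ∃ s'', s'' ≠ s ∧ s'' ≠ s' ∧ d s s' = d s s'' + d s'' s')
    (Δ : ℕ) (hΔ : ∀ s s', d s s' ≤ Δ)
    (f : Ω → PMF Ω) (β : ℝ) (hβ : 0 ≤ β)
    (hcouple : ∀ s s', d s s' = 1 →
      ∃ μ : PMF (Ω × Ω), IsCoupling μ (f s) (f s') ∧
        ∑' p : Ω × Ω, μ p * (d p.1 p.2 : ℝ≥0∞) ≤ ENNReal.ofReal β) :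
    ∀ (s s' : Ω) (t : ℕ),
      ∃ μ : PMF (Ω × Ω), IsCoupling μ (iter f t s) (iter f t s') ∧
        TV (iter f t s) (iter f t s') ≤ μ.pr {p | p.1 ≠ p.2} ∧
        μ.pr {p | p.1 ≠ p.2} ≤ β ^ t * Δ := by
  intro s s' t
  obtain ⟨μ, hμ, hE⟩ := exists_isCoupling_iter_expect_le _ f _
    (exists_isCoupling_expect_le_mul_dist d hd0 hdtri hpath f _ hcouple) s s' t
  refine ⟨μ, hμ, hμ.TV_le_pr_ne, ENNReal.toReal_le_of_le_ofReal (by positivity) ?_⟩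
  calc μ.toOuterMeasure {p | p.1 ≠ p.2}
      ≤ μ.expect fun p => d p.1 p.2 :=
        μ.toOuterMeasure_le_expect fun p hp => Nat.one_le_cast.2 <|
          Nat.one_le_iff_ne_zero.2 fun h => hp ((hd0 _ _).1 h)
    _ ≤ ENNReal.ofReal β ^ t * Δ := hE.trans <| by gcongr; exact_mod_cast hΔ s s'
    _ = ENNReal.ofReal (β ^ t * Δ) := by
      rw [ENNReal.ofReal_mul (by positivity), ENNReal.ofReal_pow hβ, ENNReal.ofReal_natCast]

/-- Path coupling (Bubley–Dyer): if adjacent states can be coupled with expected distance at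
most `β`, then the `t`-step distributions from any two states can be coupled so that the
probability of disagreement, which bounds the total variation distance, is at most `β ^ t * Δ`. -/
theorem path_coupling {Ω : Type*} [Fintype Ω] [Nonempty Ω]
    (d : Ω → Ω → ℕ)
    (hd0 : ∀ s s', d s s' = 0 ↔ s = s')
    (hdsymm : ∀ s s', d s s' = d s' s)
    (hdtri : ∀ s s' s'', d s s'' ≤ d s s' + d s' s'')
    (hpath : ∀ s s', 1 < d s s' →
      ∃ s'', s'' ≠ s ∧ s'' ≠ s' ∧ d s s' = d s s'' + d s'' s')
    (Δ : ℕ) (hΔ : ∀ s s', d s s' ≤ Δ)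
    (f : Ω → PMF Ω) (β : ℝ) (hβ : 0 ≤ β)
    (hcouple : ∀ s s', d s s' = 1 →
      ∃ μ : PMF (Ω × Ω), IsCoupling μ (f s) (f s') ∧
        ∑' p : Ω × Ω, μ p * (d p.1 p.2 : ℝ≥0∞) ≤ ENNReal.ofReal β) :
    ∀ (s s' : Ω) (t : ℕ),
      ∃ μ : PMF (Ω × Ω), IsCoupling μ (iter f t s) (iter f t s') ∧
        TV (iter f t s) (iter f t s') ≤ μ.pr {p | p.1 ≠ p.2} ∧
        μ.pr {p | p.1 ≠ p.2} ≤ β ^ t * Δ :=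
  path_coupling_general d hd0 hdtri hpath Δ hΔ f β hβ hcouple
end

section
/- Iteration step of path coupling: suppose that for any two states s, s' there exists a coupling μ of f(s) and f(s') such that E_{(r,r')∼μ}[d(r, r')] ≤ β · d(s, s'), where β ≥ 0. Then for any s, s' and any t : ℕ there exists a coupling μ of f^{(t)}(s) and f^{(t)}(s') such that E_{(r,r')∼μ}[d(r, r')] ≤ β^t · d(s, s'). -/
open scoped ENNReal

/-- Iteration step of path coupling: if any two states can be coupled with expected distance
contracting by a factor `β`, then the `t`-step distributions can be coupled with expected
distance at most `β ^ t * d s s'`. -/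
theorem path_coupling_iterate {Ω : Type*} [Fintype Ω] [Nonempty Ω]
    (d : Ω → Ω → ℕ)
    (hd0 : ∀ s s', d s s' = 0 ↔ s = s')
    (hdsymm : ∀ s s', d s s' = d s' s)
    (hdtri : ∀ s s' s'', d s s'' ≤ d s s' + d s' s'')
    (f : Ω → PMF Ω) (β : ℝ) (hβ : 0 ≤ β)
    (hcouple : ∀ s s' : Ω,
      ∃ μ : PMF (Ω × Ω), IsCoupling μ (f s) (f s') ∧
        ∑' p : Ω × Ω, μ p * (d p.1 p.2 : ℝ≥0∞) ≤ ENNReal.ofReal (β * d s s')) :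
    ∀ (s s' : Ω) (t : ℕ),
      ∃ μ : PMF (Ω × Ω), IsCoupling μ (iter f t s) (iter f t s') ∧
        ∑' p : Ω × Ω, μ p * (d p.1 p.2 : ℝ≥0∞) ≤ ENNReal.ofReal (β ^ t * d s s') := by

  intro s s' t
  induction t with
  | zero =>
    refine ⟨PMF.pure (s, s'), ⟨?_, ?_⟩, ?_⟩
    · simp [iter, PMF.pure_map]
    · simp [iter, PMF.pure_map]
    · have : ∑' p : Ω × Ω, (PMF.pure (s, s')) p * (d p.1 p.2 : ℝ≥0∞)
          = (d s s' : ℝ≥0∞) := by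
        rw [tsum_eq_single (s, s')]
        · simp [PMF.pure_apply]
        · intro b hb; simp [PMF.pure_apply, hb]
      rw [this, pow_zero, one_mul, ENNReal.ofReal_natCast]
  | succ t ih =>
    obtain ⟨ν, ⟨hν1, hν2⟩, hνE⟩ := ih
    set g : Ω × Ω → PMF (Ω × Ω) := fun q => (hcouple q.1 q.2).choose with hg
    have hgspec : ∀ q : Ω × Ω, IsCoupling (g q) (f q.1) (f q.2) ∧
        ∑' p : Ω × Ω, (g q) p * (d p.1 p.2 : ℝ≥0∞) ≤ ENNReal.ofReal (β * d q.1 q.2) :=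
      fun q => (hcouple q.1 q.2).choose_spec
    refine ⟨ν.bind g, ⟨?_, ?_⟩, ?_⟩
    · rw [show iter f (t+1) s = (iter f t s).bind f from rfl, ← hν1,
        PMF.map_bind, PMF.bind_map]
      exact congrArg _ (funext fun q => (hgspec q).1.1)
    · rw [show iter f (t+1) s' = (iter f t s').bind f from rfl, ← hν2,
        PMF.map_bind, PMF.bind_map]
      exact congrArg _ (funext fun q => (hgspec q).1.2)
    · have hswap : ∑' p : Ω × Ω, (ν.bind g) p * (d p.1 p.2 : ℝ≥0∞)
          = ∑' q : Ω × Ω, ν q * ∑' p : Ω × Ω, (g q) p * (d p.1 p.2 : ℝ≥0∞) := by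
        simp only [PMF.bind_apply]
        calc ∑' p : Ω × Ω, (∑' q : Ω × Ω, ν q * (g q) p) * (d p.1 p.2 : ℝ≥0∞)
            = ∑' p : Ω × Ω, ∑' q : Ω × Ω, ν q * (g q) p * (d p.1 p.2 : ℝ≥0∞) := by
              congr 1; funext p; rw [ENNReal.tsum_mul_right]
          _ = ∑' q : Ω × Ω, ∑' p : Ω × Ω, ν q * (g q) p * (d p.1 p.2 : ℝ≥0∞) :=
              ENNReal.tsum_comm
          _ = ∑' q : Ω × Ω, ν q * ∑' p : Ω × Ω, (g q) p * (d p.1 p.2 : ℝ≥0∞) := by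
              congr 1; funext q; simp_rw [mul_assoc]; rw [ENNReal.tsum_mul_left]
      rw [hswap]
      calc ∑' q : Ω × Ω, ν q * ∑' p : Ω × Ω, (g q) p * (d p.1 p.2 : ℝ≥0∞)
          ≤ ∑' q : Ω × Ω, ν q * ENNReal.ofReal (β * d q.1 q.2) :=
            ENNReal.tsum_le_tsum fun q => mul_le_mul_right (hgspec q).2 _
        _ = ∑' q : Ω × Ω, ν q * (ENNReal.ofReal β * (d q.1 q.2 : ℝ≥0∞)) := by
            simp_rw [ENNReal.ofReal_mul hβ, ENNReal.ofReal_natCast]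
        _ = ENNReal.ofReal β * ∑' q : Ω × Ω, ν q * (d q.1 q.2 : ℝ≥0∞) := by
            simp_rw [mul_comm (ENNReal.ofReal β), ← mul_assoc]
            rw [ENNReal.tsum_mul_right]
        _ ≤ ENNReal.ofReal β * ENNReal.ofReal (β ^ t * d s s') :=
            mul_le_mul_right hνE _
        _ = ENNReal.ofReal (β ^ (t + 1) * d s s') := by
            rw [← ENNReal.ofReal_mul hβ]; ring_nf
end

section
/- Hitting-time bound for the simple symmetric random walk: let t ≥ 1, let μ be the uniform distribution on functions ε : Fin t → Bool, and for j ≤ t define the partial sum S_j(ε) = ∑_{i < j} (if ε(i) then 1 else -1) ∈ ℤ. Then for every integer k ≥ 1, the probability that the walk started at 0 never reaches k within t steps satisfies Pr_{ε∼μ}[∀ j ≤ t, S_j(ε) ≠ k] ≤ (k · e · √2) / (π · √t). -/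
open scoped ENNReal

/-- The partial sum after `j` steps of the ±1 walk with step signs `ε`. -/
def partialSum (t : ℕ) (j : ℕ) (ε : Fin t → Bool) : ℤ :=
  ∑ i ∈ Finset.univ.filter (fun i : Fin t => (i : ℕ) < j), (if ε i then (1 : ℤ) else -1)

/-
Paths that never reach `k` end below `k`. Reflecting a path after its first visit to `k` is an
involution on the paths that visit `k`, and it maps the paths ending above `k` into the paths that
visit `k` and end below it; together with the symmetry `ε ↦ !ε` this bounds the number of paths
that never reach `k` by the number of paths ending in `[-k, k)`. At most `k` endpoints of the right
parity lie there, each reached by at most `C(t, ⌊t/2⌋)` paths, and Wallis' product gives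
`C(t, ⌊t/2⌋) ≤ 2^t √(2 / (π t))`; finally `√π ≤ e`.
-/

open Finset Real
open scoped Nat

theorem Nat.pi_mul_mul_centralBinom_sq_le (n : ℕ) :
    π * n * (n.centralBinom : ℝ) ^ 2 ≤ 16 ^ n := by
  have hfact : ((2 * n)! : ℝ) = n.centralBinom * n ! * n ! := by
    rw [Nat.centralBinom, ← Nat.choose_mul_factorial_mul_factorial (by omega : n ≤ 2 * n),
      show 2 * n - n = n by omega]
    push_cast; ring
  -- Wallis: `(2n+1)/(2n+2) · π/2 ≤ W n`, and `W n = 16^n / (C(2n, n)^2 (2n+1))`.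
  have hW := Wallis.le_W n
  rw [Wallis.W_eq_factorial_ratio, hfact, pow_mul] at hW
  have hc : (0 : ℝ) < n.centralBinom := by exact_mod_cast n.centralBinom_pos
  have hwallis : π * (2 * n + 1) ^ 2 * (n.centralBinom : ℝ) ^ 2 ≤ 4 * (n + 1) * 16 ^ n := by
    field_simp at hW
    norm_num at hW
    linarith
  nlinarith [pi_pos, sq_nonneg (n.centralBinom : ℝ)]

theorem Nat.pi_mul_mul_choose_half_sq_le (t : ℕ) :
    π * t * (t.choose (t / 2) : ℝ) ^ 2 ≤ 2 * 4 ^ t := by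
  obtain ⟨n, rfl | rfl⟩ := t.even_or_odd'
  · have h := Nat.pi_mul_mul_centralBinom_sq_le n
    rw [Nat.centralBinom] at h
    rw [show 2 * n / 2 = n by omega, pow_mul]
    push_cast
    norm_num
    linarith
  · have hpascal : (n + 1).centralBinom = 2 * (2 * n + 1).choose n := by
      rw [Nat.centralBinom, show 2 * (n + 1) = 2 * n + 1 + 1 by ring, Nat.choose_succ_succ,
        Nat.choose_symm_half]
      ring
    have h := Nat.pi_mul_mul_centralBinom_sq_le (n + 1)
    rw [hpascal] at h
    rw [show (2 * n + 1) / 2 = n by omega, pow_succ (4 : ℝ), pow_mul]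
    push_cast at h ⊢
    rw [pow_succ 16] at h
    norm_num at h ⊢
    nlinarith [mul_nonneg pi_pos.le (sq_nonneg ((2 * n + 1).choose n : ℝ))]

lemma Nat.choose_half_div_two_pow_le {t : ℕ} (ht : 0 < t) :
    (t.choose (t / 2) : ℝ) / 2 ^ t ≤ √(2 / (π * t)) := by
  rw [Real.le_sqrt (by positivity) (by positivity), div_pow, ← pow_mul, pow_mul',
    div_le_div_iff₀ (by positivity) (by positivity)]
  norm_num
  nlinarith [Nat.pi_mul_mul_choose_half_sq_le t]

lemma Real.sqrt_two_div_pi_mul_le (x : ℝ) : √(2 / (π * x)) ≤ exp 1 * √2 / (π * √x) := by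
  rcases le_or_gt x 0 with hx | hx
  · rw [sqrt_eq_zero_of_nonpos hx, sqrt_eq_zero_of_nonpos
      (div_nonpos_of_nonneg_of_nonpos zero_le_two (mul_nonpos_of_nonneg_of_nonpos pi_pos.le hx))]
    simp
  have hsqrt_pi : √π ≤ exp 1 := calc
    √π ≤ √(2 ^ 2) := sqrt_le_sqrt (by linarith [pi_lt_four])
    _ = 2 := sqrt_sq zero_le_two
    _ ≤ exp 1 := by linarith [add_one_le_exp 1]
  rw [sqrt_div' _ (by positivity), sqrt_mul pi_pos.le,
    div_le_div_iff₀ (by positivity) (by positivity)]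
  calc √2 * (π * √x) = √2 * √π * √x * √π := by
        linear_combination (-(√2 * √x)) * mul_self_sqrt pi_pos.le
    _ ≤ √2 * √π * √x * exp 1 := by gcongr
    _ = exp 1 * √2 * (√π * √x) := by ring

variable {t : ℕ}

@[simp]
lemma partialSum_zero (ε : Fin t → Bool) : partialSum t 0 ε = 0 := by
  simp [partialSum]

lemma partialSum_succ {j : ℕ} (hj : j < t) (ε : Fin t → Bool) :
    partialSum t (j + 1) ε = partialSum t j ε + if ε ⟨j, hj⟩ then 1 else -1 := by
  have : univ.filter (fun i : Fin t => (i : ℕ) < j + 1) =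
      insert ⟨j, hj⟩ (univ.filter fun i : Fin t => (i : ℕ) < j) := by
    ext i
    simp [Fin.ext_iff]
    omega
  rw [partialSum, this, sum_insert (by simp), add_comm]
  rfl

lemma partialSum_congr {j : ℕ} {ε ε' : Fin t → Bool}
    (h : ∀ i : Fin t, (i : ℕ) < j → ε i = ε' i) :
    partialSum t j ε = partialSum t j ε' :=
  sum_congr rfl fun i hi => by rw [h i (mem_filter.mp hi).2]

lemma partialSum_not (j : ℕ) (ε : Fin t → Bool) :
    partialSum t j (fun i => !ε i) = -partialSum t j ε := by
  rw [partialSum, partialSum, ← sum_neg_distrib]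
  refine sum_congr rfl fun i _ => ?_
  cases ε i <;> rfl

lemma partialSum_self (ε : Fin t → Bool) :
    partialSum t t ε = 2 * #{i | ε i} - t := by
  have : univ.filter (fun i : Fin t => (i : ℕ) < t) = univ := filter_true_of_mem fun i _ => i.isLt
  have ht : (t : ℤ) = ∑ _i : Fin t, 1 := by simp
  rw [partialSum, this, card_filter, Nat.cast_sum, mul_sum, ht, ← sum_sub_distrib]
  refine sum_congr rfl fun i _ => ?_
  cases ε i <;> rfl

lemma partialSum_succ_le {j : ℕ} (hj : j < t) (ε : Fin t → Bool) :
    partialSum t (j + 1) ε ≤ partialSum t j ε + 1 := by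
  rw [partialSum_succ hj]
  split <;> omega

variable {k : ℤ}

def Hits (t : ℕ) (k : ℤ) (ε : Fin t → Bool) : Prop := ∃ j ≤ t, partialSum t j ε = k

lemma partialSum_lt_of_not_hits (hk : 0 < k) {ε : Fin t → Bool} (h : ¬Hits t k ε) :
    ∀ j ≤ t, partialSum t j ε < k := by
  intro j hj
  induction j with
  | zero => simpa using hk
  | succ j ih =>
    have := partialSum_succ_le (j := j) (by omega) ε
    have := ih (by omega)
    have : partialSum t (j + 1) ε ≠ k := fun h' => h ⟨j + 1, hj, h'⟩
    omega

lemma hits_of_le_partialSum (hk : 0 < k) {ε : Fin t → Bool} (h : k ≤ partialSum t t ε) :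
    Hits t k ε := by
  by_contra hn
  have := partialSum_lt_of_not_hits hk hn t le_rfl
  omega

def reflectFrom (m : ℕ) (ε : Fin t → Bool) : Fin t → Bool :=
  fun i => if (i : ℕ) < m then ε i else !ε i

lemma reflectFrom_involutive (m : ℕ) : Function.Involutive (reflectFrom (t := t) m) := by
  intro ε
  funext i
  by_cases hi : (i : ℕ) < m <;> simp [reflectFrom, hi]

lemma partialSum_reflectFrom_of_le {m j : ℕ} (hj : j ≤ m) (ε : Fin t → Bool) :
    partialSum t j (reflectFrom m ε) = partialSum t j ε :=
  partialSum_congr fun i hi => if_pos (by omega)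

lemma partialSum_reflectFrom_of_ge {m j : ℕ} (hm : m ≤ j) (hj : j ≤ t) (ε : Fin t → Bool) :
    partialSum t j (reflectFrom m ε) = 2 * partialSum t m ε - partialSum t j ε := by
  induction j, hm using Nat.le_induction with
  | base => rw [partialSum_reflectFrom_of_le le_rfl]; ring
  | succ j hmj ih =>
    have hjm : ¬j < m := by omega
    rw [partialSum_succ (by omega), partialSum_succ (by omega), ih (by omega)]
    simp only [reflectFrom, hjm, if_false]
    cases ε ⟨j, _⟩ <;> simp <;> ring

instance : DecidablePred (Hits t k) := fun _ => by unfold Hits; infer_instance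

def firstHit (t : ℕ) (k : ℤ) (ε : Fin t → Bool) : ℕ :=
  if h : Hits t k ε then Nat.find h else 0

section firstHit

variable {ε : Fin t → Bool} (h : Hits t k ε)
include h

lemma firstHit_le : firstHit t k ε ≤ t := by
  rw [firstHit, dif_pos h]
  exact (Nat.find_spec h).1

lemma partialSum_firstHit : partialSum t (firstHit t k ε) ε = k := by
  rw [firstHit, dif_pos h]
  exact (Nat.find_spec h).2

lemma firstHit_le_of_partialSum_eq {j : ℕ} (hj : j ≤ t) (hjk : partialSum t j ε = k) :
    firstHit t k ε ≤ j := by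
  rw [firstHit, dif_pos h]
  exact Nat.find_min' h ⟨hj, hjk⟩

end firstHit

def reflect (t : ℕ) (k : ℤ) (ε : Fin t → Bool) : Fin t → Bool :=
  reflectFrom (firstHit t k ε) ε

section reflect

variable {ε : Fin t → Bool} (h : Hits t k ε)
include h

lemma partialSum_reflect_firstHit : partialSum t (firstHit t k ε) (reflect t k ε) = k := by
  rw [reflect, partialSum_reflectFrom_of_le le_rfl, partialSum_firstHit h]

lemma hits_reflect : Hits t k (reflect t k ε) :=
  ⟨_, firstHit_le h, partialSum_reflect_firstHit h⟩

lemma firstHit_reflect : firstHit t k (reflect t k ε) = firstHit t k ε := by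
  have h' := hits_reflect h
  have hle : firstHit t k (reflect t k ε) ≤ firstHit t k ε :=
    firstHit_le_of_partialSum_eq h' (firstHit_le h) (partialSum_reflect_firstHit h)
  refine le_antisymm hle (firstHit_le_of_partialSum_eq h (firstHit_le h') ?_)
  rw [← partialSum_reflectFrom_of_le hle]
  exact partialSum_firstHit h'

lemma reflect_reflect : reflect t k (reflect t k ε) = ε := by
  rw [reflect, firstHit_reflect h]
  exact reflectFrom_involutive _ ε

lemma partialSum_reflect : partialSum t t (reflect t k ε) = 2 * k - partialSum t t ε := by
  rw [reflect, partialSum_reflectFrom_of_ge (firstHit_le h) le_rfl, partialSum_firstHit h]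

end reflect

lemma card_not_hits_add_card_gt_le (hk : 0 < k) :
    #{ε : Fin t → Bool | ¬Hits t k ε} + #{ε | k < partialSum t t ε} ≤
      #{ε | partialSum t t ε < k} := by
  set A : Finset (Fin t → Bool) := {ε | ¬Hits t k ε}
  set C : Finset (Fin t → Bool) := {ε | partialSum t t ε < k}
  have hAC : A ⊆ C := fun ε hε => by
    simp only [A, C, mem_filter, mem_univ, true_and] at hε ⊢
    exact partialSum_lt_of_not_hits hk hε t le_rfl
  have hhits : ∀ ε ∈ ({ε | k < partialSum t t ε} : Finset _), Hits t k ε := fun ε hε =>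
    hits_of_le_partialSum hk (mem_filter.mp hε).2.le
  calc #A + #{ε | k < partialSum t t ε} ≤ #A + #(C \ A) := by
        refine add_le_add_right (card_le_card_of_injOn (reflect t k) (fun ε hε => ?_)
          fun ε hε ε' hε' he => ?_) _
        · have := (mem_filter.mp hε).2
          simp only [A, C, coe_sdiff, coe_filter, Set.mem_sdiff, Set.mem_ofPred_eq, mem_univ,
            true_and, not_not]
          exact ⟨by rw [partialSum_reflect (hhits ε hε)]; omega, hits_reflect (hhits ε hε)⟩
        · rw [← reflect_reflect (hhits ε hε), he, reflect_reflect (hhits ε' hε')]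
    _ = #C := by rw [add_comm, card_sdiff_add_card_eq_card hAC]

lemma card_gt_partialSum_eq (k : ℤ) :
    #{ε : Fin t → Bool | k < partialSum t t ε} = #{ε | partialSum t t ε < -k} := by
  refine card_nbij' (fun ε i => !ε i) (fun ε i => !ε i) (fun ε hε => ?_) (fun ε hε => ?_)
    (fun ε _ => by simp) (fun ε _ => by simp)
  · simp only [coe_filter, Set.mem_ofPred_eq, mem_univ, true_and] at hε ⊢
    rw [partialSum_not]; omega
  · simp only [coe_filter, Set.mem_ofPred_eq, mem_univ, true_and] at hε ⊢
    rw [partialSum_not]; omega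

lemma card_not_hits_le (hk : 0 < k) :
    #{ε : Fin t → Bool | ¬Hits t k ε} ≤
      #{ε | -k ≤ partialSum t t ε ∧ partialSum t t ε < k} := by
  have hsplit : #{ε : Fin t → Bool | partialSum t t ε < k} =
      #{ε | partialSum t t ε < -k} +
        #{ε | -k ≤ partialSum t t ε ∧ partialSum t t ε < k} := by
    rw [← card_union_of_disjoint (disjoint_filter.2 fun ε _ h1 h2 => by omega), ← filter_or]
    congr 1
    ext ε
    simp only [mem_filter, mem_univ, true_and]
    omega
  have := card_not_hits_add_card_gt_le (t := t) hk
  rw [card_gt_partialSum_eq] at this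
  omega

lemma card_filter_card_eq_le_choose (h : ℕ) :
    #{ε : Fin t → Bool | #{i | ε i} = h} ≤ t.choose h := by
  have : t.choose h = #(powersetCard h (univ : Finset (Fin t))) := by simp
  rw [this]
  refine card_le_card_of_injOn (fun ε => ({i | ε i} : Finset (Fin t))) (fun ε hε => ?_)
    fun ε _ ε' _ he => ?_
  · simpa [mem_powersetCard] using hε
  · funext i
    simpa using congrArg (i ∈ ·) he

lemma card_window_le_mul_choose (k : ℕ) :
    #{ε : Fin t → Bool | -(k : ℤ) ≤ partialSum t t ε ∧ partialSum t t ε < k} ≤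
      k * t.choose (t / 2) := by
  set D : Finset (Fin t → Bool) :=
    {ε | -(k : ℤ) ≤ partialSum t t ε ∧ partialSum t t ε < k}
  set H := (range (t + 1)).filter fun h => t ≤ 2 * h + k ∧ 2 * h < t + k
  have hmaps : ∀ ε ∈ D, #{i | ε i} ∈ H := fun ε hε => by
    have hle : #{i | ε i} ≤ t := (card_filter_le _ _).trans (card_fin t).le
    rw [mem_filter, partialSum_self] at hε
    simp only [H, mem_filter, mem_range]
    omega
  have hH : #H ≤ k := by
    have : H ⊆ Ico ((t + 1 - k) / 2) ((t + k + 1) / 2) := fun h hh => by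
      simp only [H, mem_filter, mem_Ico] at hh ⊢
      omega
    have := card_le_card this
    rw [Nat.card_Ico] at this
    omega
  calc #D = ∑ h ∈ H, #{ε ∈ D | #{i | ε i} = h} := card_eq_sum_card_fiberwise hmaps
    _ ≤ ∑ h ∈ H, t.choose (t / 2) := sum_le_sum fun h _ =>
        (card_le_card (filter_subset_filter _ (subset_univ _))).trans
          ((card_filter_card_eq_le_choose h).trans (Nat.choose_le_middle h t))
    _ ≤ k * t.choose (t / 2) := by
        rw [sum_const, smul_eq_mul]
        gcongr

lemma PMF.pr_uniformOfFintype_finset {α : Type*} [Fintype α] [Nonempty α] (s : Finset α) :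
    (PMF.uniformOfFintype α).pr s = #s / Fintype.card α := by
  rw [PMF.pr, toOuterMeasure_uniformOfFintype_apply]
  simp [ENNReal.toReal_div]

/-- Hitting-time bound for the simple symmetric random walk: the probability that the walk
started at `0` does not reach `k ≥ 1` within `t` steps is at most `k e √2 / (π √t)`. -/
theorem random_walk_hitting_bound (t : ℕ) (ht : 1 ≤ t) (k : ℤ) (hk : 1 ≤ k) :
    (PMF.uniformOfFintype (Fin t → Bool)).pr {ε | ∀ j ≤ t, partialSum t j ε ≠ k} ≤
      (k : ℝ) * Real.exp 1 * Real.sqrt 2 / (Real.pi * Real.sqrt t) := by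
  have hevent : {ε : Fin t → Bool | ∀ j ≤ t, partialSum t j ε ≠ k} =
      ↑({ε | ¬Hits t k ε} : Finset (Fin t → Bool)) := by
    ext ε
    simp [Hits]
  have hcount := card_not_hits_le (t := t) (by omega : 0 < k)
  lift k to ℕ using (by omega)
  replace hcount := hcount.trans (card_window_le_mul_choose k)
  rw [hevent, PMF.pr_uniformOfFintype_finset, Fintype.card_fun, Fintype.card_bool, Fintype.card_fin]
  push_cast
  calc (#{ε : Fin t → Bool | ¬Hits t k ε} : ℝ) / 2 ^ t
      ≤ k * (t.choose (t / 2) / 2 ^ t) := by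
        rw [mul_div_assoc']
        gcongr
        exact_mod_cast hcount
    _ ≤ k * √(2 / (π * t)) := by gcongr; exact Nat.choose_half_div_two_pow_le ht
    _ ≤ k * (exp 1 * √2 / (π * √t)) := by gcongr; exact sqrt_two_div_pi_mul_le t
    _ = k * exp 1 * √2 / (π * √t) := by ring
end

section
/- Convergence of simple random walks: let T ≥ 1 and let s₁, s₂ : ℤ with s₁ - s₂ = 2k for a natural number k ≥ 1. Then TV(rwalk(T, s₁), rwalk(T, s₂)) ≤ (k · e · √2) / (π · √T). -/
open scoped ENNReal

/-- One step of the simple symmetric random walk: from `x`, move to `x - 1` or `x + 1`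
uniformly at random. -/
noncomputable def rwStep (x : ℤ) : PMF ℤ :=
  (PMF.uniformOfFintype Bool).map fun b => if b then x + 1 else x - 1

/-- The distribution of the simple symmetric random walk after `T` steps from `s`. -/
noncomputable def rwalk (T : ℕ) (s : ℤ) : PMF ℤ := iter rwStep T s

/-!
Translating both walks by the same amount does not change their distance, so by the triangle
inequality the distance for starting points `2k` apart is at most `k` times the distance for
starting points `2` apart. After `T` steps the walk from `s` has mass `C(T, j) / 2 ^ T` at
`s - T + 2 j`; moving the start by `2` shifts this profile by one site, and since binomial
coefficients are unimodal the `ℓ¹` difference telescopes to twice the maximum, so the distance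
is `C(T, ⌊T/2⌋) / 2 ^ T`. The estimate `C(2n, n) / 4 ^ n ≤ 1 / √(2n + 1)`, proved by induction
on its square, bounds this by `1 / √T`, and `π ≤ e √2` finishes.
-/

open Finset

section TotalVariation

variable {A : Type*}

lemma summable_abs_toReal_sub (μ ν : PMF A) :
    Summable fun a => |(μ a).toReal - (ν a).toReal| := by
  refine .of_nonneg_of_le (fun _ => abs_nonneg _) (fun a => abs_sub _ _) ?_
  exact (ENNReal.summable_toReal μ.tsum_coe_ne_top).abs.add
    (ENNReal.summable_toReal ν.tsum_coe_ne_top).abs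

lemma TV_self (μ : PMF A) : TV μ μ = 0 := by
  simp [TV]

lemma TV_triangle (μ₁ μ₂ μ₃ : PMF A) : TV μ₁ μ₃ ≤ TV μ₁ μ₂ + TV μ₂ μ₃ := by
  have h₁₂ := summable_abs_toReal_sub μ₁ μ₂
  have h₂₃ := summable_abs_toReal_sub μ₂ μ₃
  unfold TV
  rw [← mul_add, ← h₁₂.tsum_add h₂₃]
  refine mul_le_mul_of_nonneg_left ?_ (by norm_num)
  exact (summable_abs_toReal_sub μ₁ μ₃).tsum_le_tsum (fun a => abs_sub_le _ _ _) (h₁₂.add h₂₃)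

end TotalVariation

lemma sum_range_abs_sub_of_unimodal {G : Type*} [AddCommGroup G] [LinearOrder G]
    [IsOrderedAddMonoid G] {f : ℕ → G} {m n : ℕ} (hmn : m ≤ n)
    (hup : ∀ j < m, f j ≤ f (j + 1)) (hdown : ∀ j, m ≤ j → f (j + 1) ≤ f j) :
    ∑ j ∈ range n, |f (j + 1) - f j| = 2 • f m - f 0 - f n := by
  rw [← sum_range_add_sum_Ico _ hmn]
  have hleft : ∑ j ∈ range m, |f (j + 1) - f j| = f m - f 0 := by
    rw [← sum_range_sub]
    exact sum_congr rfl fun j hj => abs_of_nonneg (sub_nonneg.2 (hup j (mem_range.1 hj)))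
  have hright : ∑ j ∈ Ico m n, |f (j + 1) - f j| = f m - f n := by
    rw [← neg_sub, ← sum_Ico_sub _ hmn, ← sum_neg_distrib]
    exact sum_congr rfl fun j hj => abs_of_nonpos (sub_nonpos.2 (hdown j (mem_Ico.1 hj).1))
  rw [hleft, hright, two_nsmul]
  abel

lemma Nat.choose_succ_le_of_half_le {n r : ℕ} (h : n / 2 ≤ r) :
    n.choose (r + 1) ≤ n.choose r := by
  refine Nat.le_of_mul_le_mul_right ?_ r.succ_pos
  rw [Nat.choose_succ_right_eq]
  exact Nat.mul_le_mul_left _ (by omega)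

lemma sum_range_abs_choose_succ_sub_choose (T : ℕ) :
    ∑ j ∈ range (T + 1), |(T.choose (j + 1) : ℝ) - T.choose j| = 2 * T.choose (T / 2) - 1 := by
  rw [sum_range_abs_sub_of_unimodal (f := fun j => (T.choose j : ℝ)) (m := T / 2) (by omega)
    (fun j hj => by exact_mod_cast Nat.choose_le_succ_of_lt_half_left hj)
    (fun j hj => by exact_mod_cast Nat.choose_succ_le_of_half_le hj)]
  simp

lemma Nat.centralBinom_succ_eq_two_mul_choose (n : ℕ) :
    (n + 1).centralBinom = 2 * (2 * n + 1).choose n := by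
  rw [Nat.centralBinom_eq_two_mul_choose, show 2 * (n + 1) = 2 * n + 1 + 1 by ring,
    Nat.choose_succ_succ, Nat.choose_symm_half]
  ring

lemma Nat.centralBinom_div_four_pow_sq_mul_le (n : ℕ) :
    ((n.centralBinom : ℝ) / 4 ^ n) ^ 2 * (2 * n + 1) ≤ 1 := by
  induction n with
  | zero => simp
  | succ n ih =>
    have hrec : ((n + 1).centralBinom : ℝ) / 4 ^ (n + 1) =
        (n.centralBinom : ℝ) / 4 ^ n * ((2 * n + 1) / (2 * n + 2)) := by
      have h : ((n + 1 : ℕ) : ℝ) * (n + 1).centralBinom = 2 * (2 * n + 1) * n.centralBinom := by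
        exact_mod_cast n.succ_mul_centralBinom_succ
      field_simp
      rw [pow_succ]
      push_cast at h ⊢
      linear_combination 2 * 4 ^ n * h
    have hratio : ((2 * n + 1 : ℝ) / (2 * n + 2)) ^ 2 * (2 * (n + 1 : ℕ) + 1) ≤ 2 * n + 1 := by
      rw [div_pow, div_mul_eq_mul_div, div_le_iff₀ (by positivity)]
      push_cast
      nlinarith
    calc (((n + 1).centralBinom : ℝ) / 4 ^ (n + 1)) ^ 2 * (2 * (n + 1 : ℕ) + 1)
        = ((n.centralBinom : ℝ) / 4 ^ n) ^ 2 *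
            (((2 * n + 1 : ℝ) / (2 * n + 2)) ^ 2 * (2 * (n + 1 : ℕ) + 1)) := by
          rw [hrec]; ring
      _ ≤ ((n.centralBinom : ℝ) / 4 ^ n) ^ 2 * (2 * n + 1) := by gcongr
      _ ≤ 1 := ih

lemma choose_half_div_two_pow_sq_mul_le (T : ℕ) :
    ((T.choose (T / 2) : ℝ) / 2 ^ T) ^ 2 * T ≤ 1 := by
  obtain ⟨n, rfl | rfl⟩ := T.even_or_odd'
  · have h := n.centralBinom_div_four_pow_sq_mul_le
    rw [show 2 * n / 2 = n by omega, pow_mul, ← Nat.centralBinom_eq_two_mul_choose]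
    norm_num
    nlinarith [sq_nonneg ((n.centralBinom : ℝ) / 4 ^ n)]
  · have h := (n + 1).centralBinom_div_four_pow_sq_mul_le
    have hodd : ((2 * n + 1).choose n : ℝ) / 2 ^ (2 * n + 1) =
        ((n + 1).centralBinom : ℝ) / 4 ^ (n + 1) := by
      rw [Nat.centralBinom_succ_eq_two_mul_choose]
      push_cast
      rw [show (4 : ℝ) ^ (n + 1) = 2 * 2 ^ (2 * n + 1) by rw [pow_succ, pow_succ, pow_mul]; ring]
      field_simp
    rw [show (2 * n + 1) / 2 = n by omega, hodd]
    push_cast at h ⊢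
    nlinarith [sq_nonneg (((n + 1).centralBinom : ℝ) / 4 ^ (n + 1))]

lemma choose_half_div_two_pow_le_inv_sqrt {T : ℕ} (hT : 1 ≤ T) :
    (T.choose (T / 2) : ℝ) / 2 ^ T ≤ 1 / √T := by
  rw [le_div_iff₀ (by positivity)]
  calc (T.choose (T / 2) : ℝ) / 2 ^ T * √T = √(((T.choose (T / 2) : ℝ) / 2 ^ T) ^ 2 * T) := by
        rw [Real.sqrt_mul (sq_nonneg _), Real.sqrt_sq (by positivity)]
    _ ≤ 1 := Real.sqrt_le_one.mpr (choose_half_div_two_pow_sq_mul_le T)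

lemma pi_le_exp_one_mul_sqrt_two : Real.pi ≤ Real.exp 1 * √2 := by
  have h2 : (1.4 : ℝ) ≤ √2 := Real.le_sqrt_of_sq_le (by norm_num)
  nlinarith [Real.pi_lt_d2, Real.exp_one_gt_d9]

lemma rwStep_apply (y x : ℤ) :
    rwStep y x = (if y = x - 1 then 2⁻¹ else 0) + (if y = x + 1 then 2⁻¹ else 0) := by
  have h₁ : x = y + 1 ↔ y = x - 1 := by omega
  have h₂ : x = y - 1 ↔ y = x + 1 := by omega
  simp [rwStep, h₁, h₂, add_comm]

lemma rwalk_succ_apply (T : ℕ) (s x : ℤ) :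
    rwalk (T + 1) s x = 2⁻¹ * (rwalk T s (x - 1) + rwalk T s (x + 1)) := by
  change ((rwalk T s).bind rwStep) x = _
  simp_rw [PMF.bind_apply, rwStep_apply, mul_add, mul_ite, mul_zero]
  rw [ENNReal.tsum_add, tsum_ite_eq, tsum_ite_eq]
  ring

lemma rwalk_add_apply (T : ℕ) (s c x : ℤ) : rwalk T (s + c) x = rwalk T s (x - c) := by
  induction T generalizing x with
  | zero => simp [rwalk, iter, PMF.pure_apply, sub_eq_iff_eq_add]
  | succ T ih =>
    rw [rwalk_succ_apply, rwalk_succ_apply, ih, ih, sub_right_comm, sub_add_eq_add_sub]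

lemma rwalk_apply_eq_zero {T : ℕ} {s x : ℤ} (h : ∀ j ≤ T, x ≠ s - T + 2 * j) :
    rwalk T s x = 0 := by
  induction T generalizing x with
  | zero => simpa [rwalk, iter, PMF.pure_apply] using h 0 le_rfl
  | succ T ih =>
    have hl : rwalk T s (x - 1) = 0 := ih fun j hj => by
      have := h (j + 1) (by omega); push_cast at this; omega
    have hr : rwalk T s (x + 1) = 0 := ih fun j hj => by
      have := h j (by omega); push_cast at this; omega
    rw [rwalk_succ_apply, hl, hr, add_zero, mul_zero]

lemma rwalk_apply_sub_add_two_mul (T : ℕ) (s : ℤ) (j : ℕ) :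
    rwalk T s (s - T + 2 * j) = T.choose j / 2 ^ T := by
  induction T generalizing j with
  | zero => cases j <;> simp [rwalk, iter, PMF.pure_apply, Nat.cast_add_one_ne_zero]
  | succ T ih =>
    rw [rwalk_succ_apply]
    cases j with
    | zero =>
      rw [rwalk_apply_eq_zero fun j _ => by push_cast; omega,
        show s - (T + 1 : ℕ) + 2 * (0 : ℕ) + 1 = s - T + 2 * (0 : ℕ) by push_cast; ring, ih]
      simp [pow_succ, ENNReal.mul_inv, mul_comm]
    | succ j =>
      rw [show s - (T + 1 : ℕ) + 2 * (j + 1 : ℕ) - 1 = s - T + 2 * (j : ℕ) by push_cast; ring,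
        show s - (T + 1 : ℕ) + 2 * (j + 1 : ℕ) + 1 = s - T + 2 * (j + 1 : ℕ) by push_cast; ring,
        ih, ih, Nat.choose_succ_succ, ENNReal.div_add_div_same, pow_succ, Nat.cast_add,
        ENNReal.div_eq_inv_mul, ENNReal.div_eq_inv_mul, ENNReal.mul_inv (by simp) (by simp)]
      ring

lemma TV_rwalk_add (T : ℕ) (s₁ s₂ c : ℤ) :
    TV (rwalk T (s₁ + c)) (rwalk T (s₂ + c)) = TV (rwalk T s₁) (rwalk T s₂) := by
  simp_rw [TV, rwalk_add_apply]
  congr 1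
  exact (Equiv.subRight c).tsum_eq fun x => |(rwalk T s₁ x).toReal - (rwalk T s₂ x).toReal|

lemma tsum_abs_rwalk_sub_two_sub (T : ℕ) (s : ℤ) :
    ∑' x, |(rwalk T s (x - 2)).toReal - (rwalk T s x).toReal| =
      2 * T.choose (T / 2) / 2 ^ T := by
  set F : ℤ → ℝ := fun x => |(rwalk T s (x - 2)).toReal - (rwalk T s x).toReal| with hF
  set g : ℕ → ℤ := fun j => s - T + 2 * j with hg
  have hg_inj : g.Injective := fun a b h => by simp only [hg] at h; omega
  have hval (j : ℕ) : (rwalk T s (g j)).toReal = T.choose j / 2 ^ T := by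
    simp [hg, rwalk_apply_sub_add_two_mul]
  have hzero {x : ℤ} (h : ∀ j ≤ T, x ≠ g j) : (rwalk T s x).toReal = 0 := by
    simp [rwalk_apply_eq_zero h]
  have hsupp : F.support ⊆ Set.range g := by
    refine Function.support_subset_iff'.2 fun x hx => ?_
    simp only [Set.mem_range, not_exists] at hx
    simp only [hF]
    rw [hzero fun j _ h => hx j h.symm, hzero fun j _ h => hx (j + 1) ?_, sub_zero, abs_zero]
    simp only [hg] at h ⊢
    push_cast
    omega
  have hfin : ∀ j ∉ range (T + 2), F (g j) = 0 := by
    intro j hj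
    rw [mem_range] at hj
    simp only [hF]
    rw [hzero fun i _ => ?_, hzero fun i _ => ?_, sub_zero, abs_zero] <;>
      simp only [hg] <;> omega
  have hsucc (j : ℕ) : F (g (j + 1)) = |(T.choose (j + 1) : ℝ) - T.choose j| / 2 ^ T := by
    simp only [hF]
    rw [show g (j + 1) - 2 = g j by simp only [hg]; push_cast; ring, hval, hval, ← sub_div,
      abs_div, abs_of_pos (by positivity : (0 : ℝ) < 2 ^ T), abs_sub_comm]
  have h0 : F (g 0) = 1 / 2 ^ T := by
    simp only [hF]
    rw [hzero fun i _ => by simp only [hg]; omega, hval]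
    simp
  rw [← hg_inj.tsum_eq hsupp, tsum_eq_sum hfin, sum_range_succ']
  simp_rw [hsucc, h0, ← sum_div, sum_range_abs_choose_succ_sub_choose]
  ring

lemma TV_rwalk_add_two (T : ℕ) (s : ℤ) :
    TV (rwalk T (s + 2)) (rwalk T s) = T.choose (T / 2) / 2 ^ T := by
  simp_rw [TV, rwalk_add_apply, tsum_abs_rwalk_sub_two_sub]
  ring

lemma TV_rwalk_add_two_mul_le (T : ℕ) (s : ℤ) (k : ℕ) :
    TV (rwalk T (s + 2 * k)) (rwalk T s) ≤ k * TV (rwalk T (s + 2)) (rwalk T s) := by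
  induction k with
  | zero => simp [TV_self]
  | succ k ih =>
    have hstep : TV (rwalk T (s + 2 * (k + 1 : ℕ))) (rwalk T (s + 2 * k)) =
        TV (rwalk T (s + 2)) (rwalk T s) := by
      rw [← TV_rwalk_add T (s + 2) s (2 * k)]
      congr 2
      push_cast
      ring
    have := TV_triangle (rwalk T (s + 2 * (k + 1 : ℕ))) (rwalk T (s + 2 * k)) (rwalk T s)
    push_cast at this hstep ⊢
    linarith

theorem rwalk_converge_general (T : ℕ) (hT : 1 ≤ T) (s₁ s₂ : ℤ) (k : ℕ)
    (hs : s₁ - s₂ = 2 * (k : ℤ)) :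
    TV (rwalk T s₁) (rwalk T s₂) ≤
      (k : ℝ) * Real.exp 1 * Real.sqrt 2 / (Real.pi * Real.sqrt T) := by
  obtain rfl : s₁ = s₂ + 2 * k := by omega
  have hsqrt : 0 < √(T : ℝ) := by positivity
  calc TV (rwalk T (s₂ + 2 * k)) (rwalk T s₂)
      ≤ k * TV (rwalk T (s₂ + 2)) (rwalk T s₂) := TV_rwalk_add_two_mul_le T s₂ k
    _ = k * ((T.choose (T / 2) : ℝ) / 2 ^ T) := by rw [TV_rwalk_add_two]
    _ ≤ k * (1 / √T) := by gcongr ?_ * ?_; exact choose_half_div_two_pow_le_inv_sqrt hT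
    _ ≤ k * (Real.exp 1 * √2 / (Real.pi * √T)) := by
      gcongr ?_ * ?_
      rw [div_le_div_iff₀ hsqrt (by positivity)]
      nlinarith [pi_le_exp_one_mul_sqrt_two]
    _ = k * Real.exp 1 * √2 / (Real.pi * √T) := by ring

/-- Convergence of simple random walks started an even distance `2k` apart. -/
theorem rwalk_converge (T : ℕ) (hT : 1 ≤ T) (s₁ s₂ : ℤ) (k : ℕ) (hk : 1 ≤ k)
    (hs : s₁ - s₂ = 2 * (k : ℤ)) :
    TV (rwalk T s₁) (rwalk T s₂) ≤
      (k : ℝ) * Real.exp 1 * Real.sqrt 2 / (Real.pi * Real.sqrt T) :=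
  rwalk_converge_general T hT s₁ s₂ k hs
end

section
/- Convergence of the Dynkin process: let N > 10 and let s₁, s₂ be integers with 1 ≤ s₁ ≤ 10 and 1 ≤ s₂ ≤ 10. Then TV(f^{(N)}(s₁), f^{(N)}(s₂)) ≤ (9/10)^{N/5 - 2}, where the exponent N/5 - 2 is a real number. -/
open scoped ENNReal

open Finset



noncomputable def G (t : ℕ) (j : ℤ) : ℝ :=
  if h : t = 0 then (if j = 0 then 1 else 0)
  else (1/10) * ∑ k ∈ (Finset.Icc 1 10).attach,
      (if t ≤ (k : ℕ) then (if j = (k : ℕ) - (t : ℤ) then 1 else 0)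
       else G (t - (k : ℕ)) j)
termination_by t
decreasing_by
  have hk1 : 1 ≤ (k : ℕ) := (Finset.mem_Icc.mp k.2).1
  omega

noncomputable def u (m : ℕ) : ℝ :=
  if h : m = 0 then 1
  else (1/10) * ∑ k ∈ (Finset.Icc 1 10).attach,
      (if (k : ℕ) ≤ m then u (m - (k : ℕ)) else 0)
termination_by m
decreasing_by
  have hk1 : 1 ≤ (k : ℕ) := (Finset.mem_Icc.mp k.2).1
  omega

lemma G_zero (j : ℤ) : G 0 j = if j = 0 then 1 else 0 := by rw [G]; simp

lemma G_succ (t : ℕ) (ht : t ≠ 0) (j : ℤ) :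
    G t j = (1/10) * ∑ k ∈ Finset.Icc 1 10,
      (if t ≤ k then (if j = (k : ℤ) - (t : ℤ) then 1 else 0) else G (t - k) j) := by
  rw [G, dif_neg ht]
  exact congrArg _ (Finset.sum_attach (Finset.Icc 1 10) (fun k => if t ≤ k then (if j = (k : ℤ) - (t : ℤ) then 1 else 0) else G (t - k) j))

lemma u_zero : u 0 = 1 := by rw [u]; simp

lemma u_succ (m : ℕ) (hm : m ≠ 0) :
    u m = (1/10) * ∑ k ∈ Finset.Icc 1 10, (if k ≤ m then u (m - k) else 0) := by
  rw [u, dif_neg hm]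
  exact congrArg _ (Finset.sum_attach (Finset.Icc 1 10) (fun k => if k ≤ m then u (m - k) else 0))

lemma u_nonneg (m : ℕ) : 0 ≤ u m := by
  induction m using Nat.strong_induction_on with
  | _ m ih =>
    rcases eq_or_ne m 0 with h | h
    · simp [h, u_zero]
    · rw [u_succ m h]
      have : ∀ k ∈ Finset.Icc 1 10, (0:ℝ) ≤ (if k ≤ m then u (m - k) else 0) := by
        intro k hk
        split_ifs with h2
        · exact ih _ (by have := (Finset.mem_Icc.mp hk).1; omega)
        · exact le_refl _
      have hs := Finset.sum_nonneg this
      linarith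

lemma sum_Icc_ten (f : ℕ → ℝ) : ∑ k ∈ Finset.Icc 1 10, f k = f 1 + f 2 + f 3 + f 4 + f 5 + f 6 + f 7 + f 8 + f 9 + f 10 := by
  rw [show (Finset.Icc 1 10 : Finset ℕ) = {1,2,3,4,5,6,7,8,9,10} from by decide]
  simp [Finset.sum_insert, Finset.mem_insert]
  ring

lemma u_rec_big (t : ℕ) (ht : 10 ≤ t) :
    u t = (1/10) * (u (t - 1) + u (t - 2) + u (t - 3) + u (t - 4) + u (t - 5) + u (t - 6) + u (t - 7) + u (t - 8) + u (t - 9) + u (t - 10)) := by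
  rw [u_succ t (by omega), sum_Icc_ten]
  rw [if_pos (show (1:ℕ) ≤ t by omega), if_pos (show (2:ℕ) ≤ t by omega), if_pos (show (3:ℕ) ≤ t by omega), if_pos (show (4:ℕ) ≤ t by omega), if_pos (show (5:ℕ) ≤ t by omega), if_pos (show (6:ℕ) ≤ t by omega), if_pos (show (7:ℕ) ≤ t by omega), if_pos (show (8:ℕ) ≤ t by omega), if_pos (show (9:ℕ) ≤ t by omega), if_pos (show (10:ℕ) ≤ t by omega)]

lemma G_rec_big (t : ℕ) (ht : 11 ≤ t) (j : ℤ) :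
    G t j = (1/10) * (G (t - 1) j + G (t - 2) j + G (t - 3) j + G (t - 4) j + G (t - 5) j + G (t - 6) j + G (t - 7) j + G (t - 8) j + G (t - 9) j + G (t - 10) j) := by
  rw [G_succ t (by omega), sum_Icc_ten]
  rw [if_neg (show ¬ (t ≤ 1) by omega), if_neg (show ¬ (t ≤ 2) by omega), if_neg (show ¬ (t ≤ 3) by omega), if_neg (show ¬ (t ≤ 4) by omega), if_neg (show ¬ (t ≤ 5) by omega), if_neg (show ¬ (t ≤ 6) by omega), if_neg (show ¬ (t ≤ 7) by omega), if_neg (show ¬ (t ≤ 8) by omega), if_neg (show ¬ (t ≤ 9) by omega), if_neg (show ¬ (t ≤ 10) by omega)]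

lemma u_val_1 : u 1 = 1/10 := by
  rw [u_succ 1 (by omega), sum_Icc_ten]
  norm_num [u_zero]

lemma u_val_2 : u 2 = 11/100 := by
  rw [u_succ 2 (by omega), sum_Icc_ten]
  norm_num [u_val_1, u_zero]

lemma u_val_3 : u 3 = 121/1000 := by
  rw [u_succ 3 (by omega), sum_Icc_ten]
  norm_num [u_val_1, u_val_2, u_zero]

lemma u_val_4 : u 4 = 1331/10000 := by
  rw [u_succ 4 (by omega), sum_Icc_ten]
  norm_num [u_val_1, u_val_2, u_val_3, u_zero]

lemma u_val_5 : u 5 = 14641/100000 := by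
  rw [u_succ 5 (by omega), sum_Icc_ten]
  norm_num [u_val_1, u_val_2, u_val_3, u_val_4, u_zero]

lemma u_val_6 : u 6 = 161051/1000000 := by
  rw [u_succ 6 (by omega), sum_Icc_ten]
  norm_num [u_val_1, u_val_2, u_val_3, u_val_4, u_val_5, u_zero]

lemma u_val_7 : u 7 = 1771561/10000000 := by
  rw [u_succ 7 (by omega), sum_Icc_ten]
  norm_num [u_val_1, u_val_2, u_val_3, u_val_4, u_val_5, u_val_6, u_zero]

lemma u_val_8 : u 8 = 19487171/100000000 := by
  rw [u_succ 8 (by omega), sum_Icc_ten]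
  norm_num [u_val_1, u_val_2, u_val_3, u_val_4, u_val_5, u_val_6, u_val_7, u_zero]

lemma u_val_9 : u 9 = 214358881/1000000000 := by
  rw [u_succ 9 (by omega), sum_Icc_ten]
  norm_num [u_val_1, u_val_2, u_val_3, u_val_4, u_val_5, u_val_6, u_val_7, u_val_8, u_zero]

lemma S_one (t : ℕ) (ht : 1 ≤ t) :
    ∑ d ∈ Finset.Icc 1 10, (if d ≤ t then ((11 - (d:ℝ))/10) * u (t - d) else 0) = 1 := by
  induction t using Nat.strong_induction_on with
  | _ t ih =>
    rcases le_or_gt t 10 with h10 | h10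
    · interval_cases t <;>
      · rw [sum_Icc_ten]
        norm_num [u_val_1, u_val_2, u_val_3, u_val_4, u_val_5, u_val_6, u_val_7, u_val_8, u_val_9, u_zero]
    · have hS := ih (t-1) (by omega) (by omega)
      have hrec := u_rec_big (t-1) (by omega)
      rw [sum_Icc_ten] at hS ⊢
      rw [if_pos (show (1:ℕ) ≤ t by omega), if_pos (show (2:ℕ) ≤ t by omega), if_pos (show (3:ℕ) ≤ t by omega), if_pos (show (4:ℕ) ≤ t by omega), if_pos (show (5:ℕ) ≤ t by omega), if_pos (show (6:ℕ) ≤ t by omega), if_pos (show (7:ℕ) ≤ t by omega), if_pos (show (8:ℕ) ≤ t by omega), if_pos (show (9:ℕ) ≤ t by omega), if_pos (show (10:ℕ) ≤ t by omega)]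
      rw [if_pos (show (1:ℕ) ≤ t - 1 by omega), if_pos (show (2:ℕ) ≤ t - 1 by omega), if_pos (show (3:ℕ) ≤ t - 1 by omega), if_pos (show (4:ℕ) ≤ t - 1 by omega), if_pos (show (5:ℕ) ≤ t - 1 by omega), if_pos (show (6:ℕ) ≤ t - 1 by omega), if_pos (show (7:ℕ) ≤ t - 1 by omega), if_pos (show (8:ℕ) ≤ t - 1 by omega), if_pos (show (9:ℕ) ≤ t - 1 by omega), if_pos (show (10:ℕ) ≤ t - 1 by omega)] at hS
      simp only [show t - 1 - 1 = t - 2 from by omega, show t - 1 - 2 = t - 3 from by omega, show t - 1 - 3 = t - 4 from by omega, show t - 1 - 4 = t - 5 from by omega, show t - 1 - 5 = t - 6 from by omega, show t - 1 - 6 = t - 7 from by omega, show t - 1 - 7 = t - 8 from by omega, show t - 1 - 8 = t - 9 from by omega, show t - 1 - 9 = t - 10 from by omega, show t - 1 - 10 = t - 11 from by omega] at hS hrec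
      push_cast at hS ⊢
      linear_combination hS + hrec

lemma u_ge (m : ℕ) (hm : 1 ≤ m) : 1/10 ≤ u m := by
  have hS := S_one m hm
  rw [u_succ m (by omega)]
  have hle : ∑ k ∈ Finset.Icc 1 10, (if k ≤ m then ((11 - (k:ℝ))/10) * u (m - k) else 0)
      ≤ ∑ k ∈ Finset.Icc 1 10, (if k ≤ m then u (m - k) else 0) := by
    apply Finset.sum_le_sum
    intro k hk
    have hk1 : (1:ℝ) ≤ (k:ℝ) := by exact_mod_cast (Finset.mem_Icc.mp hk).1
    split_ifs with h
    · nlinarith [u_nonneg (m - k)]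
    · exact le_refl 0
  linarith

lemma G_nonneg (t : ℕ) (j : ℤ) : 0 ≤ G t j := by
  induction t using Nat.strong_induction_on with
  | _ t ih =>
    rcases eq_or_ne t 0 with h | h
    · rw [h, G_zero]; split_ifs <;> norm_num
    · rw [G_succ t h]
      have hs : ∀ k ∈ Finset.Icc 1 10,
          (0:ℝ) ≤ (if t ≤ k then (if j = (k : ℤ) - (t : ℤ) then 1 else 0) else G (t - k) j) := by
        intro k hk
        split_ifs with h1 h2
        · norm_num
        · exact le_refl 0
        · exact ih _ (by have := (Finset.mem_Icc.mp hk).1; omega)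
      have := Finset.sum_nonneg hs
      linarith

lemma G_supp (t : ℕ) (j : ℤ) (hj : j < 0 ∨ 9 < j) : G t j = 0 := by
  induction t using Nat.strong_induction_on with
  | _ t ih =>
    rcases eq_or_ne t 0 with h | h
    · rw [h, G_zero, if_neg (by omega)]
    · rw [G_succ t h]
      have hs : ∀ k ∈ Finset.Icc 1 10,
          (if t ≤ k then (if j = (k : ℤ) - (t : ℤ) then 1 else 0) else G (t - k) j) = 0 := by
        intro k hk
        have hk10 := Finset.mem_Icc.mp hk
        split_ifs with h1 h2
        · exfalso; omega
        · rfl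
        · exact ih _ (by omega)
      rw [Finset.sum_congr rfl hs]
      simp

lemma G_sum (t : ℕ) : ∑ j ∈ Finset.Icc (0:ℤ) 9, G t j = 1 := by
  induction t using Nat.strong_induction_on with
  | _ t ih =>
    rcases eq_or_ne t 0 with h | h
    · subst h
      rw [Finset.sum_congr rfl (fun j _ => G_zero j), Finset.sum_ite_eq' (Finset.Icc (0:ℤ) 9) 0 (fun _ => (1:ℝ))]
      rw [if_pos (by norm_num)]
    · rw [Finset.sum_congr rfl (fun j _ => G_succ t h j), ← Finset.mul_sum,
        Finset.sum_comm]
      have hs : ∀ k ∈ Finset.Icc 1 10,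
          ∑ j ∈ Finset.Icc (0:ℤ) 9,
            (if t ≤ k then (if j = (k : ℤ) - (t : ℤ) then 1 else 0) else G (t - k) j) = 1 := by
        intro k hk
        have hk10 := Finset.mem_Icc.mp hk
        by_cases h1 : t ≤ k
        · simp only [if_pos h1]
          rw [Finset.sum_ite_eq' (Finset.Icc (0:ℤ) 9) ((k:ℤ) - t) (fun _ => (1:ℝ))]
          rw [if_pos (Finset.mem_Icc.mpr (by constructor <;> [omega; omega]))]
        · simp only [if_neg h1]
          exact ih (t - k) (by omega)
      rw [Finset.sum_congr rfl hs]
      simp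
lemma G_ge_usum (t : ℕ) (ht : 1 ≤ t) (j : ℤ) (hj0 : 0 ≤ j) (hj9 : j ≤ 9) :
    (1/10) * ∑ d ∈ Finset.Icc (1:ℕ) 10, (if ((d:ℤ) ≤ 10 - j ∧ d ≤ t) then u (t - d) else 0)
      ≤ G t j := by
  induction t using Nat.strong_induction_on with
  | _ t ih =>
    rw [G_succ t (by omega)]
    -- lower bound each summand of G
    have hB : ∑ k ∈ Finset.Icc (1:ℕ) 10,
        (if t ≤ k then (if j = (k : ℤ) - (t : ℤ) then (1:ℝ) else 0)
         else (1/10) * ∑ d ∈ Finset.Icc (1:ℕ) 10,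
            (if ((d:ℤ) ≤ 10 - j ∧ d ≤ t - k) then u (t - k - d) else 0))
        ≤ ∑ k ∈ Finset.Icc (1:ℕ) 10,
        (if t ≤ k then (if j = (k : ℤ) - (t : ℤ) then 1 else 0) else G (t - k) j) := by
      apply Finset.sum_le_sum
      intro k hk
      have hk10 := Finset.mem_Icc.mp hk
      by_cases h1 : t ≤ k
      · simp only [if_pos h1]; exact le_refl _
      · simp only [if_neg h1]
        exact ih (t - k) (by omega) (by omega)
    -- rewrite the u-sum
    have key : (1/10) * ∑ d ∈ Finset.Icc (1:ℕ) 10,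
        (if ((d:ℤ) ≤ 10 - j ∧ d ≤ t) then u (t - d) else 0)
        ≤ (1/10) * ∑ k ∈ Finset.Icc (1:ℕ) 10,
        (if t ≤ k then (if j = (k : ℤ) - (t : ℤ) then (1:ℝ) else 0)
         else (1/10) * ∑ d ∈ Finset.Icc (1:ℕ) 10,
            (if ((d:ℤ) ≤ 10 - j ∧ d ≤ t - k) then u (t - k - d) else 0)) := by
      -- split LHS termwise
      have hA : ∀ d ∈ Finset.Icc (1:ℕ) 10,
          (if ((d:ℤ) ≤ 10 - j ∧ d ≤ t) then u (t - d) else 0)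
          = (if ((d:ℤ) ≤ 10 - j ∧ d < t) then (1/10) * ∑ k ∈ Finset.Icc (1:ℕ) 10,
                (if k ≤ t - d then u (t - d - k) else 0) else 0)
            + (if ((d:ℤ) ≤ 10 - j ∧ d = t) then 1 else 0) := by
        intro d hd
        by_cases hc1 : (d:ℤ) ≤ 10 - j
        · by_cases hc2 : d ≤ t
          · rcases Nat.lt_or_ge d t with hlt | hge
            · rw [if_pos ⟨hc1, hc2⟩, if_pos ⟨hc1, hlt⟩, if_neg (by omega : ¬((d:ℤ) ≤ 10 - j ∧ d = t))]
              rw [u_succ (t - d) (by omega)]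
              ring
            · have hdt : d = t := by omega
              rw [if_pos ⟨hc1, hc2⟩, if_neg (by omega : ¬((d:ℤ) ≤ 10 - j ∧ d < t)),
                if_pos ⟨hc1, hdt⟩, hdt]
              simp [u_zero]
          · rw [if_neg (by tauto), if_neg (by omega : ¬((d:ℤ) ≤ 10 - j ∧ d < t)),
              if_neg (by omega : ¬((d:ℤ) ≤ 10 - j ∧ d = t))]
            simp
        · rw [if_neg (by tauto), if_neg (by tauto), if_neg (by tauto)]
          simp
      rw [Finset.sum_congr rfl hA, Finset.sum_add_distrib]
      -- the indicator part of LHS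
      have hH : ∑ d ∈ Finset.Icc (1:ℕ) 10, (if ((d:ℤ) ≤ 10 - j ∧ d = t) then (1:ℝ) else 0)
          = (if ((t:ℤ) ≤ 10 - j ∧ t ≤ 10) then 1 else 0) := by
        have h1 : ∀ d ∈ Finset.Icc (1:ℕ) 10,
            (if ((d:ℤ) ≤ 10 - j ∧ d = t) then (1:ℝ) else 0)
            = (if d = t then (if ((t:ℤ) ≤ 10 - j) then (1:ℝ) else 0) else 0) := by
          intro d hd
          by_cases h2 : d = t
          · subst h2; by_cases h3 : (d:ℤ) ≤ 10 - j <;> simp [h3]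
          · simp [h2]
        rw [Finset.sum_congr rfl h1,
          Finset.sum_ite_eq' (Finset.Icc (1:ℕ) 10) t (fun _ => (if ((t:ℤ) ≤ 10 - j) then (1:ℝ) else 0))]
        by_cases h4 : t ≤ 10
        · rw [if_pos (Finset.mem_Icc.mpr ⟨ht, h4⟩)]
          by_cases h5 : (t:ℤ) ≤ 10 - j
          · rw [if_pos h5, if_pos ⟨h5, h4⟩]
          · rw [if_neg h5, if_neg (by tauto)]
        · rw [if_neg (by simp [Finset.mem_Icc]; omega), if_neg (by tauto)]
      rw [hH]
      -- the double-sum part of LHS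
      have hG : ∑ d ∈ Finset.Icc (1:ℕ) 10,
          (if ((d:ℤ) ≤ 10 - j ∧ d < t) then (1/10) * ∑ k ∈ Finset.Icc (1:ℕ) 10,
              (if k ≤ t - d then u (t - d - k) else 0) else 0)
          = (1/10) * ∑ d ∈ Finset.Icc (1:ℕ) 10, ∑ k ∈ Finset.Icc (1:ℕ) 10,
              (if ((d:ℤ) ≤ 10 - j ∧ d + k ≤ t) then u (t - d - k) else 0) := by
        rw [Finset.mul_sum]
        apply Finset.sum_congr rfl
        intro d hd
        have hd10 := Finset.mem_Icc.mp hd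
        by_cases hc : (d:ℤ) ≤ 10 - j ∧ d < t
        · rw [if_pos hc]
          congr 1
          apply Finset.sum_congr rfl
          intro k hk
          have hk10 := Finset.mem_Icc.mp hk
          by_cases h5 : k ≤ t - d
          · rw [if_pos h5, if_pos ⟨hc.1, by omega⟩]
          · rw [if_neg h5, if_neg (by push_neg; intro _; omega)]
        · rw [if_neg hc]
          rw [Finset.sum_eq_zero, mul_zero]
          intro k hk
          have hk10 := Finset.mem_Icc.mp hk
          rw [if_neg (by push_neg; intro h6; omega)]
      rw [hG]
      -- now rewrite RHS similarly
      have hBsplit : ∀ k ∈ Finset.Icc (1:ℕ) 10,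
          (if t ≤ k then (if j = (k : ℤ) - (t : ℤ) then (1:ℝ) else 0)
           else (1/10) * ∑ d ∈ Finset.Icc (1:ℕ) 10,
              (if ((d:ℤ) ≤ 10 - j ∧ d ≤ t - k) then u (t - k - d) else 0))
          = (if k = t + j.toNat then (1:ℝ) else 0)
            + (if t ≤ k then 0 else (1/10) * ∑ d ∈ Finset.Icc (1:ℕ) 10,
              (if ((d:ℤ) ≤ 10 - j ∧ d + k ≤ t) then u (t - d - k) else 0)) := by
        intro k hk
        have hk10 := Finset.mem_Icc.mp hk
        by_cases h1 : t ≤ k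
        · rw [if_pos h1, if_pos h1, add_zero]
          by_cases h2 : j = (k : ℤ) - (t : ℤ)
          · rw [if_pos h2, if_pos (by omega)]
          · rw [if_neg h2, if_neg (by omega)]
        · rw [if_neg h1, if_neg h1, if_neg (by omega), zero_add]
          congr 1
          apply Finset.sum_congr rfl
          intro d hd
          have hd10 := Finset.mem_Icc.mp hd
          by_cases h3 : (d:ℤ) ≤ 10 - j ∧ d ≤ t - k
          · rw [if_pos h3, if_pos ⟨h3.1, by omega⟩, show t - k - d = t - d - k from by omega]
          · rw [if_neg h3, if_neg (by push_neg; intro h4; omega)]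
      rw [Finset.sum_congr rfl hBsplit, Finset.sum_add_distrib]
      -- indicator part of RHS
      have hI : ∑ k ∈ Finset.Icc (1:ℕ) 10, (if k = t + j.toNat then (1:ℝ) else 0)
          = (if ((t:ℤ) ≤ 10 - j ∧ t ≤ 10) then 1 else 0) := by
        rw [Finset.sum_ite_eq' (Finset.Icc (1:ℕ) 10) (t + j.toNat) (fun _ => (1:ℝ))]
        by_cases h7 : (t:ℤ) ≤ 10 - j ∧ t ≤ 10
        · rw [if_pos (Finset.mem_Icc.mpr ⟨by omega, by omega⟩), if_pos h7]
        · rw [if_neg (by simp [Finset.mem_Icc]; omega), if_neg h7]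
      rw [hI]
      -- double sum part of RHS
      have hJ : ∑ k ∈ Finset.Icc (1:ℕ) 10,
          (if t ≤ k then (0:ℝ) else (1/10) * ∑ d ∈ Finset.Icc (1:ℕ) 10,
            (if ((d:ℤ) ≤ 10 - j ∧ d + k ≤ t) then u (t - d - k) else 0))
          = (1/10) * ∑ k ∈ Finset.Icc (1:ℕ) 10, ∑ d ∈ Finset.Icc (1:ℕ) 10,
            (if ((d:ℤ) ≤ 10 - j ∧ d + k ≤ t) then u (t - d - k) else 0) := by
        rw [Finset.mul_sum]
        apply Finset.sum_congr rfl
        intro k hk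
        have hk10 := Finset.mem_Icc.mp hk
        by_cases h1 : t ≤ k
        · rw [if_pos h1, Finset.sum_eq_zero, mul_zero]
          intro d hd
          have hd10 := Finset.mem_Icc.mp hd
          rw [if_neg (by push_neg; intro h2; omega)]
        · rw [if_neg h1]
      rw [hJ]
      have hc : ∑ d ∈ Finset.Icc (1:ℕ) 10, ∑ k ∈ Finset.Icc (1:ℕ) 10,
          (if ((d:ℤ) ≤ 10 - j ∧ d + k ≤ t) then u (t - d - k) else 0)
          = ∑ k ∈ Finset.Icc (1:ℕ) 10, ∑ d ∈ Finset.Icc (1:ℕ) 10,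
          (if ((d:ℤ) ≤ 10 - j ∧ d + k ≤ t) then u (t - d - k) else 0) := Finset.sum_comm
      linarith [hc]
    linarith [key, hB]


lemma sum_Icc_nineteen (f : ℕ → ℝ) : ∑ k ∈ Finset.Icc 1 19, f k = f 1 + f 2 + f 3 + f 4 + f 5 + f 6 + f 7 + f 8 + f 9 + f 10 + f 11 + f 12 + f 13 + f 14 + f 15 + f 16 + f 17 + f 18 + f 19 := by
  rw [show (Finset.Icc 1 19 : Finset ℕ) = {1,2,3,4,5,6,7,8,9,10,11,12,13,14,15,16,17,18,19} from by decide]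
  simp [Finset.sum_insert, Finset.mem_insert]
  ring

lemma sum_Icc09 (f : ℤ → ℝ) : ∑ j ∈ Finset.Icc (0:ℤ) 9, f j = f 0 + f 1 + f 2 + f 3 + f 4 + f 5 + f 6 + f 7 + f 8 + f 9 := by
  rw [show (Finset.Icc (0:ℤ) 9 : Finset ℤ) = {0,1,2,3,4,5,6,7,8,9} from by decide]
  simp [Finset.sum_insert, Finset.mem_insert]
  ring

noncomputable def MW (b : ℕ) (j : ℤ) : ℝ :=
  Finset.sup' (Finset.Icc (1:ℕ) 10) (Finset.nonempty_Icc.mpr (by norm_num)) (fun d => G (b - d) j)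

noncomputable def mW (b : ℕ) (j : ℤ) : ℝ :=
  Finset.inf' (Finset.Icc (1:ℕ) 10) (Finset.nonempty_Icc.mpr (by norm_num)) (fun d => G (b - d) j)

lemma le_MW (b d : ℕ) (hd : d ∈ Finset.Icc 1 10) (j : ℤ) : G (b - d) j ≤ MW b j := by
  exact Finset.le_sup' (fun d => G (b - d) j) hd

lemma mW_le (b d : ℕ) (hd : d ∈ Finset.Icc 1 10) (j : ℤ) : mW b j ≤ G (b - d) j := by
  exact Finset.inf'_le (fun d => G (b - d) j) hd

lemma mW_nonneg (b : ℕ) (j : ℤ) : 0 ≤ mW b j := by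
  exact Finset.le_inf' _ (fun d => G (b - d) j) (fun d _ => G_nonneg _ _)

lemma mW_le_MW (b : ℕ) (j : ℤ) : mW b j ≤ MW b j :=
  le_trans (mW_le b 1 (by decide) j) (le_MW b 1 (by decide) j)


lemma MW_le_of (b : ℕ) (j : ℤ) (x : ℝ) (h : ∀ d ∈ Finset.Icc (1:ℕ) 10, G (b-d) j ≤ x) :
    MW b j ≤ x := Finset.sup'_le _ _ h

lemma le_mW_of (b : ℕ) (j : ℤ) (x : ℝ) (h : ∀ d ∈ Finset.Icc (1:ℕ) 10, x ≤ G (b-d) j) :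
    x ≤ mW b j := Finset.le_inf' _ _ h

lemma MW_succ_le (b : ℕ) (hb : 11 ≤ b) (j : ℤ) : MW (b+1) j ≤ MW b j := by
  apply MW_le_of
  intro d hd
  obtain ⟨hd1, hd2⟩ := Finset.mem_Icc.mp hd
  rcases eq_or_ne d 1 with h1 | h1
  · rw [h1, show b + 1 - 1 = b from by omega]
    have hrec := G_rec_big b hb j
    linarith [le_MW b 1 (show (1:ℕ) ∈ Finset.Icc 1 10 from by decide) j, le_MW b 2 (show (2:ℕ) ∈ Finset.Icc 1 10 from by decide) j, le_MW b 3 (show (3:ℕ) ∈ Finset.Icc 1 10 from by decide) j, le_MW b 4 (show (4:ℕ) ∈ Finset.Icc 1 10 from by decide) j, le_MW b 5 (show (5:ℕ) ∈ Finset.Icc 1 10 from by decide) j, le_MW b 6 (show (6:ℕ) ∈ Finset.Icc 1 10 from by decide) j, le_MW b 7 (show (7:ℕ) ∈ Finset.Icc 1 10 from by decide) j, le_MW b 8 (show (8:ℕ) ∈ Finset.Icc 1 10 from by decide) j, le_MW b 9 (show (9:ℕ) ∈ Finset.Icc 1 10 from by decide) j, le_MW b 10 (show (10:ℕ) ∈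 Finset.Icc 1 10 from by decide) j]
  · rw [show b + 1 - d = b - (d-1) from by omega]
    exact le_MW b (d-1) (Finset.mem_Icc.mpr (by omega)) j

lemma le_mW_succ (b : ℕ) (hb : 11 ≤ b) (j : ℤ) : mW b j ≤ mW (b+1) j := by
  apply le_mW_of
  intro d hd
  obtain ⟨hd1, hd2⟩ := Finset.mem_Icc.mp hd
  rcases eq_or_ne d 1 with h1 | h1
  · rw [h1, show b + 1 - 1 = b from by omega]
    have hrec := G_rec_big b hb j
    linarith [mW_le b 1 (show (1:ℕ) ∈ Finset.Icc 1 10 from by decide) j, mW_le b 2 (show (2:ℕ) ∈ Finset.Icc 1 10 from by decide) j, mW_le b 3 (show (3:ℕ) ∈ Finset.Icc 1 10 from by decide) j, mW_le b 4 (show (4:ℕ) ∈ Finset.Icc 1 10 from by decide) j, mW_le b 5 (show (5:ℕ) ∈ Finset.Icc 1 10 from by decide) j, mW_le b 6 (show (6:ℕ) ∈ Finset.Icc 1 10 from by decide) j, mW_le b 7 (show (7:ℕ) ∈ Finset.Icc 1 10 from by decide) j, mW_le b 8 (show (8:ℕ) ∈ Finset.Icc 1 10 from by decide) j, mW_le b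 9 (show (9:ℕ) ∈ Finset.Icc 1 10 from by decide) j, mW_le b 10 (show (10:ℕ) ∈ Finset.Icc 1 10 from by decide) j]
  · rw [show b + 1 - d = b - (d-1) from by omega]
    exact mW_le b (d-1) (Finset.mem_Icc.mpr (by omega)) j

lemma MW_anti (b b' : ℕ) (hb : 11 ≤ b) (hbb : b ≤ b') (j : ℤ) : MW b' j ≤ MW b j := by
  induction b' , hbb using Nat.le_induction with
  | base => exact le_refl _
  | succ n hn ih => exact le_trans (MW_succ_le n (by omega) j) ih

lemma mW_mono (b b' : ℕ) (hb : 11 ≤ b) (hbb : b ≤ b') (j : ℤ) : mW b j ≤ mW b' j := by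
  induction b' , hbb using Nat.le_induction with
  | base => exact le_refl _
  | succ n hn ih => exact le_trans ih (le_mW_succ n (by omega) j)

set_option maxHeartbeats 4000000 in
lemma block (b : ℕ) (hb : 11 ≤ b) (j : ℤ) :
    MW (b+10) j - mW (b+10) j ≤ (38/100) * (MW b j - mW b j) := by
  have r0 := G_rec_big b hb j
  have r1 := G_rec_big (b + 1) (by omega) j
  simp only [show b + 1 - 1 = b from by omega, show b + 1 - 2 = b - 1 from by omega, show b + 1 - 3 = b - 2 from by omega, show b + 1 - 4 = b - 3 from by omega, show b + 1 - 5 = b - 4 from by omega, show b + 1 - 6 = b - 5 from by omega, show b + 1 - 7 = b - 6 from by omega, show b + 1 - 8 = b - 7 from by omega, show b + 1 - 9 = b - 8 from by omega, show b + 1 - 10 = b - 9 from by omega] at r1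
  have r2 := G_rec_big (b + 2) (by omega) j
  simp only [show b + 2 - 1 = b + 1 from by omega, show b + 2 - 2 = b from by omega, show b + 2 - 3 = b - 1 from by omega, show b + 2 - 4 = b - 2 from by omega, show b + 2 - 5 = b - 3 from by omega, show b + 2 - 6 = b - 4 from by omega, show b + 2 - 7 = b - 5 from by omega, show b + 2 - 8 = b - 6 from by omega, show b + 2 - 9 = b - 7 from by omega, show b + 2 - 10 = b - 8 from by omega] at r2
  have r3 := G_rec_big (b + 3) (by omega) j
  simp only [show b + 3 - 1 = b + 2 from by omega, show b + 3 - 2 = b + 1 from by omega, show b + 3 - 3 = b from by omega, show b + 3 - 4 = b - 1 from by omega, show b + 3 - 5 = b - 2 from by omega, show b + 3 - 6 = b - 3 from by omega, show b + 3 - 7 = b - 4 from by omega, show b + 3 - 8 = b - 5 from by omega, show b + 3 - 9 = b - 6 from by omega, show b + 3 - 10 = b - 7 from by omega] at r3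
  have r4 := G_rec_big (b + 4) (by omega) j
  simp only [show b + 4 - 1 = b + 3 from by omega, show b + 4 - 2 = b + 2 from by omega, show b + 4 - 3 = b + 1 from by omega, show b + 4 - 4 = b from by omega, show b + 4 - 5 = b - 1 from by omega, show b + 4 - 6 = b - 2 from by omega, show b + 4 - 7 = b - 3 from by omega, show b + 4 - 8 = b - 4 from by omega, show b + 4 - 9 = b - 5 from by omega, show b + 4 - 10 = b - 6 from by omega] at r4
  have r5 := G_rec_big (b + 5) (by omega) j
  simp only [show b + 5 - 1 = b + 4 from by omega, show b + 5 - 2 = b + 3 from by omega, show b + 5 - 3 = b + 2 from by omega, show b + 5 - 4 = b + 1 from by omega, show b + 5 - 5 = b from by omega, show b + 5 - 6 = b - 1 from by omega, show b + 5 - 7 = b - 2 from by omega, show b + 5 - 8 = b - 3 from by omega, show b + 5 - 9 = b - 4 from by omega, show b + 5 - 10 = b - 5 from by omega] at r5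
  have r6 := G_rec_big (b + 6) (by omega) j
  simp only [show b + 6 - 1 = b + 5 from by omega, show b + 6 - 2 = b + 4 from by omega, show b + 6 - 3 = b + 3 from by omega, show b + 6 - 4 = b + 2 from by omega, show b + 6 - 5 = b + 1 from by omega, show b + 6 - 6 = b from by omega, show b + 6 - 7 = b - 1 from by omega, show b + 6 - 8 = b - 2 from by omega, show b + 6 - 9 = b - 3 from by omega, show b + 6 - 10 = b - 4 from by omega] at r6
  have r7 := G_rec_big (b + 7) (by omega) j
  simp only [show b + 7 - 1 = b + 6 from by omega, show b + 7 - 2 = b + 5 from by omega, show b + 7 - 3 = b + 4 from by omega, show b + 7 - 4 = b + 3 from by omega, show b + 7 - 5 = b + 2 from by omega, show b + 7 - 6 = b + 1 from by omega, show b + 7 - 7 = b from by omega, show b + 7 - 8 = b - 1 from by omega, show b + 7 - 9 = b - 2 from by omega, show b + 7 - 10 = b - 3 from by omega] at r7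
  have r8 := G_rec_big (b + 8) (by omega) j
  simp only [show b + 8 - 1 = b + 7 from by omega, show b + 8 - 2 = b + 6 from by omega, show b + 8 - 3 = b + 5 from by omega, show b + 8 - 4 = b + 4 from by omega, show b + 8 - 5 = b + 3 from by omega, show b + 8 - 6 = b + 2 from by omega, show b + 8 - 7 = b + 1 from by omega, show b + 8 - 8 = b from by omega, show b + 8 - 9 = b - 1 from by omega, show b + 8 - 10 = b - 2 from by omega] at r8
  have r9 := G_rec_big (b + 9) (by omega) j
  simp only [show b + 9 - 1 = b + 8 from by omega, show b + 9 - 2 = b + 7 from by omega, show b + 9 - 3 = b + 6 from by omega, show b + 9 - 4 = b + 5 from by omega, show b + 9 - 5 = b + 4 from by omega, show b + 9 - 6 = b + 3 from by omega, show b + 9 - 7 = b + 2 from by omega, show b + 9 - 8 = b + 1 from by omega, show b + 9 - 9 = b from by omega, show b + 9 - 10 = b - 1 from by omega] at r9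
  have e0 : 10 * G b j = (1) * G (b - 1) j + (1) * G (b - 2) j + (1) * G (b - 3) j + (1) * G (b - 4) j + (1) * G (b - 5) j + (1) * G (b - 6) j + (1) * G (b - 7) j + (1) * G (b - 8) j + (1) * G (b - 9) j + (1) * G (b - 10) j := by linear_combination 10 * r0
  have e1 : 100 * G (b + 1) j = (11) * G (b - 1) j + (11) * G (b - 2) j + (11) * G (b - 3) j + (11) * G (b - 4) j + (11) * G (b - 5) j + (11) * G (b - 6) j + (11) * G (b - 7) j + (11) * G (b - 8) j + (11) * G (b - 9) j + (1) * G (b - 10) j := by linear_combination 100 * r1 + 1 * e0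
  have e2 : 1000 * G (b + 2) j = (121) * G (b - 1) j + (121) * G (b - 2) j + (121) * G (b - 3) j + (121) * G (b - 4) j + (121) * G (b - 5) j + (121) * G (b - 6) j + (121) * G (b - 7) j + (121) * G (b - 8) j + (21) * G (b - 9) j + (11) * G (b - 10) j := by linear_combination 1000 * r2 + 10 * e0 + 1 * e1
  have e3 : 10000 * G (b + 3) j = (1331) * G (b - 1) j + (1331) * G (b - 2) j + (1331) * G (b - 3) j + (1331) * G (b - 4) j + (1331) * G (b - 5) j + (1331) * G (b - 6) j + (1331) * G (b - 7) j + (331) * G (b - 8) j + (231) * G (b - 9) j + (121) * G (b - 10) j := by linear_combination 10000 * r3 + 100 * e0 + 10 * e1 + 1 * e2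
  have e4 : 100000 * G (b + 4) j = (14641) * G (b - 1) j + (14641) * G (b - 2) j + (14641) * G (b - 3) j + (14641) * G (b - 4) j + (14641) * G (b - 5) j + (14641) * G (b - 6) j + (4641) * G (b - 7) j + (3641) * G (b - 8) j + (2541) * G (b - 9) j + (1331) * G (b - 10) j := by linear_combination 100000 * r4 + 1000 * e0 + 100 * e1 + 10 * e2 + 1 * e3
  have e5 : 1000000 * G (b + 5) j = (161051) * G (b - 1) j + (161051) * G (b - 2) j + (161051) * G (b - 3) j + (161051) * G (b - 4) j + (161051) * G (b - 5) j + (61051) * G (b - 6) j + (51051) * G (b - 7) j + (40051) * G (b - 8) j + (27951) * G (b - 9) j + (14641) * G (b - 10) j := by linear_combination 1000000 * r5 + 10000 * e0 + 1000 * e1 + 100 * e2 + 10 * e3 + 1 * e4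
  have e6 : 10000000 * G (b + 6) j = (1771561) * G (b - 1) j + (1771561) * G (b - 2) j + (1771561) * G (b - 3) j + (1771561) * G (b - 4) j + (771561) * G (b - 5) j + (671561) * G (b - 6) j + (561561) * G (b - 7) j + (440561) * G (b - 8) j + (307461) * G (b - 9) j + (161051) * G (b - 10) j := by linear_combination 10000000 * r6 + 100000 * e0 + 10000 * e1 + 1000 * e2 + 100 * e3 + 10 * e4 + 1 * e5
  have e7 : 100000000 * G (b + 7) j = (19487171) * G (b - 1) j + (19487171) * G (b - 2) j + (19487171) * G (b - 3) j + (9487171) * G (b - 4) j + (8487171) * G (b - 5) j + (7387171) * G (b - 6) j + (6177171) * G (b - 7) j + (4846171) * G (b - 8) j + (3382071) * G (b - 9) j + (1771561) * G (b - 10) j := by linear_combination 100000000 * r7 + 1000000 * e0 + 100000 * e1 + 10000 * e2 + 1000 * e3 + 100 * e4 + 10 * e5 + 1 * e6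
  have e8 : 1000000000 * G (b + 8) j = (214358881) * G (b - 1) j + (214358881) * G (b - 2) j + (114358881) * G (b - 3) j + (104358881) * G (b - 4) j + (93358881) * G (b - 5) j + (81258881) * G (b - 6) j + (67948881) * G (b - 7) j + (53307881) * G (b - 8) j + (37202781) * G (b - 9) j + (19487171) * G (b - 10) j := by linear_combination 1000000000 * r8 + 10000000 * e0 + 1000000 * e1 + 100000 * e2 + 10000 * e3 + 1000 * e4 + 100 * e5 + 10 * e6 + 1 * e7
  have e9 : 10000000000 * G (b + 9) j = (2357947691) * G (b - 1) j + (1357947691) * G (b - 2) j + (1257947691) * G (b - 3) j + (1147947691) * G (b - 4) j + (1026947691) * G (b - 5) j + (893847691) * G (b - 6) j + (747437691) * G (b - 7) j + (586386691) * G (b - 8) j + (409230591) * G (b - 9) j + (214358881) * G (b - 10) j := by linear_combination 10000000000 * r9 + 100000000 * e0 + 10000000 * e1 + 1000000 * e2 + 100000 * e3 + 10000 * e4 + 1000 * e5 + 100 * e6 + 10 * e7 + 1 * e8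
  have up0 : G b j ≤ ((1/10) * G (b - 1) j + (1/10) * G (b - 2) j + (1/10) * G (b - 3) j + (9/100) * G (b - 4) j + (7/100) * G (b - 5) j + (3/50) * G (b - 6) j + (1/25) * G (b - 7) j + (3/100) * G (b - 8) j + (1/50) * G (b - 9) j + (1/100) * G (b - 10) j) + (38/100) * MW b j := by
    linarith [e0, le_MW b 1 (show (1:ℕ) ∈ Finset.Icc 1 10 from by decide) j, le_MW b 2 (show (2:ℕ) ∈ Finset.Icc 1 10 from by decide) j, le_MW b 3 (show (3:ℕ) ∈ Finset.Icc 1 10 from by decide) j, le_MW b 4 (show (4:ℕ) ∈ Finset.Icc 1 10 from by decide) j, le_MW b 5 (show (5:ℕ) ∈ Finset.Icc 1 10 from by decide) j, le_MW b 6 (show (6:ℕ) ∈ Finset.Icc 1 10 from by decide) j, le_MW b 7 (show (7:ℕ) ∈ Finset.Icc 1 10 from by decide) j, le_MW b 8 (show (8:ℕ) ∈ Finset.Icc 1 10 from by decide) j, le_MW b 9 (show (9:ℕ) ∈ Finset.Icc 1 10 from by decide) j, le_MW b 10 (show (10:ℕ) ∈ Finset.Icc 1 10 from by decide) j]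
  have lo0 : ((1/10) * G (b - 1) j + (1/10) * G (b - 2) j + (1/10) * G (b - 3) j + (9/100) * G (b - 4) j + (7/100) * G (b - 5) j + (3/50) * G (b - 6) j + (1/25) * G (b - 7) j + (3/100) * G (b - 8) j + (1/50) * G (b - 9) j + (1/100) * G (b - 10) j) + (38/100) * mW b j ≤ G b j := by
    linarith [e0, mW_le b 1 (show (1:ℕ) ∈ Finset.Icc 1 10 from by decide) j, mW_le b 2 (show (2:ℕ) ∈ Finset.Icc 1 10 from by decide) j, mW_le b 3 (show (3:ℕ) ∈ Finset.Icc 1 10 from by decide) j, mW_le b 4 (show (4:ℕ) ∈ Finset.Icc 1 10 from by decide) j, mW_le b 5 (show (5:ℕ) ∈ Finset.Icc 1 10 from by decide) j, mW_le b 6 (show (6:ℕ) ∈ Finset.Icc 1 10 from by decide) j, mW_le b 7 (show (7:ℕ) ∈ Finset.Icc 1 10 from by decide) j, mW_le b 8 (show (8:ℕ) ∈ Finset.Icc 1 10 from by decide) j, mW_le b 9 (show (9:ℕ) ∈ Finset.Icc 1 10 from by decide) j, mW_le b 10 (show (10:ℕ) ∈ Finset.Icc 1 10 from by decide) j]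
  have up1 : G (b + 1) j ≤ ((1/10) * G (b - 1) j + (1/10) * G (b - 2) j + (1/10) * G (b - 3) j + (9/100) * G (b - 4) j + (7/100) * G (b - 5) j + (3/50) * G (b - 6) j + (1/25) * G (b - 7) j + (3/100) * G (b - 8) j + (1/50) * G (b - 9) j + (1/100) * G (b - 10) j) + (38/100) * MW b j := by
    linarith [e1, le_MW b 1 (show (1:ℕ) ∈ Finset.Icc 1 10 from by decide) j, le_MW b 2 (show (2:ℕ) ∈ Finset.Icc 1 10 from by decide) j, le_MW b 3 (show (3:ℕ) ∈ Finset.Icc 1 10 from by decide) j, le_MW b 4 (show (4:ℕ) ∈ Finset.Icc 1 10 from by decide) j, le_MW b 5 (show (5:ℕ) ∈ Finset.Icc 1 10 from by decide) j, le_MW b 6 (show (6:ℕ) ∈ Finset.Icc 1 10 from by decide) j, le_MW b 7 (show (7:ℕ) ∈ Finset.Icc 1 10 from by decide) j, le_MW b 8 (show (8:ℕ) ∈ Finset.Icc 1 10 from by decide) j, le_MW b 9 (show (9:ℕ) ∈ Finset.Icc 1 10 from by decide) j, le_MW b 10 (show (10:ℕ) ∈ Finset.Icc 1 10 from by decide)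 j]
  have lo1 : ((1/10) * G (b - 1) j + (1/10) * G (b - 2) j + (1/10) * G (b - 3) j + (9/100) * G (b - 4) j + (7/100) * G (b - 5) j + (3/50) * G (b - 6) j + (1/25) * G (b - 7) j + (3/100) * G (b - 8) j + (1/50) * G (b - 9) j + (1/100) * G (b - 10) j) + (38/100) * mW b j ≤ G (b + 1) j := by
    linarith [e1, mW_le b 1 (show (1:ℕ) ∈ Finset.Icc 1 10 from by decide) j, mW_le b 2 (show (2:ℕ) ∈ Finset.Icc 1 10 from by decide) j, mW_le b 3 (show (3:ℕ) ∈ Finset.Icc 1 10 from by decide) j, mW_le b 4 (show (4:ℕ) ∈ Finset.Icc 1 10 from by decide) j, mW_le b 5 (show (5:ℕ) ∈ Finset.Icc 1 10 from by decide) j, mW_le b 6 (show (6:ℕ) ∈ Finset.Icc 1 10 from by decide) j, mW_le b 7 (show (7:ℕ) ∈ Finset.Icc 1 10 from by decide) j, mW_le b 8 (show (8:ℕ) ∈ Finset.Icc 1 10 from by decide) j, mW_le b 9 (show (9:ℕ) ∈ Finset.Icc 1 10 from by decide) j, mW_le b 10 (show (10:ℕ) ∈ Finset.Icc 1 10 from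 by decide) j]
  have up2 : G (b + 2) j ≤ ((1/10) * G (b - 1) j + (1/10) * G (b - 2) j + (1/10) * G (b - 3) j + (9/100) * G (b - 4) j + (7/100) * G (b - 5) j + (3/50) * G (b - 6) j + (1/25) * G (b - 7) j + (3/100) * G (b - 8) j + (1/50) * G (b - 9) j + (1/100) * G (b - 10) j) + (38/100) * MW b j := by
    linarith [e2, le_MW b 1 (show (1:ℕ) ∈ Finset.Icc 1 10 from by decide) j, le_MW b 2 (show (2:ℕ) ∈ Finset.Icc 1 10 from by decide) j, le_MW b 3 (show (3:ℕ) ∈ Finset.Icc 1 10 from by decide) j, le_MW b 4 (show (4:ℕ) ∈ Finset.Icc 1 10 from by decide) j, le_MW b 5 (show (5:ℕ) ∈ Finset.Icc 1 10 from by decide) j, le_MW b 6 (show (6:ℕ) ∈ Finset.Icc 1 10 from by decide) j, le_MW b 7 (show (7:ℕ) ∈ Finset.Icc 1 10 from by decide) j, le_MW b 8 (show (8:ℕ) ∈ Finset.Icc 1 10 from by decide) j, le_MW b 9 (show (9:ℕ) ∈ Finset.Icc 1 10 from by decide) j, le_MW b 10 (show (10:ℕ) ∈ Finset.Icc 1 10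 from by decide) j]
  have lo2 : ((1/10) * G (b - 1) j + (1/10) * G (b - 2) j + (1/10) * G (b - 3) j + (9/100) * G (b - 4) j + (7/100) * G (b - 5) j + (3/50) * G (b - 6) j + (1/25) * G (b - 7) j + (3/100) * G (b - 8) j + (1/50) * G (b - 9) j + (1/100) * G (b - 10) j) + (38/100) * mW b j ≤ G (b + 2) j := by
    linarith [e2, mW_le b 1 (show (1:ℕ) ∈ Finset.Icc 1 10 from by decide) j, mW_le b 2 (show (2:ℕ) ∈ Finset.Icc 1 10 from by decide) j, mW_le b 3 (show (3:ℕ) ∈ Finset.Icc 1 10 from by decide) j, mW_le b 4 (show (4:ℕ) ∈ Finset.Icc 1 10 from by decide) j, mW_le b 5 (show (5:ℕ) ∈ Finset.Icc 1 10 from by decide) j, mW_le b 6 (show (6:ℕ) ∈ Finset.Icc 1 10 from by decide) j, mW_le b 7 (show (7:ℕ) ∈ Finset.Icc 1 10 from by decide) j, mW_le b 8 (show (8:ℕ) ∈ Finset.Icc 1 10 from by decide) j, mW_le b 9 (show (9:ℕ) ∈ Finset.Icc 1 10 from by decide) j, mW_le b 10 (show (10:ℕ) ∈ Finset.Icc 1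 10 from by decide) j]
  have up3 : G (b + 3) j ≤ ((1/10) * G (b - 1) j + (1/10) * G (b - 2) j + (1/10) * G (b - 3) j + (9/100) * G (b - 4) j + (7/100) * G (b - 5) j + (3/50) * G (b - 6) j + (1/25) * G (b - 7) j + (3/100) * G (b - 8) j + (1/50) * G (b - 9) j + (1/100) * G (b - 10) j) + (38/100) * MW b j := by
    linarith [e3, le_MW b 1 (show (1:ℕ) ∈ Finset.Icc 1 10 from by decide) j, le_MW b 2 (show (2:ℕ) ∈ Finset.Icc 1 10 from by decide) j, le_MW b 3 (show (3:ℕ) ∈ Finset.Icc 1 10 from by decide) j, le_MW b 4 (show (4:ℕ) ∈ Finset.Icc 1 10 from by decide) j, le_MW b 5 (show (5:ℕ) ∈ Finset.Icc 1 10 from by decide) j, le_MW b 6 (show (6:ℕ) ∈ Finset.Icc 1 10 from by decide) j, le_MW b 7 (show (7:ℕ) ∈ Finset.Icc 1 10 from by decide) j, le_MW b 8 (show (8:ℕ) ∈ Finset.Icc 1 10 from by decide) j, le_MW b 9 (show (9:ℕ) ∈ Finset.Icc 1 10 from by decide) j, le_MW b 10 (show (10:ℕ) ∈ Finset.Icc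 1 10 from by decide) j]
  have lo3 : ((1/10) * G (b - 1) j + (1/10) * G (b - 2) j + (1/10) * G (b - 3) j + (9/100) * G (b - 4) j + (7/100) * G (b - 5) j + (3/50) * G (b - 6) j + (1/25) * G (b - 7) j + (3/100) * G (b - 8) j + (1/50) * G (b - 9) j + (1/100) * G (b - 10) j) + (38/100) * mW b j ≤ G (b + 3) j := by
    linarith [e3, mW_le b 1 (show (1:ℕ) ∈ Finset.Icc 1 10 from by decide) j, mW_le b 2 (show (2:ℕ) ∈ Finset.Icc 1 10 from by decide) j, mW_le b 3 (show (3:ℕ) ∈ Finset.Icc 1 10 from by decide) j, mW_le b 4 (show (4:ℕ) ∈ Finset.Icc 1 10 from by decide) j, mW_le b 5 (show (5:ℕ) ∈ Finset.Icc 1 10 from by decide) j, mW_le b 6 (show (6:ℕ) ∈ Finset.Icc 1 10 from by decide) j, mW_le b 7 (show (7:ℕ) ∈ Finset.Icc 1 10 from by decide) j, mW_le b 8 (show (8:ℕ) ∈ Finset.Icc 1 10 from by decide) j, mW_le b 9 (show (9:ℕ) ∈ Finset.Icc 1 10 from by decide) j, mW_le b 10 (show (10:ℕ) ∈ Finset.Icc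 1 10 from by decide) j]
  have up4 : G (b + 4) j ≤ ((1/10) * G (b - 1) j + (1/10) * G (b - 2) j + (1/10) * G (b - 3) j + (9/100) * G (b - 4) j + (7/100) * G (b - 5) j + (3/50) * G (b - 6) j + (1/25) * G (b - 7) j + (3/100) * G (b - 8) j + (1/50) * G (b - 9) j + (1/100) * G (b - 10) j) + (38/100) * MW b j := by
    linarith [e4, le_MW b 1 (show (1:ℕ) ∈ Finset.Icc 1 10 from by decide) j, le_MW b 2 (show (2:ℕ) ∈ Finset.Icc 1 10 from by decide) j, le_MW b 3 (show (3:ℕ) ∈ Finset.Icc 1 10 from by decide) j, le_MW b 4 (show (4:ℕ) ∈ Finset.Icc 1 10 from by decide) j, le_MW b 5 (show (5:ℕ) ∈ Finset.Icc 1 10 from by decide) j, le_MW b 6 (show (6:ℕ) ∈ Finset.Icc 1 10 from by decide) j, le_MW b 7 (show (7:ℕ) ∈ Finset.Icc 1 10 from by decide) j, le_MW b 8 (show (8:ℕ) ∈ Finset.Icc 1 10 from by decide) j, le_MW b 9 (show (9:ℕ) ∈ Finset.Icc 1 10 from by decide) j, le_MW b 10 (show (10:ℕ) ∈ Finset.Icc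 1 10 from by decide) j]
  have lo4 : ((1/10) * G (b - 1) j + (1/10) * G (b - 2) j + (1/10) * G (b - 3) j + (9/100) * G (b - 4) j + (7/100) * G (b - 5) j + (3/50) * G (b - 6) j + (1/25) * G (b - 7) j + (3/100) * G (b - 8) j + (1/50) * G (b - 9) j + (1/100) * G (b - 10) j) + (38/100) * mW b j ≤ G (b + 4) j := by
    linarith [e4, mW_le b 1 (show (1:ℕ) ∈ Finset.Icc 1 10 from by decide) j, mW_le b 2 (show (2:ℕ) ∈ Finset.Icc 1 10 from by decide) j, mW_le b 3 (show (3:ℕ) ∈ Finset.Icc 1 10 from by decide) j, mW_le b 4 (show (4:ℕ) ∈ Finset.Icc 1 10 from by decide) j, mW_le b 5 (show (5:ℕ) ∈ Finset.Icc 1 10 from by decide) j, mW_le b 6 (show (6:ℕ) ∈ Finset.Icc 1 10 from by decide) j, mW_le b 7 (show (7:ℕ) ∈ Finset.Icc 1 10 from by decide) j, mW_le b 8 (show (8:ℕ) ∈ Finset.Icc 1 10 from by decide) j, mW_le b 9 (show (9:ℕ) ∈ Finset.Icc 1 10 from by decide) j, mW_le b 10 (show (10:ℕ) ∈ Finset.Icc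 1 10 from by decide) j]
  have up5 : G (b + 5) j ≤ ((1/10) * G (b - 1) j + (1/10) * G (b - 2) j + (1/10) * G (b - 3) j + (9/100) * G (b - 4) j + (7/100) * G (b - 5) j + (3/50) * G (b - 6) j + (1/25) * G (b - 7) j + (3/100) * G (b - 8) j + (1/50) * G (b - 9) j + (1/100) * G (b - 10) j) + (38/100) * MW b j := by
    linarith [e5, le_MW b 1 (show (1:ℕ) ∈ Finset.Icc 1 10 from by decide) j, le_MW b 2 (show (2:ℕ) ∈ Finset.Icc 1 10 from by decide) j, le_MW b 3 (show (3:ℕ) ∈ Finset.Icc 1 10 from by decide) j, le_MW b 4 (show (4:ℕ) ∈ Finset.Icc 1 10 from by decide) j, le_MW b 5 (show (5:ℕ) ∈ Finset.Icc 1 10 from by decide) j, le_MW b 6 (show (6:ℕ) ∈ Finset.Icc 1 10 from by decide) j, le_MW b 7 (show (7:ℕ) ∈ Finset.Icc 1 10 from by decide) j, le_MW b 8 (show (8:ℕ) ∈ Finset.Icc 1 10 from by decide) j, le_MW b 9 (show (9:ℕ) ∈ Finset.Icc 1 10 from by decide) j, le_MW b 10 (show (10:ℕ) ∈ Finset.Icc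 1 10 from by decide) j]
  have lo5 : ((1/10) * G (b - 1) j + (1/10) * G (b - 2) j + (1/10) * G (b - 3) j + (9/100) * G (b - 4) j + (7/100) * G (b - 5) j + (3/50) * G (b - 6) j + (1/25) * G (b - 7) j + (3/100) * G (b - 8) j + (1/50) * G (b - 9) j + (1/100) * G (b - 10) j) + (38/100) * mW b j ≤ G (b + 5) j := by
    linarith [e5, mW_le b 1 (show (1:ℕ) ∈ Finset.Icc 1 10 from by decide) j, mW_le b 2 (show (2:ℕ) ∈ Finset.Icc 1 10 from by decide) j, mW_le b 3 (show (3:ℕ) ∈ Finset.Icc 1 10 from by decide) j, mW_le b 4 (show (4:ℕ) ∈ Finset.Icc 1 10 from by decide) j, mW_le b 5 (show (5:ℕ) ∈ Finset.Icc 1 10 from by decide) j, mW_le b 6 (show (6:ℕ) ∈ Finset.Icc 1 10 from by decide) j, mW_le b 7 (show (7:ℕ) ∈ Finset.Icc 1 10 from by decide) j, mW_le b 8 (show (8:ℕ) ∈ Finset.Icc 1 10 from by decide) j, mW_le b 9 (show (9:ℕ) ∈ Finset.Icc 1 10 from by decide) j, mW_le b 10 (show (10:ℕ) ∈ Finset.Icc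 1 10 from by decide) j]
  have up6 : G (b + 6) j ≤ ((1/10) * G (b - 1) j + (1/10) * G (b - 2) j + (1/10) * G (b - 3) j + (9/100) * G (b - 4) j + (7/100) * G (b - 5) j + (3/50) * G (b - 6) j + (1/25) * G (b - 7) j + (3/100) * G (b - 8) j + (1/50) * G (b - 9) j + (1/100) * G (b - 10) j) + (38/100) * MW b j := by
    linarith [e6, le_MW b 1 (show (1:ℕ) ∈ Finset.Icc 1 10 from by decide) j, le_MW b 2 (show (2:ℕ) ∈ Finset.Icc 1 10 from by decide) j, le_MW b 3 (show (3:ℕ) ∈ Finset.Icc 1 10 from by decide) j, le_MW b 4 (show (4:ℕ) ∈ Finset.Icc 1 10 from by decide) j, le_MW b 5 (show (5:ℕ) ∈ Finset.Icc 1 10 from by decide) j, le_MW b 6 (show (6:ℕ) ∈ Finset.Icc 1 10 from by decide) j, le_MW b 7 (show (7:ℕ) ∈ Finset.Icc 1 10 from by decide) j, le_MW b 8 (show (8:ℕ) ∈ Finset.Icc 1 10 from by decide) j, le_MW b 9 (show (9:ℕ) ∈ Finset.Icc 1 10 from by decide) j, le_MW b 10 (show (10:ℕ) ∈ Finset.Icc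 1 10 from by decide) j]
  have lo6 : ((1/10) * G (b - 1) j + (1/10) * G (b - 2) j + (1/10) * G (b - 3) j + (9/100) * G (b - 4) j + (7/100) * G (b - 5) j + (3/50) * G (b - 6) j + (1/25) * G (b - 7) j + (3/100) * G (b - 8) j + (1/50) * G (b - 9) j + (1/100) * G (b - 10) j) + (38/100) * mW b j ≤ G (b + 6) j := by
    linarith [e6, mW_le b 1 (show (1:ℕ) ∈ Finset.Icc 1 10 from by decide) j, mW_le b 2 (show (2:ℕ) ∈ Finset.Icc 1 10 from by decide) j, mW_le b 3 (show (3:ℕ) ∈ Finset.Icc 1 10 from by decide) j, mW_le b 4 (show (4:ℕ) ∈ Finset.Icc 1 10 from by decide) j, mW_le b 5 (show (5:ℕ) ∈ Finset.Icc 1 10 from by decide) j, mW_le b 6 (show (6:ℕ) ∈ Finset.Icc 1 10 from by decide) j, mW_le b 7 (show (7:ℕ) ∈ Finset.Icc 1 10 from by decide) j, mW_le b 8 (show (8:ℕ) ∈ Finset.Icc 1 10 from by decide) j, mW_le b 9 (show (9:ℕ) ∈ Finset.Icc 1 10 from by decide) j, mW_le b 10 (show (10:ℕ) ∈ Finset.Icc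 1 10 from by decide) j]
  have up7 : G (b + 7) j ≤ ((1/10) * G (b - 1) j + (1/10) * G (b - 2) j + (1/10) * G (b - 3) j + (9/100) * G (b - 4) j + (7/100) * G (b - 5) j + (3/50) * G (b - 6) j + (1/25) * G (b - 7) j + (3/100) * G (b - 8) j + (1/50) * G (b - 9) j + (1/100) * G (b - 10) j) + (38/100) * MW b j := by
    linarith [e7, le_MW b 1 (show (1:ℕ) ∈ Finset.Icc 1 10 from by decide) j, le_MW b 2 (show (2:ℕ) ∈ Finset.Icc 1 10 from by decide) j, le_MW b 3 (show (3:ℕ) ∈ Finset.Icc 1 10 from by decide) j, le_MW b 4 (show (4:ℕ) ∈ Finset.Icc 1 10 from by decide) j, le_MW b 5 (show (5:ℕ) ∈ Finset.Icc 1 10 from by decide) j, le_MW b 6 (show (6:ℕ) ∈ Finset.Icc 1 10 from by decide) j, le_MW b 7 (show (7:ℕ) ∈ Finset.Icc 1 10 from by decide) j, le_MW b 8 (show (8:ℕ) ∈ Finset.Icc 1 10 from by decide) j, le_MW b 9 (show (9:ℕ) ∈ Finset.Icc 1 10 from by decide) j, le_MW b 10 (show (10:ℕ) ∈ Finset.Icc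 1 10 from by decide) j]
  have lo7 : ((1/10) * G (b - 1) j + (1/10) * G (b - 2) j + (1/10) * G (b - 3) j + (9/100) * G (b - 4) j + (7/100) * G (b - 5) j + (3/50) * G (b - 6) j + (1/25) * G (b - 7) j + (3/100) * G (b - 8) j + (1/50) * G (b - 9) j + (1/100) * G (b - 10) j) + (38/100) * mW b j ≤ G (b + 7) j := by
    linarith [e7, mW_le b 1 (show (1:ℕ) ∈ Finset.Icc 1 10 from by decide) j, mW_le b 2 (show (2:ℕ) ∈ Finset.Icc 1 10 from by decide) j, mW_le b 3 (show (3:ℕ) ∈ Finset.Icc 1 10 from by decide) j, mW_le b 4 (show (4:ℕ) ∈ Finset.Icc 1 10 from by decide) j, mW_le b 5 (show (5:ℕ) ∈ Finset.Icc 1 10 from by decide) j, mW_le b 6 (show (6:ℕ) ∈ Finset.Icc 1 10 from by decide) j, mW_le b 7 (show (7:ℕ) ∈ Finset.Icc 1 10 from by decide) j, mW_le b 8 (show (8:ℕ) ∈ Finset.Icc 1 10 from by decide) j, mW_le b 9 (show (9:ℕ) ∈ Finset.Icc 1 10 from by decide) j, mW_le b 10 (show (10:ℕ) ∈ Finset.Icc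 1 10 from by decide) j]
  have up8 : G (b + 8) j ≤ ((1/10) * G (b - 1) j + (1/10) * G (b - 2) j + (1/10) * G (b - 3) j + (9/100) * G (b - 4) j + (7/100) * G (b - 5) j + (3/50) * G (b - 6) j + (1/25) * G (b - 7) j + (3/100) * G (b - 8) j + (1/50) * G (b - 9) j + (1/100) * G (b - 10) j) + (38/100) * MW b j := by
    linarith [e8, le_MW b 1 (show (1:ℕ) ∈ Finset.Icc 1 10 from by decide) j, le_MW b 2 (show (2:ℕ) ∈ Finset.Icc 1 10 from by decide) j, le_MW b 3 (show (3:ℕ) ∈ Finset.Icc 1 10 from by decide) j, le_MW b 4 (show (4:ℕ) ∈ Finset.Icc 1 10 from by decide) j, le_MW b 5 (show (5:ℕ) ∈ Finset.Icc 1 10 from by decide) j, le_MW b 6 (show (6:ℕ) ∈ Finset.Icc 1 10 from by decide) j, le_MW b 7 (show (7:ℕ) ∈ Finset.Icc 1 10 from by decide) j, le_MW b 8 (show (8:ℕ) ∈ Finset.Icc 1 10 from by decide) j, le_MW b 9 (show (9:ℕ) ∈ Finset.Icc 1 10 from by decide) j, le_MW b 10 (show (10:ℕ) ∈ Finset.Icc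 1 10 from by decide) j]
  have lo8 : ((1/10) * G (b - 1) j + (1/10) * G (b - 2) j + (1/10) * G (b - 3) j + (9/100) * G (b - 4) j + (7/100) * G (b - 5) j + (3/50) * G (b - 6) j + (1/25) * G (b - 7) j + (3/100) * G (b - 8) j + (1/50) * G (b - 9) j + (1/100) * G (b - 10) j) + (38/100) * mW b j ≤ G (b + 8) j := by
    linarith [e8, mW_le b 1 (show (1:ℕ) ∈ Finset.Icc 1 10 from by decide) j, mW_le b 2 (show (2:ℕ) ∈ Finset.Icc 1 10 from by decide) j, mW_le b 3 (show (3:ℕ) ∈ Finset.Icc 1 10 from by decide) j, mW_le b 4 (show (4:ℕ) ∈ Finset.Icc 1 10 from by decide) j, mW_le b 5 (show (5:ℕ) ∈ Finset.Icc 1 10 from by decide) j, mW_le b 6 (show (6:ℕ) ∈ Finset.Icc 1 10 from by decide) j, mW_le b 7 (show (7:ℕ) ∈ Finset.Icc 1 10 from by decide) j, mW_le b 8 (show (8:ℕ) ∈ Finset.Icc 1 10 from by decide) j, mW_le b 9 (show (9:ℕ) ∈ Finset.Icc 1 10 from by decide) j, mW_le b 10 (show (10:ℕ) ∈ Finset.Icc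 1 10 from by decide) j]
  have up9 : G (b + 9) j ≤ ((1/10) * G (b - 1) j + (1/10) * G (b - 2) j + (1/10) * G (b - 3) j + (9/100) * G (b - 4) j + (7/100) * G (b - 5) j + (3/50) * G (b - 6) j + (1/25) * G (b - 7) j + (3/100) * G (b - 8) j + (1/50) * G (b - 9) j + (1/100) * G (b - 10) j) + (38/100) * MW b j := by
    linarith [e9, le_MW b 1 (show (1:ℕ) ∈ Finset.Icc 1 10 from by decide) j, le_MW b 2 (show (2:ℕ) ∈ Finset.Icc 1 10 from by decide) j, le_MW b 3 (show (3:ℕ) ∈ Finset.Icc 1 10 from by decide) j, le_MW b 4 (show (4:ℕ) ∈ Finset.Icc 1 10 from by decide) j, le_MW b 5 (show (5:ℕ) ∈ Finset.Icc 1 10 from by decide) j, le_MW b 6 (show (6:ℕ) ∈ Finset.Icc 1 10 from by decide) j, le_MW b 7 (show (7:ℕ) ∈ Finset.Icc 1 10 from by decide) j, le_MW b 8 (show (8:ℕ) ∈ Finset.Icc 1 10 from by decide) j, le_MW b 9 (show (9:ℕ) ∈ Finset.Icc 1 10 from by decide) j, le_MW b 10 (show (10:ℕ) ∈ Finset.Icc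 1 10 from by decide) j]
  have lo9 : ((1/10) * G (b - 1) j + (1/10) * G (b - 2) j + (1/10) * G (b - 3) j + (9/100) * G (b - 4) j + (7/100) * G (b - 5) j + (3/50) * G (b - 6) j + (1/25) * G (b - 7) j + (3/100) * G (b - 8) j + (1/50) * G (b - 9) j + (1/100) * G (b - 10) j) + (38/100) * mW b j ≤ G (b + 9) j := by
    linarith [e9, mW_le b 1 (show (1:ℕ) ∈ Finset.Icc 1 10 from by decide) j, mW_le b 2 (show (2:ℕ) ∈ Finset.Icc 1 10 from by decide) j, mW_le b 3 (show (3:ℕ) ∈ Finset.Icc 1 10 from by decide) j, mW_le b 4 (show (4:ℕ) ∈ Finset.Icc 1 10 from by decide) j, mW_le b 5 (show (5:ℕ) ∈ Finset.Icc 1 10 from by decide) j, mW_le b 6 (show (6:ℕ) ∈ Finset.Icc 1 10 from by decide) j, mW_le b 7 (show (7:ℕ) ∈ Finset.Icc 1 10 from by decide) j, mW_le b 8 (show (8:ℕ) ∈ Finset.Icc 1 10 from by decide) j, mW_le b 9 (show (9:ℕ) ∈ Finset.Icc 1 10 from by decide) j, mW_le b 10 (show (10:ℕ) ∈ Finset.Icc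 1 10 from by decide) j]
  have hup : MW (b+10) j ≤ ((1/10) * G (b - 1) j + (1/10) * G (b - 2) j + (1/10) * G (b - 3) j + (9/100) * G (b - 4) j + (7/100) * G (b - 5) j + (3/50) * G (b - 6) j + (1/25) * G (b - 7) j + (3/100) * G (b - 8) j + (1/50) * G (b - 9) j + (1/100) * G (b - 10) j) + (38/100) * MW b j := by
    apply MW_le_of
    intro d hd
    obtain ⟨hd1, hd2⟩ := Finset.mem_Icc.mp hd
    interval_cases d
    · rw [show b + 10 - 1 = b + 9 from by omega]; exact up9
    · rw [show b + 10 - 2 = b + 8 from by omega]; exact up8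
    · rw [show b + 10 - 3 = b + 7 from by omega]; exact up7
    · rw [show b + 10 - 4 = b + 6 from by omega]; exact up6
    · rw [show b + 10 - 5 = b + 5 from by omega]; exact up5
    · rw [show b + 10 - 6 = b + 4 from by omega]; exact up4
    · rw [show b + 10 - 7 = b + 3 from by omega]; exact up3
    · rw [show b + 10 - 8 = b + 2 from by omega]; exact up2
    · rw [show b + 10 - 9 = b + 1 from by omega]; exact up1
    · rw [show b + 10 - 10 = b from by omega]; exact up0
  have hlo : ((1/10) * G (b - 1) j + (1/10) * G (b - 2) j + (1/10) * G (b - 3) j + (9/100) * G (b - 4) j + (7/100) * G (b - 5) j + (3/50) * G (b - 6) j + (1/25) * G (b - 7) j + (3/100) * G (b - 8) j + (1/50) * G (b - 9) j + (1/100) * G (b - 10) j) + (38/100) * mW b j ≤ mW (b+10) j := by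
    apply le_mW_of
    intro d hd
    obtain ⟨hd1, hd2⟩ := Finset.mem_Icc.mp hd
    interval_cases d
    · rw [show b + 10 - 1 = b + 9 from by omega]; exact lo9
    · rw [show b + 10 - 2 = b + 8 from by omega]; exact lo8
    · rw [show b + 10 - 3 = b + 7 from by omega]; exact lo7
    · rw [show b + 10 - 4 = b + 6 from by omega]; exact lo6
    · rw [show b + 10 - 5 = b + 5 from by omega]; exact lo5
    · rw [show b + 10 - 6 = b + 4 from by omega]; exact lo4
    · rw [show b + 10 - 7 = b + 3 from by omega]; exact lo3
    · rw [show b + 10 - 8 = b + 2 from by omega]; exact lo2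
    · rw [show b + 10 - 9 = b + 1 from by omega]; exact lo1
    · rw [show b + 10 - 10 = b from by omega]; exact lo0
  linarith

lemma block_pow (K : ℕ) (b : ℕ) (hb : 11 ≤ b) (j : ℤ) :
    MW (b + 10*K) j - mW (b + 10*K) j ≤ (38/100)^K * (MW b j - mW b j) := by
  induction K with
  | zero => simp
  | succ n ih =>
    have h1 : MW (b + 10*(n+1)) j - mW (b + 10*(n+1)) j ≤ (38/100) * (MW (b + 10*n) j - mW (b + 10*n) j) := by
      have := block (b + 10*n) (by omega) j
      rw [show b + 10*n + 10 = b + 10*(n+1) from by omega] at this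
      exact this
    have h2 : (0:ℝ) ≤ (38/100)^n := by positivity
    calc MW (b + 10*(n+1)) j - mW (b + 10*(n+1)) j ≤ (38/100) * (MW (b + 10*n) j - mW (b + 10*n) j) := h1
    _ ≤ (38/100) * ((38/100)^n * (MW b j - mW b j)) := by nlinarith [ih]
    _ = (38/100)^(n+1) * (MW b j - mW b j) := by ring

/-- One step of the Dynkin process with endpoint `N`: from `x < N`, jump forward by a
uniformly random amount in `{1, …, 10}`; from `x ≥ N`, stay put. -/
noncomputable def dynkinStep (N : ℕ) (x : ℤ) : PMF ℤ :=
  if x < (N : ℤ) then (PMF.uniformOfFintype (Fin 10)).map fun r => x + (r : ℤ) + 1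
  else PMF.pure x

lemma dynkinStep_ge (N : ℕ) (x : ℤ) (hx : (N:ℤ) ≤ x) : dynkinStep N x = PMF.pure x := by
  rw [dynkinStep, if_neg (not_lt.mpr hx)]

lemma dynkinStep_apply (N : ℕ) (x y : ℤ) (hx : x < (N:ℤ)) :
    dynkinStep N x y = if x + 1 ≤ y ∧ y ≤ x + 10 then (10:ℝ≥0∞)⁻¹ else 0 := by
  rw [dynkinStep, if_pos hx, PMF.map_apply]
  rw [tsum_eq_single (y - x - 1) (fun b hb => by
    rw [if_neg]
    intro hc
    exact hb (by omega))]
  rw [if_pos (by ring)]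
  show ((PMF.uniformOfFintype (Fin 10)).bind (fun a => PMF.pure (((a:ℕ):ℤ)))) (y - x - 1) = _
  rw [PMF.bind_apply, tsum_fintype]
  simp only [PMF.pure_apply, PMF.uniformOfFintype_apply, Fintype.card_fin]
  by_cases h : x + 1 ≤ y ∧ y ≤ x + 10
  · rw [if_pos h]
    have hmem : (y - x - 1).toNat < 10 := by omega
    rw [Finset.sum_eq_single (⟨(y - x - 1).toNat, hmem⟩ : Fin 10)]
    · rw [if_pos (by push_cast; omega)]
      norm_num
    · intro b _ hb
      rw [if_neg, mul_zero]
      intro hc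
      apply hb
      have hb10 : (b:ℕ) < 10 := b.2
      apply Fin.ext
      simp only [Fin.val_mk]
      omega
    · intro hmem'; exact absurd (Finset.mem_univ _) hmem'
  · rw [if_neg h]
    apply Finset.sum_eq_zero
    intro r _
    rw [if_neg, mul_zero]
    intro hc
    have hr10 : (r:ℕ) < 10 := r.2
    exact h (by constructor <;> omega)

lemma iter_zero {Ω : Type*} (f : Ω → PMF Ω) (s : Ω) : iter f 0 s = PMF.pure s := rfl

lemma iter_succ {Ω : Type*} (f : Ω → PMF Ω) (t : ℕ) (s : Ω) :
    iter f (t+1) s = (iter f t s).bind f := rfl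

lemma iter_support (N : ℕ) (t : ℕ) : ∀ (s x : ℤ),
    x ∈ (iter (dynkinStep N) t s).support → s + t ≤ x ∨ (N:ℤ) ≤ x := by
  induction t with
  | zero =>
    intro s x hx
    rw [iter_zero, PMF.support_pure] at hx
    left; simp at hx; omega
  | succ n ih =>
    intro s x hx
    rw [iter_succ, PMF.support_bind] at hx
    simp only [Set.mem_iUnion] at hx
    obtain ⟨y, hy, hxy⟩ := hx
    rcases lt_or_ge y (N:ℤ) with h | h
    · have hne := (PMF.mem_support_iff _ _).mp hxy
      rw [dynkinStep_apply N y x h] at hne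
      have hcond : y + 1 ≤ x ∧ x ≤ y + 10 := by
        by_contra hc
        rw [if_neg hc] at hne
        exact hne rfl
      rcases ih s y hy with h2 | h2
      · left; push_cast; omega
      · right; omega
    · rw [dynkinStep_ge N y h, PMF.support_pure] at hxy
      simp at hxy
      right; omega

lemma bind_absorbed (N : ℕ) (μ : PMF ℤ) (h : ∀ x ∈ μ.support, (N:ℤ) ≤ x) :
    μ.bind (dynkinStep N) = μ := by
  have h2 : μ.bind (dynkinStep N) = μ.bind PMF.pure := by
    ext x
    rw [PMF.bind_apply, PMF.bind_apply]
    apply tsum_congr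
    intro y
    by_cases hy : y ∈ μ.support
    · rw [dynkinStep_ge N y (h y hy)]
    · have h0 : μ y = 0 := (PMF.apply_eq_zero_iff _ _).mpr hy
      rw [h0, zero_mul, zero_mul]
  rw [h2, PMF.bind_pure]

lemma iter_pure (N : ℕ) (t : ℕ) (s : ℤ) (hs : (N:ℤ) ≤ s) :
    iter (dynkinStep N) t s = PMF.pure s := by
  induction t with
  | zero => rfl
  | succ n ih =>
    rw [iter_succ, ih, PMF.pure_bind, dynkinStep_ge N s hs]

lemma iter_succ_left {Ω : Type*} (f : Ω → PMF Ω) (t : ℕ) (s : Ω) :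
    iter f (t+1) s = (f s).bind (fun y => iter f t y) := by
  induction t generalizing s with
  | zero =>
    rw [iter_succ, iter_zero, PMF.pure_bind]
    have : ∀ y, iter f 0 y = PMF.pure y := fun y => rfl
    simp only [this, PMF.bind_pure]
  | succ n ih =>
    rw [iter_succ, ih s, PMF.bind_bind]
    apply congrArg
    funext y
    rw [← iter_succ]

lemma iter_N_eq (N : ℕ) (hN : 1 ≤ N) (y : ℤ) (hy : 1 ≤ y) :
    iter (dynkinStep N) N y = iter (dynkinStep N) (N-1) y := by
  have h : ∀ x ∈ (iter (dynkinStep N) (N-1) y).support, (N:ℤ) ≤ x := by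
    intro x hx
    rcases iter_support N (N-1) y x hx with h | h
    · have hc : ((N-1 : ℕ) : ℤ) = (N:ℤ) - 1 := by push_cast [Nat.cast_sub hN]; ring
      omega
    · exact h
  have h2 := bind_absorbed N (iter (dynkinStep N) (N-1) y) h
  rw [← iter_succ] at h2
  rw [show N - 1 + 1 = N from by omega] at h2
  exact h2

noncomputable def q (N : ℕ) (y : ℤ) (x : ℤ) : ℝ :=
  if (N:ℤ) ≤ y then (if x = y then 1 else 0) else G ((N:ℤ) - y).toNat (x - N)

lemma q_nonneg (N : ℕ) (y x : ℤ) : 0 ≤ q N y x := by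
  rw [q]
  split_ifs
  · norm_num
  · norm_num
  · exact G_nonneg _ _

lemma sum_Icc_ten_int (f : ℤ → ℝ) : ∑ k ∈ Finset.Icc (1:ℤ) 10, f k =
    f 1 + f 2 + f 3 + f 4 + f 5 + f 6 + f 7 + f 8 + f 9 + f 10 := by
  rw [show (Finset.Icc (1:ℤ) 10 : Finset ℤ) = {1,2,3,4,5,6,7,8,9,10} from by decide]
  simp [Finset.sum_insert, Finset.mem_insert]
  ring

lemma q_rec (N : ℕ) (s : ℤ) (hs1 : 1 ≤ s) (hsN : s < (N:ℤ)) (x : ℤ) :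
    q N s x = (1/10) * ∑ y ∈ Finset.Icc (s+1) (s+10), q N y x := by
  have hmap : Finset.Icc (s+1) (s+10) = Finset.map (addLeftEmbedding s) (Finset.Icc (1:ℤ) 10) := by
    rw [Finset.map_add_left_Icc]
  rw [hmap, Finset.sum_map]
  simp only [addLeftEmbedding_apply]
  rw [sum_Icc_ten_int (fun k => q N (s + k) x)]
  have hn : ((N:ℤ) - s).toNat ≠ 0 := by omega
  conv_lhs => rw [q, if_neg (by omega)]
  rw [G_succ _ hn (x - N), sum_Icc_ten (fun k => if ((N:ℤ) - s).toNat ≤ k then (if x - N = (k : ℤ) - (((N:ℤ) - s).toNat : ℤ) then 1 else 0) else G (((N:ℤ) - s).toNat - k) (x - N))]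
  have t1 : q N (s + 1) x = (if ((N:ℤ) - s).toNat ≤ 1 then (if x - N = (1 : ℤ) - (((N:ℤ) - s).toNat : ℤ) then (1:ℝ) else 0) else G (((N:ℤ) - s).toNat - 1) (x - N)) := by
    rw [q]
    by_cases hk : ((N:ℤ) - s).toNat ≤ 1
    · rw [if_pos (by omega), if_pos hk]
      exact if_congr (by omega) rfl rfl
    · rw [if_neg (by omega), if_neg hk]
      congr 1
      omega
  have t2 : q N (s + 2) x = (if ((N:ℤ) - s).toNat ≤ 2 then (if x - N = (2 : ℤ) - (((N:ℤ) - s).toNat : ℤ) then (1:ℝ) else 0) else G (((N:ℤ) - s).toNat - 2) (x - N)) := by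
    rw [q]
    by_cases hk : ((N:ℤ) - s).toNat ≤ 2
    · rw [if_pos (by omega), if_pos hk]
      exact if_congr (by omega) rfl rfl
    · rw [if_neg (by omega), if_neg hk]
      congr 1
      omega
  have t3 : q N (s + 3) x = (if ((N:ℤ) - s).toNat ≤ 3 then (if x - N = (3 : ℤ) - (((N:ℤ) - s).toNat : ℤ) then (1:ℝ) else 0) else G (((N:ℤ) - s).toNat - 3) (x - N)) := by
    rw [q]
    by_cases hk : ((N:ℤ) - s).toNat ≤ 3
    · rw [if_pos (by omega), if_pos hk]
      exact if_congr (by omega) rfl rfl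
    · rw [if_neg (by omega), if_neg hk]
      congr 1
      omega
  have t4 : q N (s + 4) x = (if ((N:ℤ) - s).toNat ≤ 4 then (if x - N = (4 : ℤ) - (((N:ℤ) - s).toNat : ℤ) then (1:ℝ) else 0) else G (((N:ℤ) - s).toNat - 4) (x - N)) := by
    rw [q]
    by_cases hk : ((N:ℤ) - s).toNat ≤ 4
    · rw [if_pos (by omega), if_pos hk]
      exact if_congr (by omega) rfl rfl
    · rw [if_neg (by omega), if_neg hk]
      congr 1
      omega
  have t5 : q N (s + 5) x = (if ((N:ℤ) - s).toNat ≤ 5 then (if x - N = (5 : ℤ) - (((N:ℤ) - s).toNat : ℤ) then (1:ℝ) else 0) else G (((N:ℤ) - s).toNat - 5) (x - N)) := by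
    rw [q]
    by_cases hk : ((N:ℤ) - s).toNat ≤ 5
    · rw [if_pos (by omega), if_pos hk]
      exact if_congr (by omega) rfl rfl
    · rw [if_neg (by omega), if_neg hk]
      congr 1
      omega
  have t6 : q N (s + 6) x = (if ((N:ℤ) - s).toNat ≤ 6 then (if x - N = (6 : ℤ) - (((N:ℤ) - s).toNat : ℤ) then (1:ℝ) else 0) else G (((N:ℤ) - s).toNat - 6) (x - N)) := by
    rw [q]
    by_cases hk : ((N:ℤ) - s).toNat ≤ 6
    · rw [if_pos (by omega), if_pos hk]
      exact if_congr (by omega) rfl rfl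
    · rw [if_neg (by omega), if_neg hk]
      congr 1
      omega
  have t7 : q N (s + 7) x = (if ((N:ℤ) - s).toNat ≤ 7 then (if x - N = (7 : ℤ) - (((N:ℤ) - s).toNat : ℤ) then (1:ℝ) else 0) else G (((N:ℤ) - s).toNat - 7) (x - N)) := by
    rw [q]
    by_cases hk : ((N:ℤ) - s).toNat ≤ 7
    · rw [if_pos (by omega), if_pos hk]
      exact if_congr (by omega) rfl rfl
    · rw [if_neg (by omega), if_neg hk]
      congr 1
      omega
  have t8 : q N (s + 8) x = (if ((N:ℤ) - s).toNat ≤ 8 then (if x - N = (8 : ℤ) - (((N:ℤ) - s).toNat : ℤ) then (1:ℝ) else 0) else G (((N:ℤ) - s).toNat - 8) (x - N)) := by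
    rw [q]
    by_cases hk : ((N:ℤ) - s).toNat ≤ 8
    · rw [if_pos (by omega), if_pos hk]
      exact if_congr (by omega) rfl rfl
    · rw [if_neg (by omega), if_neg hk]
      congr 1
      omega
  have t9 : q N (s + 9) x = (if ((N:ℤ) - s).toNat ≤ 9 then (if x - N = (9 : ℤ) - (((N:ℤ) - s).toNat : ℤ) then (1:ℝ) else 0) else G (((N:ℤ) - s).toNat - 9) (x - N)) := by
    rw [q]
    by_cases hk : ((N:ℤ) - s).toNat ≤ 9
    · rw [if_pos (by omega), if_pos hk]
      exact if_congr (by omega) rfl rfl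
    · rw [if_neg (by omega), if_neg hk]
      congr 1
      omega
  have t10 : q N (s + 10) x = (if ((N:ℤ) - s).toNat ≤ 10 then (if x - N = (10 : ℤ) - (((N:ℤ) - s).toNat : ℤ) then (1:ℝ) else 0) else G (((N:ℤ) - s).toNat - 10) (x - N)) := by
    rw [q]
    by_cases hk : ((N:ℤ) - s).toNat ≤ 10
    · rw [if_pos (by omega), if_pos hk]
      exact if_congr (by omega) rfl rfl
    · rw [if_neg (by omega), if_neg hk]
      congr 1
      omega
  rw [t1, t2, t3, t4, t5, t6, t7, t8, t9, t10]
  push_cast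
  rfl

lemma iter_q (N : ℕ) (hN : 1 ≤ N) : ∀ (n : ℕ) (s : ℤ), 1 ≤ s → ((N:ℤ) - s).toNat ≤ n →
    ∀ x, (iter (dynkinStep N) N s) x = ENNReal.ofReal (q N s x) := by
  intro n
  induction n with
  | zero =>
    intro s hs h0 x
    have hNs : (N:ℤ) ≤ s := by omega
    rw [iter_pure N N s hNs, q, if_pos hNs, PMF.pure_apply]
    split_ifs <;> simp
  | succ n ih =>
    intro s hs hn x
    by_cases hNs : (N:ℤ) ≤ s
    · rw [iter_pure N N s hNs, q, if_pos hNs, PMF.pure_apply]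
      split_ifs <;> simp
    · push_neg at hNs
      have h1 : iter (dynkinStep N) N s = (dynkinStep N s).bind (fun y => iter (dynkinStep N) N y) := by
        conv_lhs => rw [show N = (N-1)+1 from by omega, iter_succ_left]
        rw [show N - 1 + 1 = N from by omega]
        ext z
        rw [PMF.bind_apply, PMF.bind_apply]
        apply tsum_congr
        intro y
        by_cases hy : s + 1 ≤ y ∧ y ≤ s + 10
        · rw [iter_N_eq N hN y (by omega)]
        · rw [dynkinStep_apply N s y hNs, if_neg hy, zero_mul, zero_mul]
      rw [h1, PMF.bind_apply]
      have hterm : ∀ y, (dynkinStep N s) y * (iter (dynkinStep N) N y) x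
          = (if y ∈ Finset.Icc (s+1) (s+10) then (10:ℝ≥0∞)⁻¹ * ENNReal.ofReal (q N y x) else 0) := by
        intro y
        rw [dynkinStep_apply N s y hNs]
        by_cases hy : s + 1 ≤ y ∧ y ≤ s + 10
        · rw [if_pos hy, if_pos (Finset.mem_Icc.mpr hy), ih y (by omega) (by omega) x]
        · rw [if_neg hy, if_neg (fun hc => hy (Finset.mem_Icc.mp hc)), zero_mul]
      rw [tsum_congr hterm, tsum_eq_sum (s := Finset.Icc (s+1) (s+10)) (fun y hy => if_neg hy)]
      have hsum : ∑ y ∈ Finset.Icc (s+1) (s+10),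
          (if y ∈ Finset.Icc (s+1) (s+10) then (10:ℝ≥0∞)⁻¹ * ENNReal.ofReal (q N y x) else 0)
          = ∑ y ∈ Finset.Icc (s+1) (s+10), ENNReal.ofReal ((1/10) * q N y x) := by
        apply Finset.sum_congr rfl
        intro y hy
        rw [if_pos hy, ENNReal.ofReal_mul (by norm_num), show ENNReal.ofReal (1/10) = (10:ℝ≥0∞)⁻¹ from by
          rw [ENNReal.ofReal_div_of_pos (by norm_num), ENNReal.ofReal_one, ENNReal.ofReal_ofNat, one_div]]
      rw [hsum, ← ENNReal.ofReal_sum_of_nonneg (fun y _ => mul_nonneg (by norm_num) (q_nonneg N y x))]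
      rw [← Finset.mul_sum, ← q_rec N s hs hNs x]


lemma iter_apply (N : ℕ) (hN : 10 < N) (s : ℤ) (hs1 : 1 ≤ s) (hs10 : s ≤ 10) (x : ℤ) :
    (iter (dynkinStep N) N s) x = ENNReal.ofReal (G ((N:ℤ) - s).toNat (x - N)) := by
  have h := iter_q N (by omega) ((N:ℤ) - s).toNat s hs1 (le_refl _) x
  rw [h, q, if_neg (by omega)]

lemma base21_sum (j : ℤ) : MW 21 j - mW 21 j ≤ (1/10) * ∑ m ∈ Finset.Icc (1:ℕ) 19, G m j := by
  have hm : 0 ≤ mW 21 j := mW_nonneg _ _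
  have hM : MW 21 j ≤ (1/10) * ∑ m ∈ Finset.Icc (1:ℕ) 19, G m j := by
    apply MW_le_of
    intro d hd
    obtain ⟨hd1, hd2⟩ := Finset.mem_Icc.mp hd
    interval_cases d
    · rw [show (21 - 1 : ℕ) = 20 from rfl]
      have hr := G_rec_big 20 (by norm_num) j
      norm_num at hr
      rw [sum_Icc_nineteen]
      linarith [hr, G_nonneg 1 j, G_nonneg 2 j, G_nonneg 3 j, G_nonneg 4 j, G_nonneg 5 j, G_nonneg 6 j, G_nonneg 7 j, G_nonneg 8 j, G_nonneg 9 j, G_nonneg 10 j, G_nonneg 11 j, G_nonneg 12 j, G_nonneg 13 j, G_nonneg 14 j, G_nonneg 15 j, G_nonneg 16 j, G_nonneg 17 j, G_nonneg 18 j, G_nonneg 19 j]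
    · rw [show (21 - 2 : ℕ) = 19 from rfl]
      have hr := G_rec_big 19 (by norm_num) j
      norm_num at hr
      rw [sum_Icc_nineteen]
      linarith [hr, G_nonneg 1 j, G_nonneg 2 j, G_nonneg 3 j, G_nonneg 4 j, G_nonneg 5 j, G_nonneg 6 j, G_nonneg 7 j, G_nonneg 8 j, G_nonneg 9 j, G_nonneg 10 j, G_nonneg 11 j, G_nonneg 12 j, G_nonneg 13 j, G_nonneg 14 j, G_nonneg 15 j, G_nonneg 16 j, G_nonneg 17 j, G_nonneg 18 j, G_nonneg 19 j]
    · rw [show (21 - 3 : ℕ) = 18 from rfl]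
      have hr := G_rec_big 18 (by norm_num) j
      norm_num at hr
      rw [sum_Icc_nineteen]
      linarith [hr, G_nonneg 1 j, G_nonneg 2 j, G_nonneg 3 j, G_nonneg 4 j, G_nonneg 5 j, G_nonneg 6 j, G_nonneg 7 j, G_nonneg 8 j, G_nonneg 9 j, G_nonneg 10 j, G_nonneg 11 j, G_nonneg 12 j, G_nonneg 13 j, G_nonneg 14 j, G_nonneg 15 j, G_nonneg 16 j, G_nonneg 17 j, G_nonneg 18 j, G_nonneg 19 j]
    · rw [show (21 - 4 : ℕ) = 17 from rfl]
      have hr := G_rec_big 17 (by norm_num) j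
      norm_num at hr
      rw [sum_Icc_nineteen]
      linarith [hr, G_nonneg 1 j, G_nonneg 2 j, G_nonneg 3 j, G_nonneg 4 j, G_nonneg 5 j, G_nonneg 6 j, G_nonneg 7 j, G_nonneg 8 j, G_nonneg 9 j, G_nonneg 10 j, G_nonneg 11 j, G_nonneg 12 j, G_nonneg 13 j, G_nonneg 14 j, G_nonneg 15 j, G_nonneg 16 j, G_nonneg 17 j, G_nonneg 18 j, G_nonneg 19 j]
    · rw [show (21 - 5 : ℕ) = 16 from rfl]
      have hr := G_rec_big 16 (by norm_num) j
      norm_num at hr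
      rw [sum_Icc_nineteen]
      linarith [hr, G_nonneg 1 j, G_nonneg 2 j, G_nonneg 3 j, G_nonneg 4 j, G_nonneg 5 j, G_nonneg 6 j, G_nonneg 7 j, G_nonneg 8 j, G_nonneg 9 j, G_nonneg 10 j, G_nonneg 11 j, G_nonneg 12 j, G_nonneg 13 j, G_nonneg 14 j, G_nonneg 15 j, G_nonneg 16 j, G_nonneg 17 j, G_nonneg 18 j, G_nonneg 19 j]
    · rw [show (21 - 6 : ℕ) = 15 from rfl]
      have hr := G_rec_big 15 (by norm_num) j
      norm_num at hr
      rw [sum_Icc_nineteen]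
      linarith [hr, G_nonneg 1 j, G_nonneg 2 j, G_nonneg 3 j, G_nonneg 4 j, G_nonneg 5 j, G_nonneg 6 j, G_nonneg 7 j, G_nonneg 8 j, G_nonneg 9 j, G_nonneg 10 j, G_nonneg 11 j, G_nonneg 12 j, G_nonneg 13 j, G_nonneg 14 j, G_nonneg 15 j, G_nonneg 16 j, G_nonneg 17 j, G_nonneg 18 j, G_nonneg 19 j]
    · rw [show (21 - 7 : ℕ) = 14 from rfl]
      have hr := G_rec_big 14 (by norm_num) j
      norm_num at hr
      rw [sum_Icc_nineteen]
      linarith [hr, G_nonneg 1 j, G_nonneg 2 j, G_nonneg 3 j, G_nonneg 4 j, G_nonneg 5 j, G_nonneg 6 j, G_nonneg 7 j, G_nonneg 8 j, G_nonneg 9 j, G_nonneg 10 j, G_nonneg 11 j, G_nonneg 12 j, G_nonneg 13 j, G_nonneg 14 j, G_nonneg 15 j, G_nonneg 16 j, G_nonneg 17 j, G_nonneg 18 j, G_nonneg 19 j]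
    · rw [show (21 - 8 : ℕ) = 13 from rfl]
      have hr := G_rec_big 13 (by norm_num) j
      norm_num at hr
      rw [sum_Icc_nineteen]
      linarith [hr, G_nonneg 1 j, G_nonneg 2 j, G_nonneg 3 j, G_nonneg 4 j, G_nonneg 5 j, G_nonneg 6 j, G_nonneg 7 j, G_nonneg 8 j, G_nonneg 9 j, G_nonneg 10 j, G_nonneg 11 j, G_nonneg 12 j, G_nonneg 13 j, G_nonneg 14 j, G_nonneg 15 j, G_nonneg 16 j, G_nonneg 17 j, G_nonneg 18 j, G_nonneg 19 j]
    · rw [show (21 - 9 : ℕ) = 12 from rfl]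
      have hr := G_rec_big 12 (by norm_num) j
      norm_num at hr
      rw [sum_Icc_nineteen]
      linarith [hr, G_nonneg 1 j, G_nonneg 2 j, G_nonneg 3 j, G_nonneg 4 j, G_nonneg 5 j, G_nonneg 6 j, G_nonneg 7 j, G_nonneg 8 j, G_nonneg 9 j, G_nonneg 10 j, G_nonneg 11 j, G_nonneg 12 j, G_nonneg 13 j, G_nonneg 14 j, G_nonneg 15 j, G_nonneg 16 j, G_nonneg 17 j, G_nonneg 18 j, G_nonneg 19 j]
    · rw [show (21 - 10 : ℕ) = 11 from rfl]
      have hr := G_rec_big 11 (by norm_num) j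
      norm_num at hr
      rw [sum_Icc_nineteen]
      linarith [hr, G_nonneg 1 j, G_nonneg 2 j, G_nonneg 3 j, G_nonneg 4 j, G_nonneg 5 j, G_nonneg 6 j, G_nonneg 7 j, G_nonneg 8 j, G_nonneg 9 j, G_nonneg 10 j, G_nonneg 11 j, G_nonneg 12 j, G_nonneg 13 j, G_nonneg 14 j, G_nonneg 15 j, G_nonneg 16 j, G_nonneg 17 j, G_nonneg 18 j, G_nonneg 19 j]
  linarith

lemma base21_total : ∑ j ∈ Finset.Icc (0:ℤ) 9, (MW 21 j - mW 21 j) ≤ 19/10 := by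
  have h1 : ∑ j ∈ Finset.Icc (0:ℤ) 9, (MW 21 j - mW 21 j)
      ≤ ∑ j ∈ Finset.Icc (0:ℤ) 9, (1/10) * ∑ m ∈ Finset.Icc (1:ℕ) 19, G m j :=
    Finset.sum_le_sum (fun j _ => base21_sum j)
  have h2 : ∑ j ∈ Finset.Icc (0:ℤ) 9, (1/10) * ∑ m ∈ Finset.Icc (1:ℕ) 19, G m j
      = (1/10) * ∑ m ∈ Finset.Icc (1:ℕ) 19, ∑ j ∈ Finset.Icc (0:ℤ) 9, G m j := by
    rw [← Finset.mul_sum, Finset.sum_comm]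
  have h3 : ∑ m ∈ Finset.Icc (1:ℕ) 19, ∑ j ∈ Finset.Icc (0:ℤ) 9, G m j
      = ∑ m ∈ Finset.Icc (1:ℕ) 19, (1:ℝ) :=
    Finset.sum_congr rfl (fun m _ => G_sum m)
  rw [h2, h3] at h1
  simp [Finset.sum_const, Nat.card_Icc] at h1
  rw [Finset.sum_sub_distrib]
  linarith

lemma G_ge_card (t m : ℕ) (ht : 1 ≤ t) (j : ℤ) (hj0 : 0 ≤ j) (hj9 : j ≤ 9)
    (hm1 : (m:ℤ) ≤ 10 - j) (hm2 : m ≤ t) : (m:ℝ)/100 ≤ G t j := by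
  have h := G_ge_usum t ht j hj0 hj9
  have hterm : ∀ d ∈ Finset.Icc (1:ℕ) 10,
      (if d ≤ m then (1/10 : ℝ) else 0) ≤ (if ((d:ℤ) ≤ 10 - j ∧ d ≤ t) then u (t - d) else 0) := by
    intro d hd
    obtain ⟨hd1, hd2⟩ := Finset.mem_Icc.mp hd
    by_cases h1 : d ≤ m
    · rw [if_pos h1, if_pos (⟨by omega, by omega⟩ : ((d:ℤ) ≤ 10 - j ∧ d ≤ t))]
      rcases eq_or_ne (t - d) 0 with h3 | h3
      · rw [h3, u_zero]; norm_num
      · exact u_ge _ (by omega)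
    · rw [if_neg h1]
      split_ifs with h2
      · exact u_nonneg _
      · exact le_refl 0
  have hsum := Finset.sum_le_sum hterm
  have hm10 : m ≤ 10 := by omega
  have hcount : ∑ d ∈ Finset.Icc (1:ℕ) 10, (if d ≤ m then (1/10:ℝ) else 0) = (m:ℝ)/10 := by
    interval_cases m <;> (rw [sum_Icc_ten]; norm_num)
  linarith

lemma common_case (t₁ t₂ : ℕ) (c : ℕ) (hc1 : 1 ≤ c) (hc10 : c ≤ 10) (h1 : c ≤ t₁) (h2 : c ≤ t₂) :
    (1/2) * ∑ j ∈ Finset.Icc (0:ℤ) 9, |G t₁ j - G t₂ j|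
      ≤ 1 - (1/100) * ∑ j ∈ Finset.Icc (0:ℤ) 9, ((min (10 - j) (c:ℤ) : ℤ) : ℝ) := by
  have key : ∀ j ∈ Finset.Icc (0:ℤ) 9, |G t₁ j - G t₂ j|
      ≤ G t₁ j + G t₂ j - (1/50) * ((min (10 - j) (c:ℤ) : ℤ) : ℝ) := by
    intro j hj
    obtain ⟨hj0, hj9⟩ := Finset.mem_Icc.mp hj
    set m : ℕ := (min (10 - j) (c:ℤ)).toNat with hmdef
    have hmc : (m:ℤ) = min (10 - j) (c:ℤ) := by
      rw [hmdef]
      exact Int.toNat_of_nonneg (le_min (by omega) (by positivity))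
    have hmin1 := min_le_left (10 - j) (c:ℤ)
    have hmin2 := min_le_right (10 - j) (c:ℤ)
    have hb1 : (m:ℝ)/100 ≤ G t₁ j := G_ge_card t₁ m (by omega) j hj0 hj9 (by omega) (by omega)
    have hb2 : (m:ℝ)/100 ≤ G t₂ j := G_ge_card t₂ m (by omega) j hj0 hj9 (by omega) (by omega)
    have hcast : ((min (10 - j) (c:ℤ) : ℤ) : ℝ) = (m:ℝ) := by
      rw [← hmc]
      push_cast
      ring
    apply abs_le.mpr
    constructor <;> linarith
  have hs := Finset.sum_le_sum key
  rw [Finset.sum_sub_distrib, Finset.sum_add_distrib, G_sum, G_sum, ← Finset.mul_sum] at hs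
  linarith

lemma rpow_bound (N : ℕ) (E : ℕ) (hE : ((N:ℝ)/5 - 2) ≤ (E:ℝ)) (x : ℝ)
    (hx : x ≤ (9/10:ℝ)^E) : x ≤ (9/10:ℝ) ^ ((N:ℝ)/5 - 2) := by
  calc x ≤ (9/10:ℝ)^E := hx
  _ = (9/10:ℝ) ^ ((E:ℕ):ℝ) := (Real.rpow_natCast _ _).symm
  _ ≤ (9/10:ℝ) ^ ((N:ℝ)/5 - 2) :=
      Real.rpow_le_rpow_of_exponent_ge (by norm_num) (by norm_num) hE

lemma pow_ineq : ∀ K : ℕ, 1 ≤ K → (19/20:ℝ)*(38/100)^K ≤ (9/10)^(2*K+4) := by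
  intro K hK
  induction K, hK using Nat.le_induction with
  | base => norm_num
  | succ n hn ih =>
    have h2 : (9/10:ℝ)^(2*(n+1)+4) = (9/10)^(2*n+4) * (81/100) := by
      rw [show 2*(n+1)+4 = (2*n+4)+2 from by ring, pow_add]
      norm_num
    have h3 : (19/20:ℝ)*(38/100)^(n+1) = ((19/20)*(38/100)^n) * (38/100) := by ring
    have h4 : (0:ℝ) ≤ (9/10:ℝ)^(2*n+4) := by positivity
    nlinarith

/-- Convergence of the Dynkin process: from any two starting positions in `{1, …, 10}`, the
final-position distributions are within total variation distance `(9/10) ^ (N/5 - 2)`. -/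
theorem dynkin_converge (N : ℕ) (hN : 10 < N) (s₁ s₂ : ℤ)
    (hs₁ : 1 ≤ s₁ ∧ s₁ ≤ 10) (hs₂ : 1 ≤ s₂ ∧ s₂ ≤ 10) :
    TV (iter (dynkinStep N) N s₁) (iter (dynkinStep N) N s₂) ≤
      (9 / 10 : ℝ) ^ ((N : ℝ) / 5 - 2) := by
  obtain ⟨hs11, hs12⟩ := hs₁
  obtain ⟨hs21, hs22⟩ := hs₂
  set t₁ : ℕ := ((N:ℤ) - s₁).toNat with ht₁
  set t₂ : ℕ := ((N:ℤ) - s₂).toNat with ht₂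
  have hNc : (10:ℤ) < (N:ℤ) := by exact_mod_cast hN
  have hTV : TV (iter (dynkinStep N) N s₁) (iter (dynkinStep N) N s₂)
      = (1/2) * ∑ j ∈ Finset.Icc (0:ℤ) 9, |G t₁ j - G t₂ j| := by
    rw [TV]
    have h1 : ∀ x:ℤ, |((iter (dynkinStep N) N s₁) x).toReal - ((iter (dynkinStep N) N s₂) x).toReal|
        = |G t₁ (x - N) - G t₂ (x - N)| := by
      intro x
      rw [iter_apply N hN s₁ hs11 hs12 x, iter_apply N hN s₂ hs21 hs22 x,
        ENNReal.toReal_ofReal (G_nonneg _ _), ENNReal.toReal_ofReal (G_nonneg _ _)]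
    rw [tsum_congr h1]
    rw [tsum_eq_sum (s := Finset.Icc (N:ℤ) ((N:ℤ)+9)) (fun x hx => by
      have hx2 : x - N < 0 ∨ 9 < x - N := by
        rw [Finset.mem_Icc] at hx
        omega
      rw [G_supp t₁ _ hx2, G_supp t₂ _ hx2, sub_zero, abs_zero])]
    have hre : (Finset.Icc (N:ℤ) ((N:ℤ)+9)) = Finset.map (addLeftEmbedding (N:ℤ)) (Finset.Icc 0 9) := by
      rw [Finset.map_add_left_Icc, add_zero]
    rw [hre, Finset.sum_map]
    simp only [addLeftEmbedding_apply, add_sub_cancel_left]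
  rw [hTV]
  have ht1a : 1 ≤ t₁ := by omega
  have ht2a : 1 ≤ t₂ := by omega
  by_cases hA : N ≤ 15
  · apply rpow_bound N 1 (by push_cast; linarith [show (N:ℝ) ≤ 15 from by exact_mod_cast hA]) _ ?_
    have hc := common_case t₁ t₂ 1 (by norm_num) (by norm_num) (by omega) (by omega)
    rw [sum_Icc09 (fun j => ((min (10 - j) ((1:ℕ):ℤ) : ℤ) : ℝ))] at hc
    norm_num [min_def] at hc ⊢
    linarith
  · by_cases hB : N ≤ 20
    · apply rpow_bound N 2 (by push_cast; linarith [show (N:ℝ) ≤ 20 from by exact_mod_cast hB]) _ ?_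
      have hc := common_case t₁ t₂ 6 (by norm_num) (by norm_num) (by omega) (by omega)
      rw [sum_Icc09 (fun j => ((min (10 - j) ((6:ℕ):ℤ) : ℤ) : ℝ))] at hc
      norm_num [min_def] at hc ⊢
      linarith
    · by_cases hC : N ≤ 30
      · apply rpow_bound N 4 (by push_cast; linarith [show (N:ℝ) ≤ 30 from by exact_mod_cast hC]) _ ?_
        have hc := common_case t₁ t₂ 10 (by norm_num) (by norm_num) (by omega) (by omega)
        rw [sum_Icc09 (fun j => ((min (10 - j) ((10:ℕ):ℤ) : ℤ) : ℝ))] at hc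
        norm_num [min_def] at hc ⊢
        linarith
      · -- N ≥ 31 : contraction
        set K : ℕ := (N - 21)/10 with hK
        have hK1 : 1 ≤ K := by omega
        have h21K : 21 + 10*K ≤ N := by omega
        have hNE : (N:ℝ) ≤ 10*(K:ℝ) + 30 := by
          have : N ≤ 10*K + 30 := by omega
          exact_mod_cast this
        have hjb : ∀ j ∈ Finset.Icc (0:ℤ) 9, |G t₁ j - G t₂ j|
            ≤ (38/100)^K * (MW 21 j - mW 21 j) := by
          intro j hj
          have hd1 : s₁.toNat ∈ Finset.Icc (1:ℕ) 10 := Finset.mem_Icc.mpr (by omega)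
          have hd2 : s₂.toNat ∈ Finset.Icc (1:ℕ) 10 := Finset.mem_Icc.mpr (by omega)
          have he1 : t₁ = N - s₁.toNat := by omega
          have he2 : t₂ = N - s₂.toNat := by omega
          have hW1a : mW N j ≤ G t₁ j := by rw [he1]; exact mW_le N s₁.toNat hd1 j
          have hW1b : G t₁ j ≤ MW N j := by rw [he1]; exact le_MW N s₁.toNat hd1 j
          have hW2a : mW N j ≤ G t₂ j := by rw [he2]; exact mW_le N s₂.toNat hd2 j
          have hW2b : G t₂ j ≤ MW N j := by rw [he2]; exact le_MW N s₂.toNat hd2 j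
          have hMa := MW_anti (21 + 10*K) N (by omega) (by omega) j
          have hma := mW_mono (21 + 10*K) N (by omega) (by omega) j
          have hbp := block_pow K 21 (by norm_num) j
          have habs : |G t₁ j - G t₂ j| ≤ MW N j - mW N j :=
            abs_le.mpr ⟨by linarith, by linarith⟩
          linarith
        have hsum : ∑ j ∈ Finset.Icc (0:ℤ) 9, |G t₁ j - G t₂ j|
            ≤ (38/100)^K * (19/10) := by
          calc ∑ j ∈ Finset.Icc (0:ℤ) 9, |G t₁ j - G t₂ j|
              ≤ ∑ j ∈ Finset.Icc (0:ℤ) 9, (38/100)^K * (MW 21 j - mW 21 j) :=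
                Finset.sum_le_sum hjb
          _ = (38/100)^K * ∑ j ∈ Finset.Icc (0:ℤ) 9, (MW 21 j - mW 21 j) := by
                rw [← Finset.mul_sum]
          _ ≤ (38/100)^K * (19/10) :=
                mul_le_mul_of_nonneg_left base21_total (by positivity)
        apply rpow_bound N (2*K+4) (by push_cast; linarith) _ ?_
        have hpi := pow_ineq K hK1
        linarith
end

section
/- The coupled Dynkin process witnesses the convergence bound: let N > 10 and let s₁, s₂ be integers with 1 ≤ s₁ ≤ 10 and 1 ≤ s₂ ≤ 10. Then g^{(2N)}(s₁, s₂) is a coupling of f^{(N)}(s₁) and f^{(N)}(s₂), and Pr_{(x₁,x₂)∼g^{(2N)}(s₁,s₂)}[x₁ ≠ x₂] ≤ (9/10)^{N/5 - 2}, where the exponent N/5 - 2 is a real number. -/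
open scoped ENNReal

/-- One step of the coupled Dynkin process: once both walks are past `N` nothing moves;
otherwise move both together if they agree, and otherwise move only the lagging walk. -/
noncomputable def dynkinCoupleStep (N : ℕ) (p : ℤ × ℤ) : PMF (ℤ × ℤ) :=
  if (N : ℤ) ≤ p.1 ∧ (N : ℤ) ≤ p.2 then PMF.pure p
  else if p.1 = p.2 then
    (PMF.uniformOfFintype (Fin 10)).map fun r => (p.1 + (r : ℤ) + 1, p.2 + (r : ℤ) + 1)
  else if p.1 < p.2 then
    (PMF.uniformOfFintype (Fin 10)).map fun r => (p.1 + (r : ℤ) + 1, p.2)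
  else
    (PMF.uniformOfFintype (Fin 10)).map fun r => (p.1, p.2 + (r : ℤ) + 1)

/-! A Dynkin walk from `x` is frozen after `(N - x)⁺` steps. The first coordinate of the
coupled chain is a Dynkin walk that sometimes pauses, and it only pauses while the second one
lags; within `(N - x₁)⁺ + (N - x₂)⁺` steps every pause can therefore be moved past the time
at which the first walk is frozen, so it does not change the marginal.

For the bound, the two walks stay within distance `10` of each other, and once equal they move
together. While they differ and are not both absorbed, the lagging walk jumps, and exactly one
of its ten equally likely jumps lands on the leading walk. The walks need at least
`minJumps N x₁ + minJumps N x₂` such jumps in total before both are absorbed, and each one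
leaves them apart with probability at most `9/10`. -/

section Iterate

variable {Ω : Type*} (f : Ω → PMF Ω)

theorem iter_succ_eq_bind (t : ℕ) (s : Ω) : iter f (t + 1) s = (f s).bind (iter f t) := by
  induction t generalizing s with
  | zero => simp [iter, PMF.pure_bind, PMF.bind_pure]
  | succ t ih => rw [iter, ih, PMF.bind_bind]; rfl

theorem iter_eq_pure_of_eq_pure {s : Ω} (h : f s = PMF.pure s) (t : ℕ) :
    iter f t s = PMF.pure s := by
  induction t with
  | zero => rfl
  | succ t ih => rw [iter, ih, PMF.pure_bind, h]

theorem iter_map_of_semiconj {Ω' : Type*} {g : Ω' → PMF Ω'} {e : Ω → Ω'}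
    (h : ∀ x, g (e x) = (f x).map e) (t : ℕ) (x : Ω) :
    iter g t (e x) = (iter f t x).map e := by
  induction t with
  | zero => exact (PMF.pure_map e x).symm
  | succ t ih => rw [iter, ih, PMF.bind_map, iter, PMF.map_bind]; exact congrArg _ (funext h)

end Iterate

theorem PMF.toOuterMeasure_bind_le {α β : Type*} (μ : PMF α) (k : α → PMF β) {E : Set β}
    {S : Set α} {B : ℝ≥0∞} (hS : ∀ a ∉ S, (k a).toOuterMeasure E = 0)
    (hB : ∀ a ∈ S, (k a).toOuterMeasure E ≤ B) :
    (μ.bind k).toOuterMeasure E ≤ μ.toOuterMeasure S * B := by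
  rw [PMF.toOuterMeasure_bind_apply, PMF.toOuterMeasure_apply, ← ENNReal.tsum_mul_right]
  refine ENNReal.tsum_le_tsum fun a => ?_
  by_cases ha : a ∈ S
  · simpa [Set.indicator_of_mem ha] using mul_le_mul_right (hB a ha) _
  · simp [hS a ha]

theorem PMF.toOuterMeasure_apply_le_one {α : Type*} (p : PMF α) (s : Set α) :
    p.toOuterMeasure s ≤ 1 :=
  (p.toOuterMeasure.mono (Set.subset_univ s)).trans_eq
    ((p.toOuterMeasure_apply_eq_one_iff _).2 (Set.subset_univ _))

theorem PMF.toOuterMeasure_uniformOfFintype_ne {α : Type*} [Fintype α] [Nonempty α]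
    [DecidableEq α] (a : α) :
    (PMF.uniformOfFintype α).toOuterMeasure {x | x ≠ a} =
      ((Fintype.card α - 1 : ℕ) : ℝ≥0∞) / Fintype.card α := by
  rw [PMF.toOuterMeasure_uniformOfFintype_apply]
  simp [Finset.filter_ne', Finset.card_erase_of_mem]

section Dynkin

variable {N : ℕ}

theorem dynkinStep_of_le {x : ℤ} (h : (N : ℤ) ≤ x) : dynkinStep N x = PMF.pure x := by
  simp [dynkinStep, not_lt.mpr h]

theorem dynkinStep_of_lt {x : ℤ} (h : x < N) :
    dynkinStep N x = (PMF.uniformOfFintype (Fin 10)).map fun r : Fin 10 => x + (r : ℕ) + 1 := by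
  rw [dynkinStep, if_pos h]
  exact PMF.map_comp _ _ _

theorem iter_dynkinStep_succ {t : ℕ} {x : ℤ} (h : ((N : ℤ) - x).toNat ≤ t) :
    iter (dynkinStep N) (t + 1) x = iter (dynkinStep N) t x := by
  induction t generalizing x with
  | zero =>
    have hx : (N : ℤ) ≤ x := by omega
    simp only [iter_eq_pure_of_eq_pure _ (dynkinStep_of_le hx)]
  | succ t ih =>
    rcases le_or_gt (N : ℤ) x with hx | hx
    · simp only [iter_eq_pure_of_eq_pure _ (dynkinStep_of_le hx)]
    rw [iter_succ_eq_bind, iter_succ_eq_bind _ t, dynkinStep_of_lt hx, PMF.bind_map,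
      PMF.bind_map]
    exact congrArg _ (funext fun r => ih (x := x + (r : ℕ) + 1) (by omega))

theorem iter_dynkinStep_eq_of_le {a b : ℕ} {x : ℤ} (ha : ((N : ℤ) - x).toNat ≤ a)
    (hab : a ≤ b) :
    iter (dynkinStep N) b x = iter (dynkinStep N) a x := by
  induction b, hab using Nat.le_induction with
  | base => rfl
  | succ b hab ih => rw [iter_dynkinStep_succ (ha.trans hab), ih]

theorem dynkinCoupleStep_of_le {p : ℤ × ℤ} (h₁ : (N : ℤ) ≤ p.1)
    (h₂ : (N : ℤ) ≤ p.2) :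
    dynkinCoupleStep N p = PMF.pure p := by
  simp [dynkinCoupleStep, h₁, h₂]

theorem dynkinCoupleStep_of_lt {x₁ x₂ : ℤ} (h : x₁ < x₂) (h₁ : x₁ < N) :
    dynkinCoupleStep N (x₁, x₂) =
      (PMF.uniformOfFintype (Fin 10)).map fun r : Fin 10 => (x₁ + (r : ℕ) + 1, x₂) := by
  rw [dynkinCoupleStep, if_neg (by omega), if_neg h.ne, if_pos h]
  exact PMF.map_comp _ _ _

theorem dynkinCoupleStep_swap (p : ℤ × ℤ) :
    dynkinCoupleStep N p.swap = (dynkinCoupleStep N p).map Prod.swap := by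
  obtain ⟨x₁, x₂⟩ := p
  unfold dynkinCoupleStep
  simp only [Prod.fst_swap, Prod.snd_swap]
  split_ifs <;> first | omega | simp [PMF.map_comp, PMF.pure_map, Function.comp_def]

theorem dynkinCoupleStep_of_gt {x₁ x₂ : ℤ} (h : x₂ < x₁) (h₂ : x₂ < N) :
    dynkinCoupleStep N (x₁, x₂) =
      (PMF.uniformOfFintype (Fin 10)).map fun r : Fin 10 => (x₁, x₂ + (r : ℕ) + 1) := by
  rw [← Prod.swap_prod_mk, dynkinCoupleStep_swap, dynkinCoupleStep_of_lt h h₂, PMF.map_comp]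
  rfl

theorem dynkinCoupleStep_diag (x : ℤ) :
    dynkinCoupleStep N (x, x) = (dynkinStep N x).map fun y => (y, y) := by
  unfold dynkinCoupleStep dynkinStep
  split_ifs <;> first | omega | simp [PMF.map_comp, PMF.pure_map, Function.comp_def]

theorem iter_dynkinCoupleStep_swap (t : ℕ) (p : ℤ × ℤ) :
    iter (dynkinCoupleStep N) t p.swap = (iter (dynkinCoupleStep N) t p).map Prod.swap :=
  iter_map_of_semiconj _ dynkinCoupleStep_swap t p

theorem iter_dynkinCoupleStep_diag (t : ℕ) (x : ℤ) :
    iter (dynkinCoupleStep N) t (x, x) = (iter (dynkinStep N) t x).map fun y => (y, y) :=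
  iter_map_of_semiconj _ dynkinCoupleStep_diag t x

theorem map_fst_iter_dynkinCoupleStep {t : ℕ} {x₁ x₂ : ℤ}
    (h : ((N : ℤ) - x₁).toNat + ((N : ℤ) - x₂).toNat ≤ t) :
    (iter (dynkinCoupleStep N) t (x₁, x₂)).map Prod.fst = iter (dynkinStep N) t x₁ := by
  induction t generalizing x₁ x₂ with
  | zero => exact PMF.pure_map _ _
  | succ t ih =>
    rcases lt_trichotomy x₁ x₂ with hlt | rfl | hgt
    · rcases le_or_gt (N : ℤ) x₁ with hN | hN
      · rw [iter_eq_pure_of_eq_pure _ (dynkinCoupleStep_of_le hN (by omega)), PMF.pure_map,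
          iter_eq_pure_of_eq_pure _ (dynkinStep_of_le hN)]
      rw [iter_succ_eq_bind, dynkinCoupleStep_of_lt hlt hN, PMF.bind_map, PMF.map_bind,
        iter_succ_eq_bind, dynkinStep_of_lt hN, PMF.bind_map]
      exact congrArg _ (funext fun r => ih (x₁ := x₁ + (r : ℕ) + 1) (by omega))
    · rw [iter_dynkinCoupleStep_diag, PMF.map_comp]
      exact PMF.map_id _
    · rcases le_or_gt (N : ℤ) x₂ with hN | hN
      · rw [iter_eq_pure_of_eq_pure _ (dynkinCoupleStep_of_le (by omega) hN), PMF.pure_map,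
          iter_eq_pure_of_eq_pure _ (dynkinStep_of_le (by omega))]
      have ih' : ∀ r : Fin 10,
          (iter (dynkinCoupleStep N) t (x₁, x₂ + (r : ℕ) + 1)).map Prod.fst =
            iter (dynkinStep N) t x₁ := fun r => ih (by omega)
      rw [iter_succ_eq_bind, dynkinCoupleStep_of_gt hgt hN, PMF.bind_map, PMF.map_bind,
        Function.comp_def, funext ih', PMF.bind_const, iter_dynkinStep_succ (by omega)]

theorem map_snd_iter_dynkinCoupleStep {t : ℕ} {x₁ x₂ : ℤ}
    (h : ((N : ℤ) - x₁).toNat + ((N : ℤ) - x₂).toNat ≤ t) :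
    (iter (dynkinCoupleStep N) t (x₁, x₂)).map Prod.snd = iter (dynkinStep N) t x₂ := by
  rw [← Prod.swap_swap (x₁, x₂), iter_dynkinCoupleStep_swap, PMF.map_comp]
  exact map_fst_iter_dynkinCoupleStep (by omega)

theorem toOuterMeasure_iter_dynkinCoupleStep_diag_ne (t : ℕ) (x : ℤ) :
    (iter (dynkinCoupleStep N) t (x, x)).toOuterMeasure {p | p.1 ≠ p.2} = 0 := by
  rw [iter_dynkinCoupleStep_diag, PMF.toOuterMeasure_map_apply]
  simp

theorem toOuterMeasure_iter_dynkinCoupleStep_swap_ne (t : ℕ) (p : ℤ × ℤ) :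
    (iter (dynkinCoupleStep N) t p.swap).toOuterMeasure {q | q.1 ≠ q.2} =
      (iter (dynkinCoupleStep N) t p).toOuterMeasure {q | q.1 ≠ q.2} := by
  rw [iter_dynkinCoupleStep_swap, PMF.toOuterMeasure_map_apply]
  simp only [Set.preimage_ofPred_eq, Prod.fst_swap, Prod.snd_swap, ne_comm]

/-- Jumps are at most `10`, so this is the fewest steps in which `x` can reach `N`. -/
def minJumps (N : ℕ) (x : ℤ) : ℕ := (((N : ℤ) - x).toNat + 9) / 10

theorem toOuterMeasure_iter_dynkinCoupleStep_ne_le (t : ℕ) {x₁ x₂ : ℤ}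
    (hgap : |x₁ - x₂| ≤ 10) :
    (iter (dynkinCoupleStep N) t (x₁, x₂)).toOuterMeasure {p | p.1 ≠ p.2} ≤
      (9 / 10) ^ min t (minJumps N x₁ + minJumps N x₂) := by
  induction t generalizing x₁ x₂ with
  | zero => simpa using PMF.toOuterMeasure_apply_le_one _ _
  | succ t ih =>
    wlog hle : x₁ ≤ x₂ generalizing x₁ x₂
    · rw [← Prod.swap_prod_mk, toOuterMeasure_iter_dynkinCoupleStep_swap_ne,
        add_comm (minJumps N x₁)]
      exact this (abs_sub_comm x₁ x₂ ▸ hgap) (by omega)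
    rcases hle.eq_or_lt with rfl | hlt
    · simp [toOuterMeasure_iter_dynkinCoupleStep_diag_ne]
    set M := min (t + 1) (minJumps N x₁ + minJumps N x₂)
    rcases Nat.eq_zero_or_pos M with hM | hM
    · rw [hM, pow_zero]
      exact PMF.toOuterMeasure_apply_le_one _ _
    have hx₁ : x₁ < N := by simp only [M, minJumps] at hM; omega
    have hgap' : x₂ - x₁ ≤ 10 := by rw [abs_le] at hgap; omega
    set r₀ : Fin 10 := ⟨(x₂ - x₁ - 1).toNat, by omega⟩
    rw [iter_succ_eq_bind, dynkinCoupleStep_of_lt hlt hx₁, PMF.bind_map]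
    calc _ ≤ (PMF.uniformOfFintype (Fin 10)).toOuterMeasure {r | r ≠ r₀} *
          (9 / 10) ^ (M - 1) := by
          refine PMF.toOuterMeasure_bind_le _ _ (fun r hr => ?_) (fun r hr => ?_)
          · have hr₀ : x₁ + ((r : ℕ) : ℤ) + 1 = x₂ := by
              obtain rfl : r = r₀ := not_not.mp hr
              simp only [r₀]; omega
            simp only [Function.comp_apply, hr₀, toOuterMeasure_iter_dynkinCoupleStep_diag_ne]
          · have hr₀ : (r : ℕ) ≠ (x₂ - x₁ - 1).toNat := fun h => hr (Fin.ext h)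
            refine (ih (abs_le.mpr ⟨by omega, by omega⟩)).trans
              (pow_le_pow_right_of_le_one' (ENNReal.div_le_of_le_mul (by norm_num)) ?_)
            simp only [M, minJumps]; omega
      _ = (9 / 10) ^ M := by
          rw [PMF.toOuterMeasure_uniformOfFintype_ne, ← Nat.sub_add_cancel hM, pow_succ']
          norm_num

end Dynkin

theorem dynkin_coupling_general (N : ℕ) (s₁ s₂ : ℤ)
    (hs₁ : 1 ≤ s₁ ∧ s₁ ≤ 10) (hs₂ : 1 ≤ s₂ ∧ s₂ ≤ 10) :
    IsCoupling (iter (dynkinCoupleStep N) (2 * N) (s₁, s₂))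
        (iter (dynkinStep N) N s₁) (iter (dynkinStep N) N s₂) ∧
      (iter (dynkinCoupleStep N) (2 * N) (s₁, s₂)).pr {p | p.1 ≠ p.2} ≤
        (9 / 10 : ℝ) ^ ((N : ℝ) / 5 - 2) := by
  refine ⟨⟨?_, ?_⟩, ?_⟩
  · rw [map_fst_iter_dynkinCoupleStep (by omega),
      iter_dynkinStep_eq_of_le (a := N) (by omega) (by omega)]
  · rw [map_snd_iter_dynkinCoupleStep (by omega),
      iter_dynkinStep_eq_of_le (a := N) (by omega) (by omega)]
  set k := min (2 * N) (minJumps N s₁ + minJumps N s₂)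
  have hbound := toOuterMeasure_iter_dynkinCoupleStep_ne_le (N := N) (2 * N)
    (abs_le.mpr ⟨by omega, by omega⟩ : |s₁ - s₂| ≤ 10)
  have hk : (N : ℝ) / 5 - 2 ≤ k := by
    have hNk : (2 * N : ℝ) ≤ 10 * k + 20 := by
      exact_mod_cast (show 2 * N ≤ 10 * k + 20 by simp only [k, minJumps]; omega)
    linarith
  calc (iter (dynkinCoupleStep N) (2 * N) (s₁, s₂)).pr {p | p.1 ≠ p.2}
      ≤ ((9 / 10 : ℝ≥0∞) ^ k).toReal :=
        ENNReal.toReal_mono (ENNReal.pow_ne_top (ENNReal.div_ne_top (by norm_num) (by norm_num)))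
          hbound
    _ = (9 / 10 : ℝ) ^ (k : ℝ) := by simp [ENNReal.toReal_div, Real.rpow_natCast]
    _ ≤ (9 / 10 : ℝ) ^ ((N : ℝ) / 5 - 2) :=
      Real.rpow_le_rpow_of_exponent_ge (by norm_num) (by norm_num) hk

/-- The coupled Dynkin process run for `2N` steps is a coupling of the two Dynkin processes
run for `N` steps, and it witnesses the convergence bound `(9/10) ^ (N/5 - 2)`. -/
theorem dynkin_coupling (N : ℕ) (hN : 10 < N) (s₁ s₂ : ℤ)
    (hs₁ : 1 ≤ s₁ ∧ s₁ ≤ 10) (hs₂ : 1 ≤ s₂ ∧ s₂ ≤ 10) :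
    IsCoupling (iter (dynkinCoupleStep N) (2 * N) (s₁, s₂))
        (iter (dynkinStep N) N s₁) (iter (dynkinStep N) N s₂) ∧
      (iter (dynkinCoupleStep N) (2 * N) (s₁, s₂)).pr {p | p.1 ≠ p.2} ≤
        (9 / 10 : ℝ) ^ ((N : ℝ) / 5 - 2) :=
  dynkin_coupling_general N s₁ s₂ hs₁ hs₂
end

section
/- Adjacent coupling for the Glauber dynamics: assume k ≥ D and let w₁, w₂ be valid colorings that differ at exactly one vertex (Hamming distance 1). Then there exists a coupling μ of glauberStep(w₁) and glauberStep(w₂) whose support is contained in pairs of colorings at Hamming distance at most 2, and such that E_{(w₁',w₂')∼μ}[d(w₁', w₂')] ≤ 1 - 1/n + 2D/(k·n). -/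
open scoped ENNReal

/-- A coloring is valid (proper) if adjacent vertices get distinct colors. -/
def validCol {V C : Type*} (G : SimpleGraph V) (w : V → C) : Prop :=
  ∀ u v, G.Adj u v → w u ≠ w v

instance {V C : Type*} [Fintype V] [DecidableEq C] (G : SimpleGraph V)
    [DecidableRel G.Adj] (w : V → C) : Decidable (validCol G w) :=
  inferInstanceAs (Decidable (∀ u v, G.Adj u v → w u ≠ w v))

/-- The Hamming distance between two colorings: the number of vertices where they differ. -/
def hamm {V C : Type*} [Fintype V] [DecidableEq C] (w₁ w₂ : V → C) : ℕ :=
  (Finset.univ.filter fun v => w₁ v ≠ w₂ v).card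

/-- One step of the Glauber dynamics: resample a uniformly random vertex with a uniformly
random color, keeping the change only if the result is a valid coloring. -/
noncomputable def glauberStep {V C : Type*} [Fintype V] [Nonempty V] [DecidableEq V]
    [Fintype C] [Nonempty C] [DecidableEq C]
    (G : SimpleGraph V) [DecidableRel G.Adj] (w : V → C) : PMF (V → C) :=
  (PMF.uniformOfFintype V).bind fun v =>
    (PMF.uniformOfFintype C).bind fun c =>
      PMF.pure (if validCol G (Function.update w v c) then Function.update w v c else w)

/-!
The coupling picks the same vertex `v` in both chains, with colors `c` and `σ_v c`, where `σ_v`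
exchanges the two colors `w₁ v₀`, `w₂ v₀` of the disagreeing vertex `v₀` when `v` is a neighbor
of `v₀`, and is the identity otherwise. The chains then differ at most at `v` and `v₀`.
Recoloring `v₀` makes them agree unless the color occurs among the at most `D` neighbors of `v₀`;
recoloring a neighbor of `v₀` creates a second disagreement for only one of the `k` colors, because
the swap makes a move blocked by `v₀` in one chain blocked in the other one as well; every other
move keeps the distance `1`. Averaging over the `n k` equally likely moves bounds the expected
distance by `((n - 1) k + 2 D) / (n k)`.
-/

open Finset

namespace PMF

variable {α β : Type*}

theorem tsum_bind_mul (p : PMF α) (f : α → PMF β) (g : β → ℝ≥0∞) :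
    ∑' b, p.bind f b * g b = ∑' a, p a * ∑' b, f a b * g b := by
  simp only [bind_apply, ← ENNReal.tsum_mul_right, ← ENNReal.tsum_mul_left, mul_assoc]
  exact ENNReal.tsum_comm

theorem tsum_pure_mul (a : α) (g : α → ℝ≥0∞) : ∑' b, pure a b * g b = g a := by
  rw [tsum_eq_single a fun b hb => by simp [pure_apply, hb]]
  simp

theorem map_uniformOfFintype_equiv [Fintype α] [Nonempty α] (e : α ≃ α) :
    (uniformOfFintype α).map e = uniformOfFintype α := by
  ext a
  rw [map_apply, tsum_eq_single (e.symm a) fun b hb =>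
    if_neg fun h => hb (e.eq_symm_apply.2 h.symm)]
  simp

end PMF

section Hamming

variable {V C : Type*} [Fintype V] [DecidableEq C]

theorem hamm_self (x : V → C) : hamm x x = 0 := by
  simp [hamm]

theorem hamm_le_card_of_eq_off {x y : V → C} (s : Finset V) (h : ∀ u ∉ s, x u = y u) :
    hamm x y ≤ #s :=
  card_le_card fun u hu => by_contra fun hs => (mem_filter.1 hu).2 (h u hs)

theorem exists_eq_off_of_hamm_eq_one {x y : V → C} (h : hamm x y = 1) :
    ∃ v₀, ∀ u, u ≠ v₀ → x u = y u := by
  obtain ⟨v₀, hv₀⟩ := card_eq_one.mp h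
  refine ⟨v₀, fun u hu => by_contra fun hne => hu ?_⟩
  have hu : u ∈ univ.filter fun v => x v ≠ y v := mem_filter.2 ⟨mem_univ u, hne⟩
  simpa [hv₀] using hu

end Hamming

section ValidColoring

variable {V C : Type*} {G : SimpleGraph V} [DecidableEq V] {w w₁ w₂ : V → C} {v : V} {c : C}

theorem validCol_update_iff (hw : validCol G w) :
    validCol G (Function.update w v c) ↔ ∀ u, G.Adj v u → w u ≠ c := by
  constructor
  · intro h u hu hc
    have := h v u hu
    rw [Function.update_self, Function.update_of_ne (G.ne_of_adj hu).symm] at this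
    exact this hc.symm
  · intro h u u' ha
    rcases eq_or_ne u v with rfl | hu
    · rw [Function.update_self, Function.update_of_ne (G.ne_of_adj ha).symm]
      exact fun hc => h u' ha hc.symm
    rw [Function.update_of_ne hu]
    rcases eq_or_ne u' v with rfl | hu'
    · rw [Function.update_self]
      exact h u ha.symm
    · rw [Function.update_of_ne hu']
      exact hw u u' ha

theorem validCol_update_congr (h₁ : validCol G w₁) (h₂ : validCol G w₂)
    (h : ∀ u, G.Adj v u → (w₁ u = c ↔ w₂ u = c)) :
    validCol G (Function.update w₁ v c) ↔ validCol G (Function.update w₂ v c) := by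
  rw [validCol_update_iff h₁, validCol_update_iff h₂]
  exact forall_congr' fun u => imp_congr_right fun hu => not_congr (h u hu)

end ValidColoring

theorem natCast_div_le_ofReal_of_add_le {S n k D : ℕ} (hn : 0 < n) (hk : 0 < k)
    (hS : S + k ≤ n * k + 2 * D) :
    (S : ℝ≥0∞) / (n * k) ≤ ENNReal.ofReal (1 - 1 / n + 2 * D / (k * n)) := by
  have hnk : (0 : ℝ) < n * k := by positivity
  rw [← ENNReal.ofReal_natCast S, ← ENNReal.ofReal_natCast n, ← ENNReal.ofReal_natCast k,
    ← ENNReal.ofReal_mul (Nat.cast_nonneg n), ← ENNReal.ofReal_div_of_pos hnk]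
  refine ENNReal.ofReal_le_ofReal ((div_le_iff₀ hnk).2 ?_)
  have hS' : (S : ℝ) + k ≤ n * k + 2 * D := by exact_mod_cast hS
  have hn' : (n : ℝ) ≠ 0 := by positivity
  have hk' : (k : ℝ) ≠ 0 := by positivity
  calc (S : ℝ) ≤ n * k + 2 * D - k := by linarith
    _ = (1 - 1 / n + 2 * D / (k * n)) * (n * k) := by field_simp; ring

section Glauber

variable {V C : Type*} [Fintype V] [DecidableEq V] [DecidableEq C]
  (G : SimpleGraph V) [DecidableRel G.Adj]

def glauberUpdate (w : V → C) (v : V) (c : C) : V → C :=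
  if validCol G (Function.update w v c) then Function.update w v c else w

variable [Fintype C]

noncomputable def glauberCoupling [Nonempty V] [Nonempty C] (w₁ w₂ : V → C) (σ : V → C ≃ C) :
    PMF ((V → C) × (V → C)) :=
  (PMF.uniformOfFintype V).bind fun v => (PMF.uniformOfFintype C).bind fun c =>
    PMF.pure (glauberUpdate G w₁ v c, glauberUpdate G w₂ v (σ v c))

variable [Nonempty V] [Nonempty C] {G}

theorem isCoupling_glauberCoupling (w₁ w₂ : V → C) (σ : V → C ≃ C) :
    IsCoupling (glauberCoupling G w₁ w₂ σ) (glauberStep G w₁) (glauberStep G w₂) := by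
  constructor
  · simp only [glauberCoupling, PMF.map_bind, PMF.pure_map]
    rfl
  · simp only [glauberCoupling, PMF.map_bind, PMF.pure_map, glauberStep]
    refine congrArg _ (funext fun v => ?_)
    conv_rhs => rw [← PMF.map_uniformOfFintype_equiv (σ v), PMF.bind_map]
    rfl

theorem mem_support_glauberCoupling {w₁ w₂ : V → C} {σ : V → C ≃ C} {p : (V → C) × (V → C)}
    (hp : p ∈ (glauberCoupling G w₁ w₂ σ).support) :
    ∃ v c, p = (glauberUpdate G w₁ v c, glauberUpdate G w₂ v (σ v c)) := by
  simpa [glauberCoupling, eq_comm] using hp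

theorem tsum_glauberCoupling_mul (w₁ w₂ : V → C) (σ : V → C ≃ C)
    (g : (V → C) × (V → C) → ℝ≥0∞) :
    ∑' p, glauberCoupling G w₁ w₂ σ p * g p =
      (∑ v, ∑ c, g (glauberUpdate G w₁ v c, glauberUpdate G w₂ v (σ v c))) /
        (Fintype.card V * Fintype.card C) := by
  simp only [glauberCoupling, PMF.tsum_bind_mul, PMF.tsum_pure_mul]
  simp only [PMF.uniformOfFintype_apply, tsum_fintype, ← Finset.mul_sum]
  rw [div_eq_mul_inv, ENNReal.mul_inv (Or.inr (ENNReal.natCast_ne_top _))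
    (Or.inl (ENNReal.natCast_ne_top _))]
  ring

end Glauber

section AdjacentColorings

variable {V C : Type*} [Fintype V] [DecidableEq V] [DecidableEq C]
  {G : SimpleGraph V} [DecidableRel G.Adj] {w w₁ w₂ : V → C} {v₀ v : V}

theorem glauberUpdate_apply_of_ne {u : V} (c : C) (hu : u ≠ v) :
    glauberUpdate G w v c u = w u := by
  unfold glauberUpdate
  split_ifs <;> simp [Function.update_of_ne hu]

theorem hamm_glauberUpdate_le_two (hoff : ∀ u, u ≠ v₀ → w₁ u = w₂ u) (c c' : C) :
    hamm (glauberUpdate G w₁ v c) (glauberUpdate G w₂ v c') ≤ 2 := by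
  refine (hamm_le_card_of_eq_off {v, v₀} fun u hu => ?_).trans card_le_two
  simp only [mem_insert, mem_singleton, not_or] at hu
  rw [glauberUpdate_apply_of_ne c hu.1, glauberUpdate_apply_of_ne c' hu.1, hoff u hu.2]

theorem hamm_glauberUpdate_le_one (hoff : ∀ u, u ≠ v₀ → w₁ u = w₂ u) {c : C}
    (hvalid : validCol G (Function.update w₁ v c) ↔ validCol G (Function.update w₂ v c)) :
    hamm (glauberUpdate G w₁ v c) (glauberUpdate G w₂ v c) ≤ 1 := by
  refine (hamm_le_card_of_eq_off {v₀} fun u hu => ?_).trans (card_singleton v₀).le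
  have hu : u ≠ v₀ := by simpa using hu
  unfold glauberUpdate
  by_cases h : validCol G (Function.update w₁ v c)
  · rw [if_pos h, if_pos (hvalid.1 h)]
    rcases eq_or_ne u v with rfl | huv
    · simp
    · simp [Function.update_of_ne huv, hoff u hu]
  · rw [if_neg h, if_neg (mt hvalid.2 h), hoff u hu]

variable [Fintype C]

theorem sum_hamm_glauberUpdate_center_le (h₁ : validCol G w₁) (h₂ : validCol G w₂)
    (hoff : ∀ u, u ≠ v₀ → w₁ u = w₂ u) :
    ∑ c, hamm (glauberUpdate G w₁ v₀ c) (glauberUpdate G w₂ v₀ c) ≤ G.degree v₀ := by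
  have hvalid (c : C) :
      validCol G (Function.update w₁ v₀ c) ↔ validCol G (Function.update w₂ v₀ c) :=
    validCol_update_congr h₁ h₂ fun u hu => by rw [hoff u (G.ne_of_adj hu).symm]
  have hupdate (c : C) : Function.update w₁ v₀ c = Function.update w₂ v₀ c := by
    funext u
    rcases eq_or_ne u v₀ with rfl | hu
    · simp
    · simp [Function.update_of_ne hu, hoff u hu]
  have hle (c : C) : hamm (glauberUpdate G w₁ v₀ c) (glauberUpdate G w₂ v₀ c) ≤
      if c ∈ (G.neighborFinset v₀).image w₁ then 1 else 0 := by
    split_ifs with hc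
    · exact hamm_glauberUpdate_le_one hoff (hvalid c)
    · have hv : validCol G (Function.update w₁ v₀ c) := (validCol_update_iff h₁).2 fun u hu hu' =>
        hc (mem_image.2 ⟨u, (G.mem_neighborFinset v₀ u).2 hu, hu'⟩)
      rw [glauberUpdate, glauberUpdate, if_pos hv, if_pos ((hvalid c).1 hv), hupdate, hamm_self]
  calc ∑ c, hamm (glauberUpdate G w₁ v₀ c) (glauberUpdate G w₂ v₀ c)
      ≤ ∑ c, if c ∈ (G.neighborFinset v₀).image w₁ then 1 else 0 := sum_le_sum fun c _ => hle c
    _ = #((G.neighborFinset v₀).image w₁) := by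
        rw [sum_boole, filter_mem_eq_inter, univ_inter, Nat.cast_id]
    _ ≤ G.degree v₀ := card_image_le.trans (G.card_neighborFinset_eq_degree v₀).le

theorem sum_hamm_glauberUpdate_of_not_adj_le (h₁ : validCol G w₁) (h₂ : validCol G w₂)
    (hoff : ∀ u, u ≠ v₀ → w₁ u = w₂ u) (hv : ¬G.Adj v v₀) :
    ∑ c, hamm (glauberUpdate G w₁ v c) (glauberUpdate G w₂ v c) ≤ Fintype.card C := by
  refine (sum_le_sum fun c _ => hamm_glauberUpdate_le_one hoff
    (validCol_update_congr h₁ h₂ fun u hu => ?_)).trans (by simp)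
  rw [hoff u fun h => hv (h ▸ hu)]

theorem sum_hamm_glauberUpdate_swap_of_adj_le (h₁ : validCol G w₁) (h₂ : validCol G w₂)
    (hoff : ∀ u, u ≠ v₀ → w₁ u = w₂ u) (hv : G.Adj v v₀) :
    ∑ c, hamm (glauberUpdate G w₁ v c) (glauberUpdate G w₂ v (Equiv.swap (w₁ v₀) (w₂ v₀) c))
      ≤ Fintype.card C + 1 := by
  have hle (c : C) : hamm (glauberUpdate G w₁ v c)
      (glauberUpdate G w₂ v (Equiv.swap (w₁ v₀) (w₂ v₀) c)) ≤ 1 + if c = w₂ v₀ then 1 else 0 := by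
    split_ifs with hcb
    · exact hamm_glauberUpdate_le_two hoff _ _
    rcases eq_or_ne c (w₁ v₀) with rfl | hca
    · have hb1 : ¬validCol G (Function.update w₁ v (w₁ v₀)) := fun h =>
        (validCol_update_iff h₁).1 h v₀ hv rfl
      have hb2 : ¬validCol G (Function.update w₂ v (w₂ v₀)) := fun h =>
        (validCol_update_iff h₂).1 h v₀ hv rfl
      rw [Equiv.swap_apply_left, glauberUpdate, glauberUpdate, if_neg hb1, if_neg hb2]
      exact (hamm_le_card_of_eq_off {v₀} fun u hu => hoff u (by simpa using hu)).trans (by simp)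
    · rw [Equiv.swap_apply_of_ne_of_ne hca hcb]
      refine (hamm_glauberUpdate_le_one hoff (validCol_update_congr h₁ h₂ fun u _ => ?_)).trans
        (by simp)
      rcases eq_or_ne u v₀ with rfl | hu
      · exact iff_of_false (Ne.symm hca) (Ne.symm hcb)
      · rw [hoff u hu]
  calc _ ≤ ∑ c, (1 + if c = w₂ v₀ then 1 else 0) := sum_le_sum fun c _ => hle c
    _ = Fintype.card C + 1 := by simp [sum_add_distrib]

variable (G w₁ w₂ v₀) in
def neighborSwap (v : V) : C ≃ C :=
  if G.Adj v v₀ then Equiv.swap (w₁ v₀) (w₂ v₀) else Equiv.refl C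

theorem sum_sum_hamm_glauberUpdate_neighborSwap_add_le (h₁ : validCol G w₁)
    (h₂ : validCol G w₂) (hoff : ∀ u, u ≠ v₀ → w₁ u = w₂ u) :
    ∑ v, ∑ c, hamm (glauberUpdate G w₁ v c)
        (glauberUpdate G w₂ v (neighborSwap G w₁ w₂ v₀ v c)) + Fintype.card C ≤
      Fintype.card V * Fintype.card C + 2 * G.degree v₀ := by
  set f : V → ℕ := fun v => ∑ c, hamm (glauberUpdate G w₁ v c)
    (glauberUpdate G w₂ v (neighborSwap G w₁ w₂ v₀ v c))
  set k := Fintype.card C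
  have hcenter : f v₀ ≤ G.degree v₀ := by
    simpa [f, neighborSwap] using sum_hamm_glauberUpdate_center_le h₁ h₂ hoff
  have hrest (v : V) : f v ≤ k + if G.Adj v v₀ then 1 else 0 := by
    by_cases hv : G.Adj v v₀
    · simpa [f, neighborSwap, hv] using sum_hamm_glauberUpdate_swap_of_adj_le h₁ h₂ hoff hv
    · simpa [f, neighborSwap, hv] using sum_hamm_glauberUpdate_of_not_adj_le h₁ h₂ hoff hv
  have hdeg : ∑ v, (if G.Adj v v₀ then 1 else 0) = G.degree v₀ := by
    rw [sum_boole, ← G.card_neighborFinset_eq_degree, Nat.cast_id]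
    congr 1
    ext v
    simp [G.adj_comm]
  calc ∑ v, f v + k = ∑ v ∈ univ.erase v₀, f v + f v₀ + k := by
        rw [sum_erase_add _ _ (mem_univ v₀)]
    _ ≤ ∑ v ∈ univ.erase v₀, (k + if G.Adj v v₀ then 1 else 0) + G.degree v₀ + k := by
        gcongr with v
        exact hrest v
    _ = ∑ v, (k + if G.Adj v v₀ then 1 else 0) + G.degree v₀ := by
        rw [← sum_erase_add _ _ (mem_univ v₀), if_neg (G.irrefl (v := v₀))]
        ring
    _ = Fintype.card V * k + 2 * G.degree v₀ := by
        rw [sum_add_distrib, hdeg, sum_const, card_univ, smul_eq_mul]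
        ring

end AdjacentColorings

theorem glauber_adjacent_coupling_general {V C : Type*} [Fintype V] [Nonempty V] [DecidableEq V]
    [Fintype C] [Nonempty C] [DecidableEq C]
    (G : SimpleGraph V) [DecidableRel G.Adj] (D : ℕ)
    (hdeg : ∀ v, G.degree v ≤ D)
    (w₁ w₂ : V → C) (h₁ : validCol G w₁) (h₂ : validCol G w₂) (hadj : hamm w₁ w₂ = 1) :
    ∃ μ : PMF ((V → C) × (V → C)),
      IsCoupling μ (glauberStep G w₁) (glauberStep G w₂) ∧
      (∀ p ∈ μ.support, hamm p.1 p.2 ≤ 2) ∧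
      ∑' p : (V → C) × (V → C), μ p * (hamm p.1 p.2 : ℝ≥0∞) ≤
        ENNReal.ofReal (1 - 1 / (Fintype.card V : ℝ) +
          2 * D / ((Fintype.card C : ℝ) * (Fintype.card V : ℝ))) := by
  obtain ⟨v₀, hoff⟩ := exists_eq_off_of_hamm_eq_one hadj
  refine ⟨glauberCoupling G w₁ w₂ (neighborSwap G w₁ w₂ v₀),
    isCoupling_glauberCoupling w₁ w₂ _, fun p hp => ?_, ?_⟩
  · obtain ⟨v, c, rfl⟩ := mem_support_glauberCoupling hp
    exact hamm_glauberUpdate_le_two hoff _ _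
  · rw [tsum_glauberCoupling_mul]
    exact_mod_cast natCast_div_le_ofReal_of_add_le Fintype.card_pos Fintype.card_pos
      ((sum_sum_hamm_glauberUpdate_neighborSwap_add_le h₁ h₂ hoff).trans
        (by gcongr; exact hdeg v₀))

/-- Adjacent coupling for the Glauber dynamics: two valid colorings at Hamming distance `1`
can be coupled so that the distance stays at most `2` and the expected distance is at most
`1 - 1/n + 2D/(kn)`. -/
theorem glauber_adjacent_coupling {V C : Type*} [Fintype V] [Nonempty V] [DecidableEq V]
    [Fintype C] [Nonempty C] [DecidableEq C]
    (G : SimpleGraph V) [DecidableRel G.Adj] (D : ℕ)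
    (hdeg : ∀ v, G.degree v ≤ D) (hkD : D ≤ Fintype.card C)
    (w₁ w₂ : V → C) (h₁ : validCol G w₁) (h₂ : validCol G w₂) (hadj : hamm w₁ w₂ = 1) :
    ∃ μ : PMF ((V → C) × (V → C)),
      IsCoupling μ (glauberStep G w₁) (glauberStep G w₂) ∧
      (∀ p ∈ μ.support, hamm p.1 p.2 ≤ 2) ∧
      ∑' p : (V → C) × (V → C), μ p * (hamm p.1 p.2 : ℝ≥0∞) ≤
        ENNReal.ofReal (1 - 1 / (Fintype.card V : ℝ) +
          2 * D / ((Fintype.card C : ℝ) * (Fintype.card V : ℝ))) :=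
  glauber_adjacent_coupling_general G D hdeg w₁ w₂ h₁ h₂ hadj
end
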